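/- arXiv:2410.22599 — 9 statements merged into one kernel-verified Lean document; each statement's English description precedes it below -/
import Mathlib

section
/- Let (W,S) be a Coxeter system with root system Φ, and let x ∈ W. If α ∈ Φ(x) (the left inversion set of x), then there exists y ⪯ x in the right weak order such that the set of right-descent roots of y is exactly {α}. -/
open CoxeterSystem

variable {B W : Type*} [Group W] {M : CoxeterMatrix B}

namespace CoxeterSystem

variable (cs : CoxeterSystem M W)

/-- The left inversion set `Φ(w)`, with positive roots identified with reflections. -/
def invSet (w : W) : Set W := {t | cs.IsLeftInversion w t}

/-- The short inversions `Φ¹(w) = {α ∈ Φ(w) : ℓ(s_α w) = ℓ(w) − 1}`. -/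
def shortInv (w : W) : Set W :=
  {t | cs.IsReflection t ∧ cs.length (t * w) + 1 = cs.length w}

/-- The right weak order: `x ⪯ y` iff `ℓ(y) = ℓ(x) + ℓ(x⁻¹y)`. -/
def rle (x y : W) : Prop := cs.length y = cs.length x + cs.length (x⁻¹ * y)

/-- The right-descent roots `Φ^R(w) = {−wα_s : s ∈ D_R(w)}`, as reflections `w s w⁻¹`. -/
def rdRoots (w : W) : Set W :=
  {t | ∃ i, cs.IsRightDescent w i ∧ t = w * cs.simple i * w⁻¹}

/-- The negative half-space `H_α⁻` of a positive root (reflection) `t`. -/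
def hsNeg (t : W) : Set W := {w | cs.length (t * w) < cs.length w}

/-- The positive half-space `H_α⁺` of a positive root (reflection) `t`. -/
def hsPos (t : W) : Set W := {w | cs.length w < cs.length (t * w)}

/-- A subset of `W` is convex if it contains every geodesic between two of its elements. -/
def IsConvexSet (A : Set W) : Prop :=
  ∀ u ∈ A, ∀ v ∈ A, ∀ ω : List B, cs.IsReduced ω → cs.wordProd ω = u⁻¹ * v →
    ∀ j : ℕ, u * cs.wordProd (ω.take j) ∈ A

/-- `z` is the join (least upper bound) of `X` in the right weak order. -/
def IsJoin (X : Set W) (z : W) : Prop :=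
  (∀ x ∈ X, cs.rle x z) ∧ ∀ u : W, (∀ x ∈ X, cs.rle x u) → cs.rle z u

/-- `y` is a suffix of `x`. -/
def IsSuffix (y x : W) : Prop := cs.length x = cs.length (x * y⁻¹) + cs.length y

/-- A Garside shadow: contains the simple reflections, closed under joins in the right
weak order, and closed under suffixes. -/
def IsGarsideShadow (G : Set W) : Prop :=
  (∀ i : B, cs.simple i ∈ G) ∧
  (∀ X ⊆ G, ∀ z : W, cs.IsJoin X z → z ∈ G) ∧
  (∀ x ∈ G, ∀ y : W, cs.IsSuffix y x → y ∈ G)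

/-- The cone type `T(w) = {v : ℓ(wv) = ℓ(w) + ℓ(v)}`. -/
def coneType (w : W) : Set W := {v | cs.length (w * v) = cs.length w + cs.length v}

/-- The boundary roots of the cone type `T(w⁻¹)`. -/
def bdRoots (w : W) : Set W :=
  {t | cs.IsReflection t ∧ ∃ z : W, cs.invSet w ∩ cs.invSet z = {t}}

/-- The alternating word `[i, i']_n = i i' i i' ⋯` of length `n`, starting with `i`. -/
def altWord (i i' : B) (n : ℕ) : List B := (alternatingWord i' i n).reverse

end CoxeterSystem

namespace ExchangeAux

open List CoxeterSystem

attribute [local instance] Classical.propDecidable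

variable {B W : Type*} [Group W] {M : CoxeterMatrix B} (cs : CoxeterSystem M W)

local prefix:100 "σ" => cs.simple

/-- The sign-tracking function `(t, ε) ↦ (s_i t s_i, ±ε)`. -/
noncomputable def fFun (i : B) : W × ℤˣ → W × ℤˣ :=
  fun x => (σ i * x.1 * σ i, (if x.1 = σ i then (-1 : ℤˣ) else 1) * x.2)

theorem fFun_invol (i : B) : Function.Involutive (fFun cs i) := by
  rintro ⟨t, ε⟩
  have hc : (σ i * t * σ i = σ i) ↔ (t = σ i) := by
    constructor
    · intro h
      have h2 := congrArg (fun w => σ i * w * σ i) h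
      simpa [mul_assoc] using h2
    · rintro rfl; simp
  simp only [fFun]
  rw [Prod.mk.injEq]; simp only [hc]
  constructor
  · simp [mul_assoc]
  · by_cases h : t = σ i <;> simp [h]

/-- The sign-tracking permutation. -/
noncomputable def fPerm (i : B) : Equiv.Perm (W × ℤˣ) :=
  Function.Involutive.toPerm _ (fFun_invol cs i)

theorem fPerm_apply (i : B) (x : W × ℤˣ) :
    fPerm cs i x = (σ i * x.1 * σ i, (if x.1 = σ i then (-1 : ℤˣ) else 1) * x.2) := rfl

theorem simple_mul_pow (i j : B) (k : ℕ) :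
    σ j * (σ i * σ j) ^ k = ((σ i * σ j) ^ k)⁻¹ * σ j := by
  induction k with
  | zero => simp
  | succ k ih =>
    have hpinv : (σ i * σ j)⁻¹ = σ j * σ i := by
      rw [mul_inv_rev, cs.inv_simple, cs.inv_simple]
    calc σ j * (σ i * σ j) ^ (k + 1)
        = (σ j * (σ i * σ j) ^ k) * (σ i * σ j) := by
          rw [pow_succ, mul_assoc]
      _ = ((σ i * σ j) ^ k)⁻¹ * (σ j * (σ i * σ j)) := by rw [ih, mul_assoc]
      _ = ((σ i * σ j) ^ k)⁻¹ * ((σ i * σ j)⁻¹ * σ j) := by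
          rw [hpinv]; group
      _ = ((σ i * σ j) ^ (k + 1))⁻¹ * σ j := by
          rw [pow_succ' (σ i * σ j) k, mul_inv_rev (σ i * σ j) ((σ i * σ j) ^ k), mul_assoc]

theorem conj_pow_simple (i j : B) (k : ℕ) :
    ((σ i * σ j) ^ k)⁻¹ * σ j * (σ i * σ j) ^ k
      = σ j * (σ i * σ j) ^ (2 * k) := by
  rw [mul_assoc, simple_mul_pow cs i j k, ← mul_assoc, ← mul_inv_rev, ← pow_add,
    two_mul, simple_mul_pow cs i j (k + k)]

theorem conj_pow_simple' (i j : B) (k : ℕ) :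
    ((σ i * σ j) ^ k)⁻¹ * (σ j * σ i * σ j) * (σ i * σ j) ^ k
      = σ j * (σ i * σ j) ^ (2 * k + 1) := by
  have h2 : (σ j * σ i * σ j) * (σ i * σ j) ^ k = σ j * ((σ i * σ j) ^ k * (σ i * σ j)) := by
    rw [mul_assoc (σ j * σ i), mul_assoc (σ j), ← mul_assoc (σ i), ← pow_succ', pow_succ]
  rw [mul_assoc (((σ i * σ j) ^ k)⁻¹), h2, ← pow_succ, pow_succ,
    ← mul_assoc (((σ i * σ j) ^ k)⁻¹) (σ j),
    ← mul_assoc (((σ i * σ j) ^ k)⁻¹ * σ j), conj_pow_simple cs i j k,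
    mul_assoc, ← pow_succ]

theorem fPerm_liftable : M.IsLiftable (fPerm cs) := by
  intro i j
  have key : ∀ (m : ℕ) (t : W) (ε : ℤˣ),
      ((fPerm cs i * fPerm cs j) ^ m) (t, ε) =
      ((σ i * σ j) ^ m * t * ((σ i * σ j) ^ m)⁻¹,
        (∏ n ∈ Finset.range (2 * m),
          (if t = σ j * (σ i * σ j) ^ n then (-1 : ℤˣ) else 1)) * ε) := by
    intro m
    induction m with
    | zero => intro t ε; simp
    | succ m ih =>
      intro t ε
      have e1 : ((σ i * σ j) ^ m * t * ((σ i * σ j) ^ m)⁻¹ = σ j)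
          ↔ (t = σ j * (σ i * σ j) ^ (2 * m)) := by
        rw [← conj_pow_simple cs i j m]
        constructor
        · intro h
          have h2 := congrArg
            (fun w => ((σ i * σ j) ^ m)⁻¹ * w * (σ i * σ j) ^ m) h
          simpa [mul_assoc] using h2
        · intro h; rw [h]; simp [mul_assoc]
      have e2 : (σ j * ((σ i * σ j) ^ m * t * ((σ i * σ j) ^ m)⁻¹) * σ j = σ i)
          ↔ (t = σ j * (σ i * σ j) ^ (2 * m + 1)) := by
        rw [← conj_pow_simple' cs i j m]
        constructor
        · intro h
          have h2 := congrArg (fun w => σ j * w * σ j) h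
          simp only [mul_assoc] at h2
          have h3 : (σ i * σ j) ^ m * (t * ((σ i * σ j) ^ m)⁻¹)
              = σ j * (σ i * σ j) := by simpa [mul_assoc] using h2
          have h4 := congrArg
            (fun w => ((σ i * σ j) ^ m)⁻¹ * w * (σ i * σ j) ^ m) h3
          simpa [mul_assoc] using h4
        · intro h; rw [h]; simp [mul_assoc]
      rw [pow_succ' (fPerm cs i * fPerm cs j) m, Equiv.Perm.mul_apply, ih t ε,
        Equiv.Perm.mul_apply, fPerm_apply, fPerm_apply]
      dsimp only
      rw [Prod.mk.injEq]
      constructor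
      · simp only [pow_succ', mul_inv_rev, inv_simple, mul_assoc]
      · rw [if_congr e1 rfl rfl, if_congr e2 rfl rfl,
          show 2 * (m + 1) = (2 * m) + 1 + 1 by ring,
          Finset.prod_range_succ, Finset.prod_range_succ]
        simp [mul_assoc, mul_comm, mul_left_comm]
  apply Equiv.ext
  rintro ⟨t, ε⟩
  have hrel : (σ i * σ j) ^ M i j = 1 := cs.simple_mul_simple_pow i j
  have heven : (∏ n ∈ Finset.range (2 * M i j),
      (if t = σ j * (σ i * σ j) ^ n then (-1 : ℤˣ) else 1)) = 1 := by
    rw [two_mul, Finset.prod_range_add]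
    simp only [pow_add, hrel, one_mul]
    exact Int.units_mul_self _
  rw [key (M i j) t ε, hrel, heven]
  simp

/-- The homomorphism `W →* Perm (W × ℤˣ)`. -/
noncomputable def eta : W →* Equiv.Perm (W × ℤˣ) := cs.lift ⟨fPerm cs, fPerm_liftable cs⟩

theorem eta_simple (i : B) : eta cs (σ i) = fPerm cs i :=
  cs.lift_apply_simple (fPerm_liftable cs) i

/-- The sign of the reflection `t` under the action of `w`. -/
noncomputable def sgn (w t : W) : ℤˣ := (eta cs w (t, 1)).2

theorem sgn_one (t : W) : sgn cs 1 t = 1 := by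
  simp [sgn]

theorem eta_apply (w t : W) (ε : ℤˣ) :
    eta cs w (t, ε) = (w * t * w⁻¹, sgn cs w t * ε) := by
  obtain ⟨ω, rfl⟩ := cs.wordProd_surjective w
  induction ω generalizing t ε with
  | nil => simp [sgn]
  | cons i ω ih =>
    have hsgn : sgn cs (σ i * cs.wordProd ω) t =
        (if cs.wordProd ω * t * (cs.wordProd ω)⁻¹ = σ i then (-1 : ℤˣ) else 1) *
          sgn cs (cs.wordProd ω) t := by
      unfold sgn
      rw [map_mul, Equiv.Perm.mul_apply, ih t 1, eta_simple, fPerm_apply]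
      try simp
    rw [cs.wordProd_cons, map_mul, Equiv.Perm.mul_apply, ih t ε, eta_simple, fPerm_apply,
      hsgn, Prod.mk.injEq]
    constructor
    · rw [mul_inv_rev, inv_simple]; group
    · simp [mul_assoc]

theorem sgn_mul (u v t : W) :
    sgn cs (u * v) t = sgn cs u (v * t * v⁻¹) * sgn cs v t := by
  have h := eta_apply cs (u * v) t 1
  rw [map_mul, Equiv.Perm.mul_apply, eta_apply cs v t 1, mul_one,
    eta_apply cs u (v * t * v⁻¹) (sgn cs v t)] at h
  have h2 := congrArg Prod.snd h
  simp only [mul_one] at h2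
  exact h2.symm

theorem sgn_simple (i : B) (t : W) :
    sgn cs (σ i) t = if t = σ i then (-1 : ℤˣ) else 1 := by
  unfold sgn
  rw [eta_simple, fPerm_apply]
  simp

theorem sgn_refl_self {t : W} (ht : cs.IsReflection t) : sgn cs t t = -1 := by
  obtain ⟨u, i, rfl⟩ := ht
  have hT : u * σ i * u⁻¹ = u * (σ i * u⁻¹) := mul_assoc _ _ _
  rw [hT, sgn_mul, sgn_mul]
  have harg1 : (σ i * u⁻¹) * (u * (σ i * u⁻¹)) * (σ i * u⁻¹)⁻¹ = σ i := by group
  have harg2 : u⁻¹ * (u * (σ i * u⁻¹)) * (u⁻¹)⁻¹ = σ i := by group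
  have h2 : sgn cs u (σ i) * sgn cs u⁻¹ (u * (σ i * u⁻¹)) = 1 := by
    have h := sgn_mul cs u u⁻¹ (u * (σ i * u⁻¹))
    rw [mul_inv_cancel, sgn_one, harg2] at h
    exact h.symm
  rw [harg1, harg2, sgn_simple, if_pos rfl,
    mul_comm (-1 : ℤˣ) (sgn cs u⁻¹ (u * (σ i * u⁻¹))), ← mul_assoc, h2, one_mul]

theorem sgn_eq_one_of_not_mem (ω : List B) (t : W) (h : t ∉ cs.rightInvSeq ω) :
    sgn cs (cs.wordProd ω) t = 1 := by
  induction ω with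
  | nil => simpa using sgn_one cs t
  | cons i ω ih =>
    have hris : cs.rightInvSeq (i :: ω)
        = ((cs.wordProd ω)⁻¹ * σ i * cs.wordProd ω) :: cs.rightInvSeq ω := rfl
    rw [hris, List.mem_cons, not_or] at h
    obtain ⟨h1, h2⟩ := h
    rw [cs.wordProd_cons, sgn_mul, ih h2, mul_one, sgn_simple, if_neg]
    intro hc
    apply h1
    rw [← hc]
    group

theorem mem_rightInvSeq_of_isRightInversion {ω : List B} (hω : cs.IsReduced ω) {t : W}
    (ht : cs.IsRightInversion (cs.wordProd ω) t) : t ∈ cs.rightInvSeq ω := by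
  by_contra hmem
  have h1 : sgn cs (cs.wordProd ω) t = 1 := sgn_eq_one_of_not_mem cs ω t hmem
  have h2 : sgn cs (cs.wordProd ω * t) t = -1 := by
    rw [sgn_mul, sgn_refl_self cs ht.1]
    have h3 : t * t * t⁻¹ = t := by rw [ht.1.mul_self, one_mul, ht.1.inv]
    rw [h3, h1, one_mul]
  obtain ⟨ω', hω', hw'⟩ := cs.exists_reduced_word' (cs.wordProd ω * t)
  have h3 : t ∈ cs.rightInvSeq ω' := by
    by_contra h4
    have h5 := sgn_eq_one_of_not_mem cs ω' t h4
    rw [← hw'] at h5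
    rw [h5] at h2
    have h6 := congrArg Units.val h2
    norm_num at h6
  have h6 := cs.isRightInversion_of_mem_rightInvSeq hω' h3
  rw [← hw'] at h6
  have h7 := h6.2
  rw [mul_assoc, ht.1.mul_self, mul_one] at h7
  have h8 := ht.2
  omega

theorem mem_leftInvSeq_of_isLeftInversion {ω : List B} (hω : cs.IsReduced ω) {t : W}
    (ht : cs.IsLeftInversion (cs.wordProd ω) t) : t ∈ cs.leftInvSeq ω := by
  have hrev : cs.IsReduced ω.reverse := (cs.isReduced_reverse_iff ω).mpr hω
  have hri : cs.IsRightInversion (cs.wordProd ω.reverse) t := by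
    rw [cs.wordProd_reverse]
    exact (cs.isRightInversion_inv_iff).mpr ht
  have hm := mem_rightInvSeq_of_isRightInversion cs hrev hri
  rw [cs.rightInvSeq_reverse] at hm
  exact List.mem_reverse.mp hm


theorem rle_trans {a b c : W} (h1 : cs.rle a b) (h2 : cs.rle b c) : cs.rle a c := by
  unfold CoxeterSystem.rle at *
  have e : a⁻¹ * c = (a⁻¹ * b) * (b⁻¹ * c) := by group
  have le1 : cs.length (a⁻¹ * c) ≤ cs.length (a⁻¹ * b) + cs.length (b⁻¹ * c) := by
    rw [e]; exact cs.length_mul_le _ _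
  have le2 : cs.length c ≤ cs.length a + cs.length (a⁻¹ * c) := by
    have := cs.length_mul_le a (a⁻¹ * c)
    rwa [← mul_assoc, mul_inv_cancel, one_mul] at this
  omega

theorem key_descent {y t : W} {i : B} (hti : cs.IsLeftInversion y t)
    (hdesc : cs.IsRightDescent y i)
    (hz : ¬ cs.length (t * (y * cs.simple i)) < cs.length (y * cs.simple i)) :
    t = y * cs.simple i * y⁻¹ := by
  obtain ⟨ψ, hψred, hψ⟩ := cs.exists_reduced_word' (y * cs.simple i)
  have hyword : y = cs.wordProd (ψ.concat i) := by
    rw [cs.wordProd_concat, ← hψ]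
    simp
  have hlen : cs.length (y * cs.simple i) + 1 = cs.length y := cs.isRightDescent_iff.mp hdesc
  have hψlen : cs.length (y * cs.simple i) = ψ.length := by
    rw [hψ]; exact hψred
  have hred : cs.IsReduced (ψ.concat i) := by
    unfold CoxeterSystem.IsReduced
    rw [← hyword, List.length_concat]
    omega
  have hti' : cs.IsLeftInversion (cs.wordProd (ψ.concat i)) t := by rwa [← hyword]
  have hmem := mem_leftInvSeq_of_isLeftInversion cs hred hti'
  rw [cs.leftInvSeq_concat, List.concat_eq_append, List.mem_append, List.mem_singleton] at hmem
  rcases hmem with h | h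
  · exfalso
    have := (cs.isLeftInversion_of_mem_leftInvSeq hψred h).2
    rw [← hψ] at this
    exact hz this
  · rw [h, ← hψ]
    simp [mul_assoc]

end ExchangeAux

/-- If `α ∈ Φ(x)`, there exists `y ⪯ x` in the right weak order with `Φ^R(y) = {α}`. -/
theorem exists_prefix_with_rdRoots_singleton (cs : CoxeterSystem M W) (x α : W)
    (hα : α ∈ cs.invSet x) :
    ∃ y : W, cs.rle y x ∧ cs.rdRoots y = {α} := by
  classical
  obtain ⟨hrefl, hlx⟩ := hα
  set Q : ℕ → Prop := fun n => ∃ y : W,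
    cs.rle y x ∧ cs.length (α * y) < cs.length y ∧ cs.length y = n with hQdef
  have hQ : ∃ n, Q n := ⟨cs.length x, x, by simp [CoxeterSystem.rle], hlx, rfl⟩
  obtain ⟨y, hyx, hαy, hylen⟩ := Nat.find_spec hQ
  refine ⟨y, hyx, ?_⟩
  have key : ∀ i : B, cs.IsRightDescent y i → α = y * cs.simple i * y⁻¹ := by
    intro i hi
    have hlz : cs.length (y * cs.simple i) + 1 = cs.length y := cs.isRightDescent_iff.mp hi
    have hzy : cs.rle (y * cs.simple i) y := by
      unfold CoxeterSystem.rle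
      have e : (y * cs.simple i)⁻¹ * y = cs.simple i := by
        rw [mul_inv_rev, inv_simple]; group
      rw [e, cs.length_simple]
      omega
    have hzx : cs.rle (y * cs.simple i) x := ExchangeAux.rle_trans cs hzy hyx
    have hnot : ¬ cs.length (α * (y * cs.simple i)) < cs.length (y * cs.simple i) := by
      intro hcon
      have hQz : Q (cs.length (y * cs.simple i)) := ⟨y * cs.simple i, hzx, hcon, rfl⟩
      exact Nat.find_min hQ (by omega) hQz
    exact ExchangeAux.key_descent cs ⟨hrefl, hαy⟩ hi hnot
  have hy1 : y ≠ 1 := by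
    rintro rfl
    rw [cs.length_one] at hαy
    omega
  obtain ⟨i₀, hi₀⟩ := cs.exists_rightDescent_of_ne_one hy1
  ext t
  simp only [CoxeterSystem.rdRoots, Set.mem_setOf_eq, Set.mem_singleton_iff]
  constructor
  · rintro ⟨i, hi, rfl⟩
    exact (key i hi).symm
  · rintro rfl
    exact ⟨i₀, hi₀, key i₀ hi₀⟩
end

section
/- Let (W,S) be a Coxeter system and x ∈ W. The set P(x) = {z ∈ W : z ⪯ x} of prefixes of x in the right weak order is convex, i.e., for all u,v ∈ P(x) and any reduced expression u⁻¹v = s_1⋯s_n, each element u·s_1⋯s_j (0 ≤ j ≤ n) lies in P(x). -/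
open CoxeterSystem

variable {B W : Type*} [Group W] {M : CoxeterMatrix B}

open CoxeterSystem List

namespace ConvexAux

variable {B W : Type*} [Group W] {M : CoxeterMatrix B} (cs : CoxeterSystem M W)

open scoped Classical

/-- The basic involution of `W × Bool` associated to a simple reflection. -/
noncomputable def perm (i : B) : Equiv.Perm (W × Bool) :=
  Function.Involutive.toPerm
    (fun p => (cs.simple i * p.1 * cs.simple i,
      if p.1 = cs.simple i then !p.2 else p.2))
    (by
      rintro ⟨t, ε⟩
      have h1 : cs.simple i * (cs.simple i * t * cs.simple i) * cs.simple i = t := by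
        simp [← mul_assoc, cs.simple_mul_simple_self, cs.simple_mul_simple_cancel_right]
      have h2 : (cs.simple i * t * cs.simple i = cs.simple i) ↔ t = cs.simple i := by
        constructor
        · intro h
          have h3 := congrArg (fun z => cs.simple i * z * cs.simple i) h
          simp only [h1] at h3
          rw [h3]
          simp [← mul_assoc, cs.simple_mul_simple_self]
        · rintro rfl; simp [cs.simple_mul_simple_self]
      by_cases ht : t = cs.simple i
      · simp [ht, h2, cs.simple_mul_simple_self]
      · simp [h1, h2, ht])

lemma perm_apply (i : B) (t : W) (ε : Bool) :
    perm cs i (t, ε) = (cs.simple i * t * cs.simple i,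
      if t = cs.simple i then !ε else ε) := rfl

/-- The product of the basic involutions over a word. -/
noncomputable def wordF (ω : List B) : Equiv.Perm (W × Bool) :=
  (ω.map (perm cs)).prod

lemma wordF_nil : wordF cs ([] : List B) = 1 := by simp [wordF]

lemma wordF_cons (i : B) (ω : List B) :
    wordF cs (i :: ω) = perm cs i * wordF cs ω := by simp [wordF]

lemma ris_cons (i : B) (ω : List B) :
    cs.rightInvSeq (i :: ω) =
      ((cs.wordProd ω)⁻¹ * cs.simple i * cs.wordProd ω) :: cs.rightInvSeq ω := rfl

lemma wordF_apply (ω : List B) (t : W) (ε : Bool) :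
    wordF cs ω (t, ε) = (cs.wordProd ω * t * (cs.wordProd ω)⁻¹,
      if Odd ((cs.rightInvSeq ω).count t) then !ε else ε) := by
  induction ω generalizing ε with
  | nil => simp [wordF_nil]
  | cons i ω ih =>
    have hfst : cs.simple i * (cs.wordProd ω * t * (cs.wordProd ω)⁻¹) * cs.simple i
        = cs.wordProd (i :: ω) * t * (cs.wordProd (i :: ω))⁻¹ := by
      rw [cs.wordProd_cons]
      simp [mul_assoc, cs.inv_simple]
    have hcond : (cs.wordProd ω * t * (cs.wordProd ω)⁻¹ = cs.simple i)
        ↔ t = (cs.wordProd ω)⁻¹ * cs.simple i * cs.wordProd ω := by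
      constructor
      · intro h; rw [← h]; group
      · intro h; rw [h]; group
    have hcount : (cs.rightInvSeq (i :: ω)).count t
        = (if t = (cs.wordProd ω)⁻¹ * cs.simple i * cs.wordProd ω then 1 else 0)
          + (cs.rightInvSeq ω).count t := by
      rw [ris_cons, List.count_cons]
      by_cases h : t = (cs.wordProd ω)⁻¹ * cs.simple i * cs.wordProd ω
      · simp [h]; omega
      · simp only [if_neg h, Nat.add_zero, Nat.zero_add]
        rw [if_neg (fun hx => h (eq_of_beq hx).symm), Nat.add_zero]
    rw [wordF_cons, Equiv.Perm.mul_apply, ih, perm_apply, hcount]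
    by_cases h : t = (cs.wordProd ω)⁻¹ * cs.simple i * cs.wordProd ω
    · rw [if_pos h, if_pos (hcond.mpr h)]
      simp only [Prod.mk.injEq]
      refine ⟨hfst, ?_⟩
      have hodd : Odd (1 + (cs.rightInvSeq ω).count t)
          ↔ ¬ Odd ((cs.rightInvSeq ω).count t) := by
        simp only [Nat.odd_iff]
        omega
      by_cases hc : Odd ((cs.rightInvSeq ω).count t)
      · rw [if_pos hc, if_neg (fun hx => (hodd.mp hx) hc), Bool.not_not]
      · rw [if_neg hc, if_pos (hodd.mpr hc)]
    · rw [if_neg h, if_neg (fun hc => h (hcond.mp hc)), Nat.zero_add]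
      simp only [Prod.mk.injEq]
      simp [hfst]

lemma conj_pow_simple (i i' : B) (b : ℕ) :
    ((cs.simple i * cs.simple i') ^ b)⁻¹ * cs.simple i' * (cs.simple i * cs.simple i') ^ b
      = cs.simple i' * (cs.simple i * cs.simple i') ^ (2 * b) := by
  have hq : cs.simple i' * (cs.simple i * cs.simple i') * (cs.simple i')⁻¹
      = (cs.simple i * cs.simple i')⁻¹ := by
    rw [mul_inv_rev, cs.inv_simple, cs.inv_simple]
    simp [mul_assoc, cs.simple_mul_simple_self]
  have h2 : ((cs.simple i * cs.simple i') ^ b)⁻¹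
      = cs.simple i' * (cs.simple i * cs.simple i') ^ b * (cs.simple i')⁻¹ := by
    rw [← conj_pow, hq, inv_pow]
  rw [h2, two_mul, pow_add]
  simp [mul_assoc]

lemma ris_alternatingWord (i i' : B) (n : ℕ) :
    cs.rightInvSeq (alternatingWord i i' n)
      = ((List.range n).reverse).map
          (fun k => cs.wordProd (alternatingWord i i' (2 * k + 1))) := by
  induction n with
  | zero => simp [alternatingWord]
  | succ n ih =>
    rw [alternatingWord_succ' i i' n, ris_cons, ih]
    have hrange : (List.range (n + 1)).reverse = n :: (List.range n).reverse := by
      rw [List.range_succ, List.reverse_append]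
      simp
    rw [hrange, List.map_cons]
    congr 1
    have hprod := cs.prod_alternatingWord_eq_mul_pow i i' n
    have hprod' := cs.prod_alternatingWord_eq_mul_pow i i' (2 * n + 1)
    have hodd : ¬ Even (2 * n + 1) := by
      simp [Nat.even_add_one, parity_simps]
    have h2n : (2 * n + 1) / 2 = n := by omega
    rw [if_neg hodd, h2n] at hprod'
    have key := conj_pow_simple cs i i' (n / 2)
    by_cases hn : Even n
    · have hn2 : n = 2 * (n / 2) := by
        obtain ⟨b, hb⟩ := hn; omega
      rw [if_pos hn] at hprod ⊢
      rw [hprod, hprod', one_mul]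
      conv_rhs => rw [hn2]
      exact key
    · have hn2 : n = 2 * (n / 2) + 1 := by
        rcases Nat.even_or_odd n with h | h
        · exact absurd h hn
        · obtain ⟨b, hb⟩ := h; omega
      rw [if_neg hn] at hprod ⊢
      rw [hprod, hprod']
      have key2 : ((cs.simple i * cs.simple i') ^ (n / 2))⁻¹ * cs.simple i'
          = cs.simple i' * (cs.simple i * cs.simple i') ^ (2 * (n / 2))
            * ((cs.simple i * cs.simple i') ^ (n / 2))⁻¹ := by
        rw [← key]; group
      conv_rhs => rw [hn2]
      rw [mul_inv_rev, cs.inv_simple, key2]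
      simp only [mul_assoc]
      congr 1
      rw [← mul_assoc (cs.simple i), ← pow_succ', pow_succ, inv_mul_cancel_left, ← pow_succ]

lemma alt_two_mul_succ (i i' : B) (m : ℕ) :
    alternatingWord i i' (2 * (m + 1)) = i :: i' :: alternatingWord i i' (2 * m) := by
  have h : 2 * (m + 1) = (2 * m + 1) + 1 := by ring
  rw [h, alternatingWord_succ', alternatingWord_succ']
  rw [if_neg (by simp [Nat.even_add_one, parity_simps]), if_pos (by simp)]

lemma wordF_alt_pow (i i' : B) (m : ℕ) :
    wordF cs (alternatingWord i i' (2 * m)) = (perm cs i * perm cs i') ^ m := by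
  induction m with
  | zero => simp [wordF, alternatingWord]
  | succ m ih =>
    rw [alt_two_mul_succ, wordF_cons, wordF_cons, ih, pow_succ']
    rw [mul_assoc]

lemma liftable : M.IsLiftable (perm cs) := by
  intro i i'
  rw [← wordF_alt_pow]
  apply Equiv.ext
  rintro ⟨t, ε⟩
  rw [wordF_apply]
  have h2m : 2 * M i i' / 2 = M i i' := by omega
  have hπ : cs.wordProd (alternatingWord i i' (2 * M i i')) = 1 := by
    rw [cs.prod_alternatingWord_eq_mul_pow, if_pos ⟨M i i', by ring⟩, h2m, one_mul,
      cs.simple_mul_simple_pow]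
  have hpow : (cs.simple i * cs.simple i') ^ (M i i') = 1 := cs.simple_mul_simple_pow i i'
  have hcount : ¬ Odd ((cs.rightInvSeq (alternatingWord i i' (2 * M i i'))).count t) := by
    rw [ris_alternatingWord, List.map_reverse, List.count_reverse]
    have hsplit : List.range (2 * M i i') = List.range (M i i')
        ++ (List.range (M i i')).map (M i i' + ·) := by
      rw [two_mul, List.range_add]
    rw [hsplit, List.map_append, List.map_map]
    have hf : ((List.range (M i i')).map
          ((fun k => cs.wordProd (alternatingWord i i' (2 * k + 1))) ∘ (M i i' + ·)))
        = (List.range (M i i')).map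
          (fun k => cs.wordProd (alternatingWord i i' (2 * k + 1))) := by
      apply List.map_congr_left
      intro k _
      show cs.wordProd (alternatingWord i i' (2 * (M i i' + k) + 1))
        = cs.wordProd (alternatingWord i i' (2 * k + 1))
      rw [cs.prod_alternatingWord_eq_mul_pow, cs.prod_alternatingWord_eq_mul_pow]
      have o1 : ¬ Even (2 * (M i i' + k) + 1) := by simp [Nat.even_add_one, parity_simps]
      have o2 : ¬ Even (2 * k + 1) := by simp [Nat.even_add_one, parity_simps]
      rw [if_neg o1, if_neg o2]
      have d1 : (2 * (M i i' + k) + 1) / 2 = M i i' + k := by omega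
      have d2 : (2 * k + 1) / 2 = k := by omega
      rw [d1, d2, pow_add, hpow, one_mul]
    rw [hf, List.count_append]
    exact Nat.not_odd_iff_even.mpr ⟨_, rfl⟩
  rw [hπ]
  simp only [one_mul, inv_one, mul_one, if_neg hcount]
  rfl

/-- The parity homomorphism. -/
noncomputable def phi : W →* Equiv.Perm (W × Bool) := cs.lift ⟨perm cs, liftable cs⟩

lemma phi_wordProd (ω : List B) : phi cs (cs.wordProd ω) = wordF cs ω := by
  induction ω with
  | nil => rw [cs.wordProd_nil, map_one, wordF_nil]
  | cons i ω ih =>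
    rw [cs.wordProd_cons, map_mul, ih, wordF_cons]
    congr 1
    exact cs.lift_apply_simple (liftable cs) i

/-- `Nb cs w t = true` iff the reflection `t` occurs an odd number of times in the right
inversion sequence of any word for `w`. -/
noncomputable def Nb (w t : W) : Bool := (phi cs w (t, false)).2

lemma Nb_iff (ω : List B) (t : W) :
    Nb cs (cs.wordProd ω) t = true ↔ Odd ((cs.rightInvSeq ω).count t) := by
  rw [Nb, phi_wordProd, wordF_apply]
  by_cases h : Odd ((cs.rightInvSeq ω).count t)
  · simp [h]
  · simp [h]

lemma phi_fst (w t : W) (ε : Bool) : (phi cs w (t, ε)).1 = w * t * w⁻¹ := by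
  obtain ⟨ω, hω⟩ := cs.wordProd_surjective w
  subst hω
  rw [phi_wordProd, wordF_apply]

lemma phi_snd (w t : W) (ε : Bool) : (phi cs w (t, ε)).2 = xor (Nb cs w t) ε := by
  obtain ⟨ω, hω⟩ := cs.wordProd_surjective w
  subst hω
  rw [Nb, phi_wordProd, wordF_apply, wordF_apply]
  by_cases h : Odd ((cs.rightInvSeq ω).count t)
  · simp [h]
  · simp [h]

lemma count_ris_conj (ν : List B) (i : B) :
    Odd ((cs.rightInvSeq (ν ++ [i] ++ ν.reverse)).count
      (cs.wordProd ν * cs.simple i * (cs.wordProd ν)⁻¹)) := by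
  induction ν with
  | nil => simp
  | cons j ν ih =>
    set t' : W := cs.wordProd ν * cs.simple i * (cs.wordProd ν)⁻¹ with ht'def
    have ht'refl : cs.IsReflection t' := ⟨cs.wordProd ν, i, rfl⟩
    have ht'inv : t'⁻¹ = t' := ht'refl.inv
    have hlist : (j :: ν) ++ [i] ++ (j :: ν).reverse
        = j :: ((ν ++ [i] ++ ν.reverse) ++ [j]) := by
      simp
    have hπμ : cs.wordProd (ν ++ [i] ++ ν.reverse) = t' := by
      rw [cs.wordProd_append, cs.wordProd_append, cs.wordProd_singleton, cs.wordProd_reverse,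
        ht'def]
    have hπμj : cs.wordProd ((ν ++ [i] ++ ν.reverse) ++ [j]) = t' * cs.simple j := by
      rw [cs.wordProd_append, hπμ, cs.wordProd_singleton]
    have ht : cs.wordProd (j :: ν) * cs.simple i * (cs.wordProd (j :: ν))⁻¹
        = cs.simple j * t' * cs.simple j := by
      rw [cs.wordProd_cons, ht'def]
      simp [mul_assoc, cs.inv_simple]
    rw [hlist, ht, ris_cons, hπμj]
    have hconcat : (ν ++ [i] ++ ν.reverse) ++ [j] = (ν ++ [i] ++ ν.reverse).concat j := by
      simp
    rw [List.count_cons]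
    rw [hconcat, cs.rightInvSeq_concat, List.concat_eq_append, List.count_append]
    -- count in the mapped part
    have hmap : ((cs.rightInvSeq (ν ++ [i] ++ ν.reverse)).map
          (MulAut.conj (cs.simple j))).count (cs.simple j * t' * cs.simple j)
        = (cs.rightInvSeq (ν ++ [i] ++ ν.reverse)).count t' := by
      have : cs.simple j * t' * cs.simple j = MulAut.conj (cs.simple j) t' := by
        simp [MulAut.conj_apply, cs.inv_simple]
      rw [this]
      exact List.count_map_of_injective _ _ (MulAut.conj (cs.simple j)).injective t'
    rw [hmap]
    -- the head and the tail singleton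
    have hhead : ((t' * cs.simple j)⁻¹ * cs.simple j * (t' * cs.simple j)
        = cs.simple j * t' * cs.simple j) ↔ t' = cs.simple j := by
      constructor
      · intro h
        rw [mul_inv_rev, cs.inv_simple, ht'inv] at h
        have h1 : cs.simple j * (t' * (cs.simple j * (t' * cs.simple j)))
            = cs.simple j * (t' * cs.simple j) := by
          simpa [mul_assoc] using h
        have h3 := mul_left_cancel (mul_left_cancel h1)
        have h4 : t' * cs.simple j = 1 := by
          apply mul_left_cancel (a := cs.simple j)
          rw [mul_one]
          exact h3
        have h5 : t' * (cs.simple j * cs.simple j) = 1 * cs.simple j := by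
          rw [← mul_assoc, h4]
        simpa [cs.simple_mul_simple_self] using h5
      · intro h
        rw [h]
        simp [mul_inv_rev, cs.inv_simple, mul_assoc, cs.simple_mul_simple_self]
    have hsingle : (cs.simple j = cs.simple j * t' * cs.simple j) ↔ t' = cs.simple j := by
      constructor
      · intro h
        have h1 : cs.simple j * 1 = cs.simple j * (t' * cs.simple j) := by
          simpa [mul_assoc] using h
        have h2 := (mul_left_cancel h1).symm
        have h5 : t' * (cs.simple j * cs.simple j) = 1 * cs.simple j := by
          rw [← mul_assoc, h2]
        simpa [cs.simple_mul_simple_self] using h5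
      · intro h
        rw [h]
        simp [mul_assoc, cs.simple_mul_simple_self]
    rw [List.count_singleton']
    by_cases hcase : t' = cs.simple j
    · rw [if_pos (beq_iff_eq.mpr (hhead.mpr hcase)),
        if_pos (hsingle.mpr hcase)]
      obtain ⟨k, hk⟩ := ih
      exact ⟨k + 1, by omega⟩
    · rw [if_neg (fun hb => hcase (hhead.mp (eq_of_beq hb))),
        if_neg (fun hb => hcase (hsingle.mp hb))]
      simpa using ih

lemma Nb_self {t : W} (ht : cs.IsReflection t) : Nb cs t t = true := by
  obtain ⟨w, i, rfl⟩ := ht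
  obtain ⟨ν, rfl⟩ := cs.wordProd_surjective w
  have hword : cs.wordProd (ν ++ [i] ++ ν.reverse)
      = cs.wordProd ν * cs.simple i * (cs.wordProd ν)⁻¹ := by
    rw [cs.wordProd_append, cs.wordProd_append, cs.wordProd_singleton, cs.wordProd_reverse]
  rw [← hword, Nb_iff]
  rw [hword]
  exact count_ris_conj cs ν i

lemma mem_ris_of_Nb {w t : W} (h : Nb cs w t = true) {ω : List B} (hω : cs.wordProd ω = w) :
    t ∈ cs.rightInvSeq ω := by
  rw [← hω] at h
  rw [Nb_iff] at h
  have : (cs.rightInvSeq ω).count t ≠ 0 := by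
    intro hc
    rw [hc] at h
    simp at h
  exact List.count_pos_iff.mp (Nat.pos_of_ne_zero this)

lemma Nb_of_isRightInversion {w t : W} (h : cs.IsRightInversion w t) : Nb cs w t = true := by
  by_contra hfalse
  have hb : Nb cs w t = false := by
    cases hNb : Nb cs w t
    · rfl
    · exact absurd hNb hfalse
  have hwt : Nb cs (w * t) t = true := by
    rw [Nb, map_mul, Equiv.Perm.mul_apply]
    have h1 : phi cs t (t, false) = (t, true) := by
      have hfst := phi_fst cs t t false
      have hsnd := phi_snd cs t t false
      rw [Nb_self cs h.1] at hsnd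
      have : phi cs t (t, false) = ((phi cs t (t, false)).1, (phi cs t (t, false)).2) := rfl
      rw [this, hfst, hsnd]
      have htt : t * t * t⁻¹ = t := by group
      rw [htt]
      rfl
    rw [h1]
    rw [phi_snd, hb]
    rfl
  obtain ⟨ω, hred, hω⟩ := cs.exists_reduced_word' (w * t)
  have hmem : t ∈ cs.rightInvSeq ω := mem_ris_of_Nb cs hwt hω.symm
  have hinv := cs.isRightInversion_of_mem_rightInvSeq hred hmem
  rw [← hω] at hinv
  have hww : w * t * t = w := by
    rw [mul_assoc, h.1.mul_self, mul_one]
  have := hinv.2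
  rw [hww] at this
  exact Nat.lt_asymm h.2 this

lemma isRightInversion_of_Nb {w t : W} (ht : cs.IsReflection t) (h : Nb cs w t = true) :
    cs.IsRightInversion w t := by
  obtain ⟨ω, hred, hω⟩ := cs.exists_reduced_word' w
  have hmem : t ∈ cs.rightInvSeq ω := mem_ris_of_Nb cs h hω.symm
  have := cs.isRightInversion_of_mem_rightInvSeq hred hmem
  rwa [← hω] at this

/-- Left-handed parity function. -/
noncomputable def NbL (w t : W) : Bool := Nb cs w⁻¹ t

lemma isLeftInversion_iff_NbL {w t : W} (ht : cs.IsReflection t) :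
    cs.IsLeftInversion w t ↔ NbL cs w t = true := by
  rw [NbL]
  constructor
  · intro h
    exact Nb_of_isRightInversion cs (cs.isRightInversion_inv_iff.mpr h)
  · intro h
    exact cs.isRightInversion_inv_iff.mp (isRightInversion_of_Nb cs ht h)

lemma NbL_iff (ω : List B) (t : W) :
    NbL cs (cs.wordProd ω) t = true ↔ Odd ((cs.leftInvSeq ω).count t) := by
  rw [NbL, ← cs.wordProd_reverse, Nb_iff, cs.rightInvSeq_reverse, List.count_reverse]

lemma NbL_mul (u a t : W) :
    NbL cs (u * a) t = xor (NbL cs a (u⁻¹ * t * u)) (NbL cs u t) := by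
  have h1 : (u * a)⁻¹ = a⁻¹ * u⁻¹ := by rw [mul_inv_rev]
  rw [NbL, h1, Nb, map_mul, Equiv.Perm.mul_apply]
  have h2 : phi cs u⁻¹ (t, false) = (u⁻¹ * t * u, Nb cs u⁻¹ t) := by
    have hfst := phi_fst cs u⁻¹ t false
    have hsnd := phi_snd cs u⁻¹ t false
    have : phi cs u⁻¹ (t, false) = ((phi cs u⁻¹ (t, false)).1, (phi cs u⁻¹ (t, false)).2) := rfl
    rw [this, hfst, hsnd]
    simp
  rw [h2, phi_snd]
  rfl

lemma lis_cons (i : B) (ω : List B) :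
    cs.leftInvSeq (i :: ω)
      = cs.simple i :: (cs.leftInvSeq ω).map (MulAut.conj (cs.simple i)) := rfl

lemma simple_conj_eq_simple_iff (j : B) {t : W} :
    cs.simple j * t * cs.simple j = cs.simple j ↔ t = cs.simple j := by
  constructor
  · intro h
    have h1 : cs.simple j * 1 = cs.simple j * (t * cs.simple j) := by
      simpa [mul_assoc] using h.symm
    have h2 := (mul_left_cancel h1).symm
    have h5 : t * (cs.simple j * cs.simple j) = 1 * cs.simple j := by
      rw [← mul_assoc, h2]
    simpa [cs.simple_mul_simple_self] using h5
  · intro h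
    rw [h]
    simp [mul_assoc, cs.simple_mul_simple_self]

lemma length_eq_of_inversion_subset (z x : W)
    (h : ∀ t, cs.IsLeftInversion z t → cs.IsLeftInversion x t) :
    cs.length x = cs.length z + cs.length (z⁻¹ * x) := by
  generalize hn : cs.length z = n
  induction n using Nat.strong_induction_on generalizing z x with
  | _ n ih =>
    rcases eq_or_ne z 1 with rfl | hz
    · rw [← hn]
      simp
    · obtain ⟨i, hi⟩ := cs.exists_leftDescent_of_ne_one hz
      have hsz : cs.length (cs.simple i * z) < cs.length z := hi
      have hILIz : cs.IsLeftInversion z (cs.simple i) := ⟨cs.isReflection_simple i, hsz⟩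
      have hsx := (h _ hILIz).2
      set z' := cs.simple i * z with hz'
      set x' := cs.simple i * x with hx'
      have hzz : z = cs.simple i * z' := by
        rw [hz', ← mul_assoc, cs.simple_mul_simple_self, one_mul]
      have hxx : x = cs.simple i * x' := by
        rw [hx', ← mul_assoc, cs.simple_mul_simple_self, one_mul]
      have hmulz : cs.length (cs.simple i * z') ≤ 1 + cs.length z' := by
        have := cs.length_mul_le (cs.simple i) z'
        rwa [cs.length_simple] at this
      rw [← hzz] at hmulz
      have hmulx : cs.length (cs.simple i * x') ≤ 1 + cs.length x' := by
        have := cs.length_mul_le (cs.simple i) x'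
        rwa [cs.length_simple] at this
      rw [← hxx] at hmulx
      have hlz : cs.length z = cs.length z' + 1 := by omega
      have hlx : cs.length x = cs.length x' + 1 := by omega
      obtain ⟨ω', hred', hω'⟩ := cs.exists_reduced_word' x'
      have hx_word : cs.wordProd (i :: ω') = x := by
        rw [cs.wordProd_cons, ← hω', ← hxx]
      have htransfer : ∀ t, cs.IsLeftInversion z' t → cs.IsLeftInversion x' t := by
        rintro t ⟨htr, hlt⟩
        have htne : t ≠ cs.simple i := by
          intro hteq
          rw [hteq, ← hzz] at hlt
          omega
        have hconjrefl : cs.IsReflection (cs.simple i * t * cs.simple i) := by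
          have := htr.conj (cs.simple i)
          rwa [cs.inv_simple] at this
        have h2 : cs.IsLeftInversion z (cs.simple i * t * cs.simple i) := by
          refine ⟨hconjrefl, ?_⟩
          have heq : cs.simple i * t * cs.simple i * z = cs.simple i * (t * z') := by
            rw [hzz]
            simp [mul_assoc, cs.simple_mul_simple_cancel_left]
          rw [heq]
          have hb1 : cs.length (cs.simple i * (t * z')) ≤ 1 + cs.length (t * z') := by
            have := cs.length_mul_le (cs.simple i) (t * z')
            rwa [cs.length_simple] at this
          omega
        have h3 := h _ h2
        have hNb : NbL cs x (cs.simple i * t * cs.simple i) = true :=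
          (isLeftInversion_iff_NbL cs hconjrefl).mp h3
        rw [← hx_word, NbL_iff] at hNb
        have hmem : (cs.simple i * t * cs.simple i) ∈ cs.leftInvSeq (i :: ω') := by
          have hne : (cs.leftInvSeq (i :: ω')).count (cs.simple i * t * cs.simple i) ≠ 0 := by
            intro hc
            rw [hc] at hNb
            simp at hNb
          exact List.count_pos_iff.mp (Nat.pos_of_ne_zero hne)
        rw [lis_cons] at hmem
        rcases List.mem_cons.mp hmem with heq | hmem'
        · exact absurd ((simple_conj_eq_simple_iff cs i).mp heq) htne
        · obtain ⟨r, hr, hconj⟩ := List.mem_map.mp hmem'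
          have hrt : r = t := by
            have hc : cs.simple i * r * (cs.simple i)⁻¹ = cs.simple i * t * cs.simple i := hconj
            rw [cs.inv_simple] at hc
            have h1 : cs.simple i * (r * cs.simple i) = cs.simple i * (t * cs.simple i) := by
              simpa [mul_assoc] using hc
            exact mul_right_cancel (mul_left_cancel h1)
          rw [hrt] at hr
          have := cs.isLeftInversion_of_mem_leftInvSeq hred' hr
          rwa [← hω'] at this
      have hIH := ih (cs.length z') (by omega) z' x' htransfer rfl
      have hquot : z'⁻¹ * x' = z⁻¹ * x := by
        rw [hz', hx', mul_inv_rev, cs.inv_simple]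
        simp [mul_assoc, cs.simple_mul_simple_cancel_left]
      rw [hquot] at hIH
      omega

lemma mem_of_odd_count {l : List W} {t : W} (h : Odd (l.count t)) : t ∈ l := by
  have : l.count t ≠ 0 := by
    intro hc
    rw [hc] at h
    simp at h
  exact List.count_pos_iff.mp (Nat.pos_of_ne_zero this)

end ConvexAux

/-- The set of prefixes of `x` in the right weak order is convex. -/
theorem prefixSet_isConvex (cs : CoxeterSystem M W) (x : W) :
    cs.IsConvexSet {z : W | cs.rle z x} := by
  classical
  intro u hu v hv ω hred hπ j
  have hu' : cs.length x = cs.length u + cs.length (u⁻¹ * x) := hu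
  have hv' : cs.length x = cs.length v + cs.length (v⁻¹ * x) := hv
  have easy : ∀ z : W, cs.length x = cs.length z + cs.length (z⁻¹ * x) →
      ∀ t : W, cs.IsLeftInversion z t → cs.IsLeftInversion x t := by
    rintro z hz t ⟨htr, hlt⟩
    refine ⟨htr, ?_⟩
    have h1 : t * x = (t * z) * (z⁻¹ * x) := by group
    have h2 : cs.length (t * x) ≤ cs.length (t * z) + cs.length (z⁻¹ * x) := by
      rw [h1]
      exact cs.length_mul_le _ _
    omega
  show cs.length x = cs.length (u * cs.wordProd (ω.take j))
    + cs.length ((u * cs.wordProd (ω.take j))⁻¹ * x)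
  apply ConvexAux.length_eq_of_inversion_subset
  intro t htI
  by_cases hb : ConvexAux.NbL cs u t = true
  · exact easy u hu' t ((ConvexAux.isLeftInversion_iff_NbL cs htI.1).mpr hb)
  · have hbf : ConvexAux.NbL cs u t = false := by
      cases hc : ConvexAux.NbL cs u t
      · rfl
      · exact absurd hc hb
    have hp : ConvexAux.NbL cs (u * cs.wordProd (ω.take j)) t = true :=
      (ConvexAux.isLeftInversion_iff_NbL cs htI.1).mp htI
    have hsplit := ConvexAux.NbL_mul cs u (cs.wordProd (ω.take j)) t
    rw [hp, hbf] at hsplit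
    have ha' : ConvexAux.NbL cs (cs.wordProd (ω.take j)) (u⁻¹ * t * u) = true := by
      cases hc : ConvexAux.NbL cs (cs.wordProd (ω.take j)) (u⁻¹ * t * u)
      · rw [hc] at hsplit
        simp at hsplit
      · rfl
    have hodd : Odd ((cs.leftInvSeq (ω.take j)).count (u⁻¹ * t * u)) :=
      (ConvexAux.NbL_iff cs (ω.take j) (u⁻¹ * t * u)).mp ha'
    have hmem : (u⁻¹ * t * u) ∈ cs.leftInvSeq (ω.take j) := ConvexAux.mem_of_odd_count hodd
    have hmem2 : (u⁻¹ * t * u) ∈ cs.leftInvSeq ω := by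
      rw [cs.leftInvSeq_take ω j] at hmem
      exact List.take_subset j _ hmem
    have hcount1 : (cs.leftInvSeq ω).count (u⁻¹ * t * u) = 1 :=
      List.count_eq_one_of_mem (hred.nodup_leftInvSeq) hmem2
    have hvt : ConvexAux.NbL cs v t = true := by
      have hv2 : v = u * cs.wordProd ω := by
        rw [hπ]
        group
      rw [hv2, ConvexAux.NbL_mul, hbf]
      rw [(ConvexAux.NbL_iff cs ω (u⁻¹ * t * u)).mpr (by rw [hcount1]; exact odd_one)]
      rfl
    exact easy v hv' t ((ConvexAux.isLeftInversion_iff_NbL cs htI.1).mpr hvt)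
end

section
/- Let (W,S) be a Coxeter system. Let x,y ∈ W and β ∈ Φ⁺ with Φ(x) ∩ Φ(y) = {β}. Then β ∈ Φ¹(x) ∩ Φ¹(y), where Φ¹(w) = {α ∈ Φ(w) : ℓ(s_α w) = ℓ(w) − 1} is the set of short inversions of w. -/
open CoxeterSystem

variable {B W : Type*} [Group W] {M : CoxeterMatrix B}

section AuxStrongExchange

open List
open scoped Classical

namespace CoxeterSystem

variable (cs : CoxeterSystem M W)

/-- The basic flip map on `W × Bool`. -/
noncomputable def fk (i : B) : W × Bool → W × Bool :=
  fun p => (cs.simple i * p.1 * cs.simple i, if p.1 = cs.simple i then !p.2 else p.2)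

lemma simple_conj_eq_iff (i : B) (t : W) :
    cs.simple i * t * cs.simple i = cs.simple i ↔ t = cs.simple i := by
  constructor
  · intro h
    have := congrArg (fun z => cs.simple i * z * cs.simple i) h
    simpa [mul_assoc] using this
  · rintro rfl; simp

lemma fk_involutive (i : B) : Function.Involutive (fk cs i) := by
  rintro ⟨t, ε⟩
  show fk cs i (cs.simple i * t * cs.simple i, _) = _
  unfold fk
  have h1 : cs.simple i * (cs.simple i * t * cs.simple i) * cs.simple i = t := by
    simp [mul_assoc]
  by_cases hc : t = cs.simple i
  · subst hc; simp
  · have hc2 : ¬ (cs.simple i * t * cs.simple i = cs.simple i) := by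
      rw [simple_conj_eq_iff]; exact hc
    simp [hc, hc2, h1]

/-- The same map as a permutation. -/
noncomputable def fp (i : B) : Equiv.Perm (W × Bool) :=
  Function.Involutive.toPerm _ (fk_involutive cs i)

@[simp] lemma fp_coe (i : B) : ⇑(fp cs i) = fk cs i := rfl

/-- Composite of the flip maps along a word. -/
noncomputable def Fl : List B → (W × Bool) → (W × Bool)
  | [] => id
  | i :: ω => fk cs i ∘ Fl ω

lemma rightInvSeq_cons (i : B) (ω : List B) :
    cs.rightInvSeq (i :: ω) =
      ((cs.wordProd ω)⁻¹ * cs.simple i * cs.wordProd ω) :: cs.rightInvSeq ω := rfl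

/-- Master lemma: the composite flip along a word. -/
lemma Fl_apply (ω : List B) (t : W) (ε : Bool) :
    Fl cs ω (t, ε) = (cs.wordProd ω * t * (cs.wordProd ω)⁻¹,
      if Even ((cs.rightInvSeq ω).countP (fun x => decide (x = t))) then ε else !ε) := by
  induction ω with
  | nil => simp [Fl]
  | cons i ω ih =>
    have : Fl cs (i :: ω) (t, ε) = fk cs i (Fl cs ω (t, ε)) := rfl
    rw [this, ih]
    unfold fk
    rw [rightInvSeq_cons, countP_cons]
    have hcond : (cs.wordProd ω * t * (cs.wordProd ω)⁻¹ = cs.simple i)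
        ↔ (t = (cs.wordProd ω)⁻¹ * cs.simple i * cs.wordProd ω) := by
      constructor
      · intro h
        rw [← h]; group
      · intro h
        rw [h]; group
    rw [wordProd_cons]
    dsimp only
    refine Prod.ext ?_ ?_
    · dsimp only
      rw [mul_inv_rev, cs.inv_simple]
      group
    · dsimp only
      by_cases hc : t = (cs.wordProd ω)⁻¹ * cs.simple i * cs.wordProd ω
      · have hc' : cs.wordProd ω * t * (cs.wordProd ω)⁻¹ = cs.simple i := hcond.mpr hc
        have hd : decide ((cs.wordProd ω)⁻¹ * cs.simple i * cs.wordProd ω = t) = true := by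
          simp [hc]
        rw [hd, if_pos hc']
        simp only [if_true]
        by_cases he : Even ((cs.rightInvSeq ω).countP (fun x => decide (x = t)))
        · rw [if_pos he, if_neg (by simpa [Nat.even_add_one] using he)]
        · rw [if_neg he, if_pos (by simpa [Nat.even_add_one] using he)]
          simp
      · have hc' : ¬ (cs.wordProd ω * t * (cs.wordProd ω)⁻¹ = cs.simple i) :=
          fun h => hc (hcond.mp h)
        have hd : decide ((cs.wordProd ω)⁻¹ * cs.simple i * cs.wordProd ω = t) = false := by
          simp [Ne.symm hc]
        rw [hd, if_neg hc']
        simp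


/-- Key dihedral identity for entries of the right inversion sequence of alternating words. -/
lemma alt_conj (i i' : B) (n : ℕ) :
    (cs.wordProd (alternatingWord i i' n))⁻¹ * cs.simple (if Even n then i' else i)
      * cs.wordProd (alternatingWord i i' n)
      = (cs.simple i' * cs.simple i) ^ n * cs.simple i' := by
  set p := cs.simple i with hp
  set q := cs.simple i' with hq
  have hsc : ∀ b : ℕ, q * (p * q) ^ b = (q * p) ^ b * q := by
    intro b
    have h : SemiconjBy q (p * q) (q * p) := by
      unfold SemiconjBy; group
    exact (h.pow_right b).eq
  have hinv : ∀ b : ℕ, ((p * q) ^ b)⁻¹ = (q * p) ^ b := by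
    intro b
    rw [← inv_pow, mul_inv_rev, hp, hq, cs.inv_simple, cs.inv_simple]
  rcases Nat.even_or_odd n with ⟨b, hb⟩ | ⟨b, hb⟩
  · subst hb
    have heven : Even (b + b) := ⟨b, rfl⟩
    rw [if_pos heven, cs.prod_alternatingWord_eq_mul_pow]
    rw [if_pos heven]
    have hdiv : (b + b) / 2 = b := by omega
    rw [hdiv, one_mul, hinv b, ← hq, ← hp]
    calc (q * p) ^ b * q * (p * q) ^ b = (q * p) ^ b * ((q * p) ^ b * q) := by
          rw [mul_assoc, hsc b]
      _ = (q * p) ^ (b + b) * q := by rw [← mul_assoc, ← pow_add]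
  · subst hb
    have hodd : ¬ Even (2 * b + 1) := by simp [Nat.even_add_one, parity_simps]
    rw [if_neg hodd, cs.prod_alternatingWord_eq_mul_pow]
    rw [if_neg hodd]
    have hdiv : (2 * b + 1) / 2 = b := by omega
    rw [hdiv, ← hq, ← hp]
    have hqq : q * q = 1 := by rw [hq]; exact cs.simple_mul_simple_self i'
    have hz : (p * q) ^ b = q * ((q * p) ^ b * q) := by
      rw [← hsc b, ← mul_assoc, hqq, one_mul]
    rw [mul_inv_rev, hinv b, hq, cs.inv_simple, ← hq]
    calc (q * p) ^ b * q * p * (q * (p * q) ^ b)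
        = (q * p) ^ b * q * p * (q * (q * ((q * p) ^ b * q))) := by rw [hz]
      _ = (q * p) ^ b * q * p * ((q * p) ^ b * q) := by
          rw [← mul_assoc q q, hqq, one_mul]
      _ = (q * p) ^ (b + 1) * ((q * p) ^ b * q) := by
          rw [pow_succ, mul_assoc ((q * p) ^ b) q p]
      _ = (q * p) ^ (b + 1) * (q * p) ^ b * q := by rw [mul_assoc]
      _ = (q * p) ^ (2 * b + 1) * q := by
          rw [← pow_add]
          congr 2
          omega
  
/-- The right inversion sequence of an alternating word. -/
lemma rightInvSeq_alternatingWord (i i' : B) (n : ℕ) :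
    cs.rightInvSeq (alternatingWord i i' n)
      = ((List.range n).reverse).map
          (fun a => (cs.simple i' * cs.simple i) ^ a * cs.simple i') := by
  induction n with
  | zero => simp [alternatingWord]
  | succ n ih =>
    rw [alternatingWord_succ', rightInvSeq_cons, ih, alt_conj]
    rw [List.range_succ, List.reverse_append]
    simp


lemma coe_pow_mul_fp (i i' : B) (m : ℕ) :
    ⇑((fp cs i * fp cs i') ^ m) = Fl cs (alternatingWord i i' (2 * m)) := by
  induction m with
  | zero => simp [Fl, alternatingWord]
  | succ m ih =>
    have h2 : 2 * (m + 1) = (2 * m + 1) + 1 := by omega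
    rw [h2, alternatingWord_succ', alternatingWord_succ']
    have ho : ¬ Even (2 * m + 1) := by simp [parity_simps]
    have he : Even (2 * m) := ⟨m, by omega⟩
    rw [if_neg ho, if_pos he]
    show ⇑((fp cs i * fp cs i') ^ (m + 1)) = fk cs i ∘ (fk cs i' ∘ Fl cs (alternatingWord i i' (2 * m)))
    rw [pow_succ', Equiv.Perm.coe_mul, ih, Equiv.Perm.coe_mul]
    rfl

lemma fp_liftable : M.IsLiftable (fp cs) := by
  intro i i'
  apply Equiv.ext
  rintro ⟨t, ε⟩
  have h1 : ((fp cs i * fp cs i') ^ M i i') (t, ε)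
      = Fl cs (alternatingWord i i' (2 * M i i')) (t, ε) := by
    rw [coe_pow_mul_fp]
  rw [h1, Fl_apply]
  have hprod : cs.wordProd (alternatingWord i i' (2 * M i i')) = 1 := by
    rw [cs.prod_alternatingWord_eq_mul_pow]
    have he : Even (2 * M i i') := ⟨M i i', by omega⟩
    rw [if_pos he, one_mul]
    have : 2 * M i i' / 2 = M i i' := by omega
    rw [this, cs.simple_mul_simple_pow]
  have hcount : Even ((cs.rightInvSeq (alternatingWord i i' (2 * M i i'))).countP
      (fun x => decide (x = t))) := by
    rw [rightInvSeq_alternatingWord, List.countP_map,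
      (List.reverse_perm (List.range (2 * M i i'))).countP_eq]
    set p : ℕ → Bool :=
      (fun x => decide (x = t)) ∘ (fun a => (cs.simple i' * cs.simple i) ^ a * cs.simple i')
      with hpdef
    have hr : (2 : ℕ) * M i i' = M i i' + M i i' := by omega
    rw [hr, List.range_add, List.countP_append, List.countP_map]
    have hmap : (List.range (M i i')).countP (p ∘ (fun a => M i i' + a))
        = (List.range (M i i')).countP p := by
      apply List.countP_congr
      intro a _
      simp only [Function.comp_apply, hpdef]
      have hpow : (cs.simple i' * cs.simple i) ^ (M i i' + a)
          = (cs.simple i' * cs.simple i) ^ a := by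
        rw [add_comm, pow_add, cs.simple_mul_simple_pow' i i', mul_one]
      simp only [decide_eq_true_iff, hpow]
    have hfun : ((p ∘ fun a => M i i' + a) : ℕ → Bool) = fun a => p (M i i' + a) := rfl
    rw [← hfun] at *
    rw [hmap]
    exact ⟨_, rfl⟩
  rw [if_pos hcount, hprod]
  simp

/-- The parity representation of `W` on `W × Bool`. -/
noncomputable def phi : W →* Equiv.Perm (W × Bool) := cs.lift ⟨fp cs, fp_liftable cs⟩

lemma phi_simple (i : B) : phi cs (cs.simple i) = fp cs i :=
  cs.lift_apply_simple (fp_liftable cs) i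

lemma phi_wordProd (ω : List B) : ⇑(phi cs (cs.wordProd ω)) = Fl cs ω := by
  induction ω with
  | nil => simp [Fl]
  | cons i ω ih =>
    rw [wordProd_cons, map_mul, Equiv.Perm.coe_mul, ih, phi_simple]
    rfl


lemma phi_apply (w t : W) (ε : Bool) :
    phi cs w (t, ε) = (w * t * w⁻¹, xor ((phi cs w (t, false)).2) ε) := by
  obtain ⟨ω, -, rfl⟩ := cs.exists_reduced_word' w
  have h1 : phi cs (cs.wordProd ω) (t, ε) = Fl cs ω (t, ε) := by rw [phi_wordProd]
  have h2 : phi cs (cs.wordProd ω) (t, false) = Fl cs ω (t, false) := by rw [phi_wordProd]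
  rw [h1, h2, Fl_apply, Fl_apply]
  by_cases he : Even ((cs.rightInvSeq ω).countP (fun x => decide (x = t)))
  · rw [if_pos he, if_pos he]
    cases ε <;> rfl
  · rw [if_neg he, if_neg he]
    cases ε <;> rfl

lemma phi_fst (w t : W) (ε : Bool) : (phi cs w (t, ε)).1 = w * t * w⁻¹ := by
  rw [phi_apply]

lemma phi_isReflection {t : W} (ht : cs.IsReflection t) (ε : Bool) :
    phi cs t (t, ε) = (t, !ε) := by
  obtain ⟨u, j, rfl⟩ := ht
  set t0 := u * cs.simple j * u⁻¹ with ht0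
  set c := (phi cs u⁻¹ (t0, false)).2 with hc
  set d := (phi cs u (cs.simple j, false)).2 with hd
  have hconj : u⁻¹ * t0 * u⁻¹⁻¹ = cs.simple j := by rw [ht0]; group
  have h1 : ∀ δ : Bool, phi cs u⁻¹ (t0, δ) = (cs.simple j, xor c δ) := by
    intro δ; rw [phi_apply, hconj, ← hc]
  have h2 : ∀ δ : Bool, phi cs (cs.simple j) (cs.simple j, δ) = (cs.simple j, !δ) := by
    intro δ
    rw [phi_simple]
    show fk cs j (cs.simple j, δ) = _
    unfold fk
    simp
  have h3 : ∀ δ : Bool, phi cs u (cs.simple j, δ) = (t0, xor d δ) := by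
    intro δ; rw [phi_apply, ← ht0, ← hd]
  have hid : ∀ δ : Bool, xor d (xor c δ) = δ := by
    intro δ
    have : phi cs u (phi cs u⁻¹ (t0, δ)) = (t0, δ) := by
      have : phi cs u * phi cs u⁻¹ = 1 := by rw [← map_mul, mul_inv_cancel, map_one]
      calc phi cs u (phi cs u⁻¹ (t0, δ)) = (phi cs u * phi cs u⁻¹) (t0, δ) := rfl
        _ = (t0, δ) := by rw [this]; rfl
    rw [h1, h3] at this
    exact congrArg Prod.snd this
  have hmul : phi cs t0 = phi cs u * (phi cs (cs.simple j) * phi cs u⁻¹) := by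
    rw [← map_mul, ← map_mul, ht0, mul_assoc]
  have : phi cs t0 (t0, ε) = phi cs u (phi cs (cs.simple j) (phi cs u⁻¹ (t0, ε))) := by
    rw [hmul]; rfl
  rw [this, h1, h2, h3]
  have e0 := hid false
  have e1 := hid true
  clear hid this hmul h1 h2 h3 hconj hc hd
  clear_value c d t0
  cases c <;> cases d <;> cases ε <;> simp_all

/-- Strong exchange: a right inversion occurs in the right inversion sequence of
any reduced word. -/
lemma mem_rightInvSeq_of_isRightInversion {ω : List B} (hω : cs.IsReduced ω) {t : W}
    (h : cs.IsRightInversion (cs.wordProd ω) t) : t ∈ cs.rightInvSeq ω := by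
  by_contra hmem
  set w := cs.wordProd ω with hw
  have hcount : (cs.rightInvSeq ω).countP (fun x => decide (x = t)) = 0 := by
    apply List.countP_eq_zero.mpr
    intro x hx
    simp only [decide_eq_true_iff]
    intro e
    exact hmem (e ▸ hx)
  have hb : (phi cs w (t, false)).2 = false := by
    rw [hw]
    have : phi cs (cs.wordProd ω) (t, false) = Fl cs ω (t, false) := by rw [phi_wordProd]
    rw [this, Fl_apply, hcount]
    simp
  obtain ⟨σ, hσred, hσ⟩ := cs.exists_reduced_word' (w * t)
  have htt : t * t = 1 := h.1.mul_self
  have hwdec : w = (w * t) * t := by rw [mul_assoc, htt, mul_one]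
  have hphiw : phi cs w (t, false) = phi cs (w * t) (phi cs t (t, false)) := by
    calc phi cs w (t, false) = (phi cs (w * t) * phi cs t) (t, false) := by
          rw [← map_mul, ← hwdec]
      _ = _ := rfl
  rw [hphiw, phi_isReflection cs h.1, phi_apply] at hb
  have hbwt : (phi cs (w * t) (t, false)).2 = true := by
    rcases Bool.eq_false_or_eq_true ((phi cs (w * t) (t, false)).2) with hx | hx
    · exact hx
    · rw [hx] at hb; simp at hb
  have : phi cs (w * t) (t, false) = Fl cs σ (t, false) := by rw [hσ, phi_wordProd]
  rw [this, Fl_apply] at hbwt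
  by_cases he : Even ((cs.rightInvSeq σ).countP (fun x => decide (x = t)))
  · rw [if_pos he] at hbwt; simp at hbwt
  · have hpos : 0 < (cs.rightInvSeq σ).countP (fun x => decide (x = t)) := by
      rcases Nat.eq_zero_or_pos ((cs.rightInvSeq σ).countP (fun x => decide (x = t))) with h0 | h0
      · rw [h0] at he; simp at he
      · exact h0
    obtain ⟨x, hx, hxt⟩ := List.countP_pos_iff.mp hpos
    have hxt' : x = t := by simpa using hxt
    have hmemσ : t ∈ cs.rightInvSeq σ := hxt' ▸ hx
    have hri := cs.isRightInversion_of_mem_rightInvSeq hσred hmemσ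
    rw [← hσ] at hri
    have h2 : cs.length (w * t * t) < cs.length (w * t) := hri.2
    rw [← hwdec] at h2
    have h3 := h.2
    omega


lemma mem_leftInvSeq_iff {ω : List B} (hω : cs.IsReduced ω) (t : W) :
    t ∈ cs.leftInvSeq ω ↔ cs.IsLeftInversion (cs.wordProd ω) t := by
  constructor
  · exact cs.isLeftInversion_of_mem_leftInvSeq hω
  · intro h
    have hrev : cs.IsReduced ω.reverse := (cs.isReduced_reverse_iff ω).mpr hω
    have h2 : cs.IsRightInversion (cs.wordProd ω.reverse) t := by
      rw [cs.wordProd_reverse]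
      exact cs.isRightInversion_inv_iff.mpr h
    have h3 := cs.mem_rightInvSeq_of_isRightInversion hrev h2
    have h4 : cs.leftInvSeq ω = (cs.rightInvSeq ω.reverse).reverse := by
      have := cs.leftInvSeq_reverse ω.reverse
      rw [List.reverse_reverse] at this
      rw [this]
    rw [h4, List.mem_reverse]
    exact h3

lemma invSet_eq_of_reduced {ω : List B} (hω : cs.IsReduced ω) :
    cs.invSet (cs.wordProd ω) = {t | t ∈ cs.leftInvSeq ω} := by
  ext t
  exact (cs.mem_leftInvSeq_iff hω t).symm

lemma invSet_finite (w : W) : (cs.invSet w).Finite := by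
  obtain ⟨ω, hred, rfl⟩ := cs.exists_reduced_word' w
  rw [cs.invSet_eq_of_reduced hred]
  exact (cs.leftInvSeq ω).finite_toSet

lemma invSet_ncard (w : W) : (cs.invSet w).ncard = cs.length w := by
  obtain ⟨ω, hred, rfl⟩ := cs.exists_reduced_word' w
  rw [cs.invSet_eq_of_reduced hred]
  have hnodup : (cs.leftInvSeq ω).Nodup := hred.nodup_leftInvSeq
  have h1 : {t | t ∈ cs.leftInvSeq ω} = ((cs.leftInvSeq ω).toFinset : Set W) := by
    ext t; simp
  rw [h1, Set.ncard_coe_finset, List.toFinset_card_of_nodup hnodup,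
    cs.length_leftInvSeq, hred]

lemma invSet_mul_simple_subset (w : W) (i : B) :
    cs.invSet (w * cs.simple i) ⊆ insert (w * cs.simple i * w⁻¹) (cs.invSet w) := by
  rcases cs.length_mul_simple w i with hl | hl
  · -- length goes up
    obtain ⟨ω, hred, hprod⟩ := cs.exists_reduced_word' w
    have hred2 : cs.IsReduced (ω.concat i) := by
      unfold CoxeterSystem.IsReduced
      rw [cs.wordProd_concat, List.length_concat, ← hprod, hl, hprod, hred]
    intro t ht
    have : t ∈ cs.leftInvSeq (ω.concat i) := by
      rw [cs.mem_leftInvSeq_iff hred2, cs.wordProd_concat, ← hprod]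
      exact ht
    rw [cs.leftInvSeq_concat, List.concat_eq_append] at this
    rcases List.mem_append.mp this with hm | hm
    · right
      rw [hprod, cs.invSet_eq_of_reduced hred]
      exact hm
    · left
      rw [List.mem_singleton] at hm
      rw [hm, hprod]
  · -- length goes down: invSet (w * s i) ⊆ invSet w
    set w' := w * cs.simple i with hw'
    have hww : w = w' * cs.simple i := by rw [hw']; simp
    obtain ⟨σ, hred, hprod⟩ := cs.exists_reduced_word' w'
    have hl2 : cs.length (w' * cs.simple i) = cs.length w' + 1 := by
      rw [← hww]; omega
    have hred2 : cs.IsReduced (σ.concat i) := by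
      unfold CoxeterSystem.IsReduced
      rw [cs.wordProd_concat, List.length_concat, ← hprod, hl2, hprod, hred]
    intro t ht
    right
    have htm : t ∈ cs.leftInvSeq σ := by
      rw [cs.mem_leftInvSeq_iff hred, ← hprod]
      exact ht
    have : t ∈ cs.leftInvSeq (σ.concat i) := by
      rw [cs.leftInvSeq_concat, List.concat_eq_append]
      exact List.mem_append.mpr (Or.inl htm)
    rw [cs.mem_leftInvSeq_iff hred2, cs.wordProd_concat, ← hprod, ← hww] at this
    exact this

/-- Crossing one wall changes the inversion set by at most the corresponding reflection. -/
lemma symmDiff_subset_singleton (w : W) (i : B) :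
    (cs.invSet w \ cs.invSet (w * cs.simple i)) ∪ (cs.invSet (w * cs.simple i) \ cs.invSet w)
      ⊆ {w * cs.simple i * w⁻¹} := by
  have h1 := cs.invSet_mul_simple_subset w i
  have h2 := cs.invSet_mul_simple_subset (w * cs.simple i) i
  have he1 : w * cs.simple i * cs.simple i = w := by simp
  rw [he1] at h2
  have he2 : w * (w * cs.simple i)⁻¹ = w * cs.simple i * w⁻¹ := by
    rw [mul_inv_rev, cs.inv_simple, ← mul_assoc]
  rw [he2] at h2
  intro t ht
  rcases ht with ⟨hta, htb⟩ | ⟨hta, htb⟩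
  · rcases h2 hta with he | hm
    · exact he
    · exact absurd hm htb
  · rcases h1 hta with he | hm
    · exact he
    · exact absurd hm htb

lemma ncard_symmDiff_le (x : W) (ω : List B) :
    ((cs.invSet x \ cs.invSet (x * cs.wordProd ω))
      ∪ (cs.invSet (x * cs.wordProd ω) \ cs.invSet x)).ncard ≤ ω.length := by
  induction ω generalizing x with
  | nil => simp
  | cons i ω ih =>
    have hx : x * cs.wordProd (i :: ω) = (x * cs.simple i) * cs.wordProd ω := by
      rw [cs.wordProd_cons, mul_assoc]
    set A := cs.invSet x with hA
    set Bs := cs.invSet (x * cs.simple i) with hB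
    set C := cs.invSet (x * cs.wordProd (i :: ω)) with hC
    have hC2 : C = cs.invSet ((x * cs.simple i) * cs.wordProd ω) := by rw [hC, hx]
    have hfA := cs.invSet_finite x
    have hfB := cs.invSet_finite (x * cs.simple i)
    have hfC := cs.invSet_finite (x * cs.wordProd (i :: ω))
    have hsub : (A \ C ∪ C \ A) ⊆ ((A \ Bs ∪ Bs \ A) ∪ (Bs \ C ∪ C \ Bs)) := by
      intro t ht
      by_cases hBm : t ∈ Bs
      · simp only [Set.mem_union, Set.mem_diff] at *
        tauto
      · simp only [Set.mem_union, Set.mem_diff] at *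
        tauto
    have hfin : ((A \ Bs ∪ Bs \ A) ∪ (Bs \ C ∪ C \ Bs)).Finite :=
      ((hfA.diff).union (hfB.diff)).union ((hfB.diff).union ((hC2 ▸ cs.invSet_finite _).diff))
    have hc1 : (A \ Bs ∪ Bs \ A).ncard ≤ 1 := by
      have := Set.ncard_le_ncard (cs.symmDiff_subset_singleton x i)
        (Set.finite_singleton (x * cs.simple i * x⁻¹))
      simpa using this
    have hc2 : (Bs \ C ∪ C \ Bs).ncard ≤ ω.length := by
      rw [hC2]
      exact ih (x * cs.simple i)
    calc (A \ C ∪ C \ A).ncard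
        ≤ ((A \ Bs ∪ Bs \ A) ∪ (Bs \ C ∪ C \ Bs)).ncard := Set.ncard_le_ncard hsub hfin
      _ ≤ (A \ Bs ∪ Bs \ A).ncard + (Bs \ C ∪ C \ Bs).ncard := Set.ncard_union_le _ _
      _ ≤ 1 + ω.length := add_le_add hc1 hc2
      _ = (i :: ω).length := by simp [Nat.add_comm]

end CoxeterSystem

end AuxStrongExchange

/-- If `Φ(x) ∩ Φ(y) = {β}` then `β` is a short inversion of both `x` and `y`. -/
theorem mem_shortInv_of_inter_eq_singleton (cs : CoxeterSystem M W) (x y β : W)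
    (hβ : cs.IsReflection β) (h : cs.invSet x ∩ cs.invSet y = {β}) :
    β ∈ cs.shortInv x ∩ cs.shortInv y := by
  have hmem : β ∈ cs.invSet x ∩ cs.invSet y := by rw [h]; rfl
  obtain ⟨hx, hy⟩ := hmem
  have hbx : cs.length (β * x) < cs.length x := hx.2
  have hby : cs.length (β * y) < cs.length y := hy.2
  have hfactor : x⁻¹ * y = (β * x)⁻¹ * (β * y) := by group
  have hup : cs.length (x⁻¹ * y) ≤ cs.length (β * x) + cs.length (β * y) := by
    rw [hfactor]
    calc cs.length ((β * x)⁻¹ * (β * y)) ≤ cs.length (β * x)⁻¹ + cs.length (β * y) :=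
          cs.length_mul_le _ _
      _ = _ := by rw [cs.length_inv]
  obtain ⟨ω, hred, hprod⟩ := cs.exists_reduced_word' (x⁻¹ * y)
  have hxy : x * cs.wordProd ω = y := by rw [← hprod]; group
  have hD := cs.ncard_symmDiff_le x ω
  rw [hxy] at hD
  have hlen : ω.length = cs.length (x⁻¹ * y) := by rw [hprod]; exact hred.symm
  have hfA := cs.invSet_finite x
  have hfB := cs.invSet_finite y
  have hU : (cs.invSet x ∪ cs.invSet y).ncard + (cs.invSet x ∩ cs.invSet y).ncard
      = (cs.invSet x).ncard + (cs.invSet y).ncard :=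
    Set.ncard_union_add_ncard_inter _ _ hfA hfB
  have hI : (cs.invSet x ∩ cs.invSet y).ncard = 1 := by rw [h]; exact Set.ncard_singleton β
  have hDset : (cs.invSet x \ cs.invSet y ∪ cs.invSet y \ cs.invSet x)
      = (cs.invSet x ∪ cs.invSet y) \ (cs.invSet x ∩ cs.invSet y) := by
    ext t
    simp only [Set.mem_union, Set.mem_diff, Set.mem_inter_iff]
    tauto
  have hDcard : (cs.invSet x \ cs.invSet y ∪ cs.invSet y \ cs.invSet x).ncard
      + (cs.invSet x ∩ cs.invSet y).ncard = (cs.invSet x ∪ cs.invSet y).ncard := by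
    rw [hDset]
    exact Set.ncard_diff_add_ncard_of_subset
      (Set.subset_union_of_subset_left Set.inter_subset_left _) (hfA.union hfB)
  have hcardA : (cs.invSet x).ncard = cs.length x := cs.invSet_ncard x
  have hcardB : (cs.invSet y).ncard = cs.length y := cs.invSet_ncard y
  exact ⟨⟨hβ, by omega⟩, ⟨hβ, by omega⟩⟩
end

section
/- Let (W,S) be a Coxeter system and x ∈ W with ℓ(x) > 1 and |Φ^R(x)| = 1 (equivalently, |D_R(x)| = 1). If s ∈ D_L(x) is a left descent of x, then D_R(sx) = D_R(x) and |Φ^R(sx)| = 1. -/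
open CoxeterSystem

variable {B W : Type*} [Group W] {M : CoxeterMatrix B}

/-- If `ℓ(x) > 1`, `x` has a unique right descent, and `s` is a left descent of `x`, then
`D_R(sx) = D_R(x)` and `sx` has a unique right descent. -/
theorem rightDescents_mul_simple_of_unique (cs : CoxeterSystem M W) (x : W)
    (hx : 1 < cs.length x) (h1 : ∃ j : B, {i : B | cs.IsRightDescent x i} = {j})
    (i : B) (hi : cs.IsLeftDescent x i) :
    {k : B | cs.IsRightDescent (cs.simple i * x) k} = {k : B | cs.IsRightDescent x k} ∧
      ∃ j : B, {k : B | cs.IsRightDescent (cs.simple i * x) k} = {j} := by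

  obtain ⟨j, hj⟩ := h1
  have hsx : cs.length (cs.simple i * x) + 1 = cs.length x := cs.isLeftDescent_iff.mp hi
  have key : ∀ k : B, cs.IsRightDescent (cs.simple i * x) k → cs.IsRightDescent x k := by
    intro k hk
    rw [isRightDescent_iff] at hk
    have h2 : cs.length (x * cs.simple k) ≤ cs.length (cs.simple i * x * cs.simple k) + 1 := by
      rcases cs.length_simple_mul (x * cs.simple k) i with h | h
      · rw [← mul_assoc] at h; omega
      · rw [← mul_assoc] at h; omega
    unfold IsRightDescent
    omega
  have hset : {k : B | cs.IsRightDescent (cs.simple i * x) k} = {j} := by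
    ext k
    simp only [Set.mem_setOf_eq, Set.mem_singleton_iff]
    constructor
    · intro hk
      have := key k hk
      have : k ∈ ({j} : Set B) := hj ▸ this
      exact this
    · intro hk
      subst hk
      have hne : cs.simple i * x ≠ 1 := by
        intro h
        rw [h] at hsx
        simp at hsx
        omega
      obtain ⟨k', hk'⟩ := cs.exists_rightDescent_of_ne_one hne
      have : k' ∈ ({k} : Set B) := hj ▸ key k' hk'
      rwa [Set.mem_singleton_iff.mp this] at hk'
  exact ⟨hset.trans hj.symm, j, hset⟩
end

section
/- Let (W,S) be a Coxeter system and let G ⊆ W be a Garside shadow. Then the set G⁰ = {x ∈ G : |D_R(x)| = 1} is closed under taking suffixes: if x ∈ G⁰ and y is a suffix of x (i.e., ℓ(x) = ℓ(xy⁻¹) + ℓ(y)) with ℓ(y) ≥ 1, then y ∈ G⁰. -/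
open CoxeterSystem

variable {B W : Type*} [Group W] {M : CoxeterMatrix B}

/-- The tight elements of a Garside shadow are closed under taking suffixes. -/
theorem tight_elements_closed_under_suffix (cs : CoxeterSystem M W) (G : Set W)
    (hG : cs.IsGarsideShadow G) (x : W) (hx : x ∈ G)
    (hx1 : ∃ j : B, {i : B | cs.IsRightDescent x i} = {j})
    (y : W) (hy : cs.IsSuffix y x) (hylen : 1 ≤ cs.length y) :
    y ∈ G ∧ ∃ j : B, {i : B | cs.IsRightDescent y i} = {j} := by
  obtain ⟨j, hj⟩ := hx1
  have hsub : ∀ i : B, cs.IsRightDescent y i → cs.IsRightDescent x i := by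
    intro i hdi
    have h1 : x * cs.simple i = (x * y⁻¹) * (y * cs.simple i) := by group
    have h2 : cs.length (x * cs.simple i) ≤ cs.length (x * y⁻¹) + cs.length (y * cs.simple i) := by
      rw [h1]; exact cs.length_mul_le _ _
    have : cs.length (x * cs.simple i) < cs.length (x * y⁻¹) + cs.length y :=
      lt_of_le_of_lt h2 (Nat.add_lt_add_left hdi _)
    rwa [← hy] at this
  have hyne : y ≠ 1 := by
    intro h; rw [h, cs.length_one] at hylen; omega
  obtain ⟨k, hk⟩ := cs.exists_rightDescent_of_ne_one hyne
  have hkj : k = j := by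
    have : k ∈ ({i : B | cs.IsRightDescent x i} : Set B) := hsub k hk
    rwa [hj] at this
  refine ⟨hG.2.2 x hx y hy, j, ?_⟩
  ext i
  simp only [Set.mem_setOf_eq, Set.mem_singleton_iff]
  constructor
  · intro hi
    have : i ∈ ({i : B | cs.IsRightDescent x i} : Set B) := hsub i hi
    rwa [hj] at this
  · rintro rfl
    exact hkj ▸ hk
end

section
/- Let (W,S) be a Coxeter system, w ∈ W, and s ∈ S with ℓ(sw) > ℓ(w). Then β ∈ Φ⁺ (β ≠ α_s) satisfies: β is a boundary root of T((sw)⁻¹) (i.e., there exists z ∈ W with Φ(sw) ∩ Φ(z) = {β}) if and only if sβ is a boundary root of T(w⁻¹) witnessed by some element x with s ∈ D_L(x). Precisely: ∂T(w⁻¹s) = {α_s} ⊔ s({α ∈ ∂T(w⁻¹) : ∃x with Φ(w) ∩ Φ(x) = {α} and ℓ(sx) < ℓ(x)}). -/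
open CoxeterSystem

variable {B W : Type*} [Group W] {M : CoxeterMatrix B}

namespace CoxeterSystem

open scoped Classical

variable (cs : CoxeterSystem M W)

/-- The Bjorner–Brenti style action on `W × ZMod 2`, used to obtain the strong
exchange property. -/
noncomputable def etaFun (i : B) : Function.End (W × ZMod 2) :=
  fun x => (cs.simple i * x.1 * cs.simple i,
    x.2 + if x.1 = cs.simple i then 1 else 0)

lemma etaFun_apply (i : B) (t : W) (ε : ZMod 2) :
    cs.etaFun i (t, ε) = (cs.simple i * t * cs.simple i,
      ε + if t = cs.simple i then 1 else 0) := rfl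

lemma conj_conj_simple (i : B) (v : W) :
    cs.simple i * (cs.simple i * v * cs.simple i) * cs.simple i = v := by
  rw [← mul_assoc, ← mul_assoc, cs.simple_mul_simple_self, one_mul, mul_assoc,
    cs.simple_mul_simple_self, mul_one]

private lemma simple_conj_pow (i j : B) (k : ℕ) :
    cs.simple i * (cs.simple i * cs.simple j) ^ k * cs.simple i
      = ((cs.simple i * cs.simple j) ^ k)⁻¹ := by
  induction k with
  | zero => simp [cs.simple_mul_simple_self]
  | succ k ih =>
      have h2 : cs.simple i * (cs.simple i * cs.simple j) * cs.simple i
          = (cs.simple i * cs.simple j)⁻¹ := by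
        rw [mul_inv_rev, cs.inv_simple, cs.inv_simple]
        simp only [← mul_assoc, cs.simple_mul_simple_self, one_mul]
      have key : cs.simple i * (cs.simple i * cs.simple j) ^ (k + 1) * cs.simple i
          = (cs.simple i * (cs.simple i * cs.simple j) ^ k * cs.simple i)
            * (cs.simple i * (cs.simple i * cs.simple j) * cs.simple i) := by
        rw [pow_succ]
        simp only [mul_assoc, cs.simple_mul_simple_cancel_left]
      rw [key, ih, h2, ← mul_inv_rev, ← pow_succ']

private lemma inv_pow_mul_simple (i j : B) (k : ℕ) :
    ((cs.simple i * cs.simple j) ^ k)⁻¹ * cs.simple i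
      = cs.simple i * (cs.simple i * cs.simple j) ^ k := by
  rw [← cs.simple_conj_pow i j k, mul_assoc, cs.simple_mul_simple_self, mul_one]

private lemma conj_aux (i j : B) (k n : ℕ) :
    ((cs.simple i * cs.simple j) ^ k)⁻¹ * (cs.simple i * (cs.simple i * cs.simple j) ^ n)
        * (cs.simple i * cs.simple j) ^ k
      = cs.simple i * (cs.simple i * cs.simple j) ^ (2 * k + n) := by
  have h1 : ((cs.simple i * cs.simple j) ^ k)⁻¹ * (cs.simple i * (cs.simple i * cs.simple j) ^ n)
        * (cs.simple i * cs.simple j) ^ k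
      = (((cs.simple i * cs.simple j) ^ k)⁻¹ * cs.simple i)
        * ((cs.simple i * cs.simple j) ^ n * (cs.simple i * cs.simple j) ^ k) := by group
  rw [h1, cs.inv_pow_mul_simple, mul_assoc, ← pow_add, ← pow_add]
  congr 2
  omega

private lemma conj_eq_iff (g x t : W) : g * t * g⁻¹ = x ↔ t = g⁻¹ * x * g := by
  constructor
  · rintro rfl; group
  · rintro rfl; group

private lemma eta_pow_apply (i j : B) (k : ℕ) (t : W) (ε : ZMod 2) :
    ((cs.etaFun i * cs.etaFun j) ^ k) (t, ε) =
      ((cs.simple i * cs.simple j) ^ k * t * ((cs.simple i * cs.simple j) ^ k)⁻¹,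
        ε + ∑ r ∈ Finset.range (2 * k),
          (if t = cs.simple i * (cs.simple i * cs.simple j) ^ (r + 1) then (1 : ZMod 2) else 0))
      := by
  induction k with
  | zero =>
      simp only [pow_zero, one_mul, inv_one, mul_one, Nat.mul_zero, Finset.range_zero,
        Finset.sum_empty, add_zero]
      rfl
  | succ k ih =>
      have hs : ∀ (f g : Function.End (W × ZMod 2)) (x : W × ZMod 2), (f * g) x = f (g x) := by
        intro f g x; rfl
      rw [pow_succ', hs, ih, hs, cs.etaFun_apply, cs.etaFun_apply]
      have hj1 : cs.simple i * (cs.simple i * cs.simple j) ^ 1 = cs.simple j := by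
        rw [pow_one, cs.simple_mul_simple_cancel_left]
      have hj2 : cs.simple i * (cs.simple i * cs.simple j) ^ 2
          = cs.simple j * cs.simple i * cs.simple j := by
        rw [sq, ← mul_assoc, cs.simple_mul_simple_cancel_left, ← mul_assoc]
      have c1 := cs.conj_aux i j k 1
      rw [hj1] at c1
      have c2 := cs.conj_aux i j k 2
      rw [hj2] at c2
      have e1 : ((cs.simple i * cs.simple j) ^ k * t * (((cs.simple i * cs.simple j)) ^ k)⁻¹
            = cs.simple j)
          ↔ t = cs.simple i * (cs.simple i * cs.simple j) ^ (2 * k + 1) := by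
        rw [conj_eq_iff, c1]
      have e2 : (cs.simple j * ((cs.simple i * cs.simple j) ^ k * t
              * (((cs.simple i * cs.simple j)) ^ k)⁻¹) * cs.simple j = cs.simple i)
          ↔ t = cs.simple i * (cs.simple i * cs.simple j) ^ (2 * k + 2) := by
        have cancel := cs.conj_conj_simple j
        have h2 : ∀ a : W, (cs.simple j * a * cs.simple j = cs.simple i)
            ↔ (a = cs.simple j * cs.simple i * cs.simple j) := by
          intro a
          constructor
          · intro hh
            calc a = cs.simple j * (cs.simple j * a * cs.simple j) * cs.simple j :=
                  (cancel a).symm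
              _ = cs.simple j * cs.simple i * cs.simple j := by rw [hh]
          · intro hh
            rw [hh]
            exact cancel (cs.simple i)
        rw [h2, conj_eq_iff, c2]
      simp only [Prod.mk.injEq]
      constructor
      · simp only [pow_succ', mul_inv_rev, cs.inv_simple]
        group
      · simp only [e1, e2]
        have h2k : 2 * (k + 1) = (2 * k + 1) + 1 := by omega
        rw [h2k, Finset.sum_range_succ, Finset.sum_range_succ]
        have h1 : 2 * k + 1 + 1 = 2 * k + 2 := by omega
        rw [h1]
        ring

private lemma isLiftable_etaFun : M.IsLiftable cs.etaFun := by
  intro i j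
  funext x
  obtain ⟨t, ε⟩ := x
  show ((cs.etaFun i * cs.etaFun j) ^ M i j) (t, ε) = (t, ε)
  rw [cs.eta_pow_apply i j (M i j) t ε]
  have hm : (cs.simple i * cs.simple j) ^ M i j = 1 := cs.simple_mul_simple_pow i j
  have hfst : (cs.simple i * cs.simple j) ^ M i j * t
      * ((cs.simple i * cs.simple j) ^ M i j)⁻¹ = t := by
    rw [hm]; group
  set m := M i j with hmm
  set f : ℕ → ZMod 2 :=
    fun r => if t = cs.simple i * (cs.simple i * cs.simple j) ^ r then (1 : ZMod 2) else 0
    with hf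
  have hper : ∀ r, f (m + r) = f r := by
    intro r
    simp only [hf, pow_add, hm, one_mul]
  have hsum : (∑ r ∈ Finset.range (2 * m), f (r + 1)) = 0 := by
    have h1 : (∑ r ∈ Finset.range (2 * m), f (r + 1))
        = ∑ r ∈ Finset.range (2 * m), f r := by
      have ha := Finset.sum_range_succ' f (2 * m)
      have hb := Finset.sum_range_succ f (2 * m)
      have hc : f (2 * m) = f 0 := by
        have h2m : 2 * m = m + m := by omega
        rw [h2m, hper m, ← Nat.add_zero m, hper 0]
      rw [hc] at hb
      have hab := ha.symm.trans hb
      exact add_right_cancel hab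
    have h2 : (∑ r ∈ Finset.range (2 * m), f r)
        = (∑ r ∈ Finset.range m, f r) + ∑ r ∈ Finset.range m, f (m + r) := by
      rw [two_mul, Finset.sum_range_add]
    have h3 : (∑ r ∈ Finset.range m, f (m + r)) = ∑ r ∈ Finset.range m, f r :=
      Finset.sum_congr rfl fun r _ => hper r
    rw [h1, h2, h3]
    have hzz : ∀ a : ZMod 2, a + a = 0 := by decide
    exact hzz _
  have hsum' : (∑ r ∈ Finset.range (2 * m),
      (if t = cs.simple i * (cs.simple i * cs.simple j) ^ (r + 1) then (1 : ZMod 2) else 0))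
      = 0 := hsum
  rw [hfst, hsum', add_zero]

/-- The homomorphism `W →* End (W × ZMod 2)` from the Bjorner–Brenti action. -/
noncomputable def bbHom : W →* Function.End (W × ZMod 2) :=
  cs.lift ⟨cs.etaFun, cs.isLiftable_etaFun⟩

lemma bbHom_simple (i : B) : cs.bbHom (cs.simple i) = cs.etaFun i :=
  cs.lift_apply_simple cs.isLiftable_etaFun i

/-- The parity of the number of occurrences of `t` in an inversion sequence for `w`. -/
noncomputable def rpar (w t : W) : ZMod 2 := (cs.bbHom w (t, 0)).2

lemma rpar_one (t : W) : cs.rpar 1 t = 0 := by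
  rw [rpar, map_one]; rfl

lemma bbHom_apply (u t : W) (ε : ZMod 2) :
    cs.bbHom u (t, ε) = (u * t * u⁻¹, ε + cs.rpar u t) := by
  revert ε
  induction u using cs.simple_induction_left with
  | one =>
      intro ε
      rw [map_one, cs.rpar_one, add_zero, one_mul, inv_one, mul_one]
      rfl
  | mul_simple_left u i ih =>
      intro ε
      have happ : ∀ (y : W × ZMod 2),
          cs.bbHom (cs.simple i * u) y = cs.bbHom (cs.simple i) (cs.bbHom u y) := by
        intro y
        rw [map_mul]; rfl
      have key : ∀ ε' : ZMod 2, cs.bbHom (cs.simple i * u) (t, ε')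
          = ((cs.simple i * u) * t * (cs.simple i * u)⁻¹,
              ε' + cs.rpar u t + (if u * t * u⁻¹ = cs.simple i then 1 else 0)) := by
        intro ε'
        rw [happ, ih ε', cs.bbHom_simple, cs.etaFun_apply]
        simp only [Prod.mk.injEq, mul_inv_rev, cs.inv_simple, mul_assoc]
      have hr : cs.rpar (cs.simple i * u) t
          = cs.rpar u t + (if u * t * u⁻¹ = cs.simple i then 1 else 0) := by
        rw [rpar, key 0, zero_add]
      rw [key ε, hr]
      simp only [add_assoc]

lemma rpar_mul (u v t : W) :
    cs.rpar (u * v) t = cs.rpar v t + cs.rpar u (v * t * v⁻¹) := by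
  have h : cs.bbHom (u * v) (t, 0) = cs.bbHom u (cs.bbHom v (t, 0)) := by
    rw [map_mul]; rfl
  rw [rpar, h, cs.bbHom_apply v t 0, cs.bbHom_apply u _ _, zero_add]

lemma rpar_simple (i : B) (t : W) :
    cs.rpar (cs.simple i) t = if t = cs.simple i then 1 else 0 := by
  rw [rpar, cs.bbHom_simple, cs.etaFun_apply, zero_add]

lemma rpar_inv (u t : W) : cs.rpar u⁻¹ t = cs.rpar u (u⁻¹ * t * u) := by
  have h := cs.rpar_mul u u⁻¹ t
  rw [mul_inv_cancel, cs.rpar_one, inv_inv] at h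
  have hz : ∀ a b : ZMod 2, 0 = a + b → a = b := by decide
  exact hz _ _ h

/-- If the parity is one, `t` occurs in the right inversion sequence of any word for `w`. -/
lemma mem_rightInvSeq_of_rpar_eq_one (ω : List B) (t : W)
    (h : cs.rpar (cs.wordProd ω) t = 1) : t ∈ cs.rightInvSeq ω := by
  induction ω with
  | nil =>
      rw [cs.wordProd_nil, cs.rpar_one] at h
      exact absurd h (by decide)
  | cons i ω ih =>
      rw [cs.wordProd_cons, cs.rpar_mul, cs.rpar_simple] at h
      have hcons : cs.rightInvSeq (i :: ω)
          = ((cs.wordProd ω)⁻¹ * cs.simple i * cs.wordProd ω) :: cs.rightInvSeq ω := rfl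
      rw [hcons]
      have hcases : ∀ a b : ZMod 2, a + b = 1 → a = 1 ∨ b = 1 := by decide
      rcases hcases _ _ h with h1 | h2
      · exact List.mem_cons_of_mem _ (ih h1)
      · by_cases hc : cs.wordProd ω * t * (cs.wordProd ω)⁻¹ = cs.simple i
        · have ht : t = (cs.wordProd ω)⁻¹ * cs.simple i * cs.wordProd ω := by
            rw [← hc]; group
          rw [ht]
          exact List.mem_cons_self
        · rw [if_neg hc] at h2
          exact absurd h2 (by decide)

lemma isRightInversion_of_rpar_eq_one {w t : W} (h : cs.rpar w t = 1) :
    cs.IsRightInversion w t := by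
  obtain ⟨ω, hred, rfl⟩ := cs.exists_reduced_word' w
  exact cs.isRightInversion_of_mem_rightInvSeq hred
    (cs.mem_rightInvSeq_of_rpar_eq_one ω t h)

lemma rpar_reflection_self {t : W} (ht : cs.IsReflection t) : cs.rpar t t = 1 := by
  obtain ⟨u, i, rfl⟩ := ht
  have e1 := cs.rpar_mul u (cs.simple i * u⁻¹) (u * cs.simple i * u⁻¹)
  have e1' : (cs.simple i * u⁻¹) * (u * cs.simple i * u⁻¹) * (cs.simple i * u⁻¹)⁻¹
      = cs.simple i := by
    rw [mul_inv_rev, inv_inv, cs.inv_simple]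
    calc cs.simple i * u⁻¹ * (u * cs.simple i * u⁻¹) * (u * cs.simple i)
        = cs.simple i * (u⁻¹ * u) * cs.simple i * (u⁻¹ * u) * cs.simple i := by group
      _ = cs.simple i := by
          rw [inv_mul_cancel, mul_one, mul_one, mul_assoc, cs.simple_mul_simple_self, mul_one]
  have e2 := cs.rpar_mul (cs.simple i) u⁻¹ (u * cs.simple i * u⁻¹)
  have e2' : u⁻¹ * (u * cs.simple i * u⁻¹) * (u⁻¹)⁻¹ = cs.simple i := by group
  have e3 : cs.rpar u⁻¹ (u * cs.simple i * u⁻¹) = cs.rpar u (cs.simple i) := by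
    rw [cs.rpar_inv]
    congr 1
    group
  have e4 : cs.rpar (cs.simple i) (cs.simple i) = 1 := by
    rw [cs.rpar_simple, if_pos rfl]
  rw [e1', e2, e2', e3, e4] at e1
  have hru : u * (cs.simple i * u⁻¹) = u * cs.simple i * u⁻¹ := by group
  rw [hru] at e1
  rw [e1]
  have hfin : ∀ a : ZMod 2, a + 1 + a = 1 := by decide
  exact hfin _

lemma rpar_eq_one_of_isRightInversion {w t : W} (ht : cs.IsReflection t)
    (h : cs.IsRightInversion w t) : cs.rpar w t = 1 := by
  by_contra h0
  have hz : cs.rpar w t = 0 := by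
    have hd : ∀ a : ZMod 2, a ≠ 1 → a = 0 := by decide
    exact hd _ h0
  have hw : w = (w * t) * t := by
    rw [mul_assoc, ht.mul_self, mul_one]
  have hc : cs.rpar ((w * t) * t) t = cs.rpar t t + cs.rpar (w * t) (t * t * t⁻¹) :=
    cs.rpar_mul (w * t) t t
  have htt : t * t * t⁻¹ = t := by rw [ht.mul_self, one_mul, ht.inv]
  have hrt : cs.rpar t t = 1 := cs.rpar_reflection_self ht
  rw [← hw, htt, hrt] at hc
  rw [hz] at hc
  have h1 : cs.rpar (w * t) t = 1 := by
    have hd : ∀ a : ZMod 2, 0 = 1 + a → a = 1 := by decide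
    exact hd _ hc
  have hinv : cs.IsRightInversion (w * t) t := cs.isRightInversion_of_rpar_eq_one h1
  have hlt : cs.length (w * t * t) < cs.length (w * t) := hinv.2
  rw [mul_assoc, ht.mul_self, mul_one] at hlt
  have := h.2
  omega

lemma isRightInversion_iff_rpar_eq_one {w t : W} (ht : cs.IsReflection t) :
    cs.IsRightInversion w t ↔ cs.rpar w t = 1 :=
  ⟨cs.rpar_eq_one_of_isRightInversion ht, cs.isRightInversion_of_rpar_eq_one⟩

/-- The key exchange-type lemma: membership in `Φ(s_i w)` when `ℓ(w) < ℓ(s_i w)`. -/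
lemma mem_invSet_simple_mul_iff {w : W} {i : B} (h : cs.length w < cs.length (cs.simple i * w))
    (t : W) :
    t ∈ cs.invSet (cs.simple i * w) ↔
      (t = cs.simple i ∨ cs.simple i * t * cs.simple i ∈ cs.invSet w) := by
  by_cases hts : t = cs.simple i
  · subst hts
    simp only [true_or, iff_true]
    refine ⟨cs.isReflection_simple i, ?_⟩
    rw [cs.simple_mul_simple_cancel_left]
    exact h
  · by_cases ht : cs.IsReflection t
    · have hconj : cs.IsReflection (cs.simple i * t * cs.simple i) := by
        have hcj := ht.conj (cs.simple i)
        rwa [cs.inv_simple] at hcj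
      have lhs_iff : t ∈ cs.invSet (cs.simple i * w)
          ↔ cs.rpar ((cs.simple i * w)⁻¹) t = 1 := by
        rw [invSet, Set.mem_setOf_eq, ← cs.isRightInversion_inv_iff,
          cs.isRightInversion_iff_rpar_eq_one ht]
      have rhs_iff : cs.simple i * t * cs.simple i ∈ cs.invSet w
          ↔ cs.rpar w⁻¹ (cs.simple i * t * cs.simple i) = 1 := by
        rw [invSet, Set.mem_setOf_eq, ← cs.isRightInversion_inv_iff,
          cs.isRightInversion_iff_rpar_eq_one hconj]
      have hcalc : cs.rpar ((cs.simple i * w)⁻¹) t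
          = cs.rpar w⁻¹ (cs.simple i * t * cs.simple i) := by
        rw [mul_inv_rev, cs.inv_simple, cs.rpar_mul, cs.rpar_simple, if_neg hts, zero_add,
          cs.inv_simple]
      rw [lhs_iff, rhs_iff, hcalc]
      simp [hts]
    · constructor
      · intro hmem
        exact absurd hmem.1 ht
      · rintro (hc | hmem)
        · exact absurd hc hts
        · exfalso
          apply ht
          have hcj := hmem.1.conj (cs.simple i)
          rwa [cs.inv_simple, cs.conj_conj_simple] at hcj

lemma simple_mem_invSet_simple_mul {w : W} {i : B}
    (h : cs.length w < cs.length (cs.simple i * w)) :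
    cs.simple i ∈ cs.invSet (cs.simple i * w) := by
  refine ⟨cs.isReflection_simple i, ?_⟩
  rw [cs.simple_mul_simple_cancel_left]
  exact h

lemma simple_not_mem_invSet {w : W} {i : B} (h : cs.length w < cs.length (cs.simple i * w)) :
    cs.simple i ∉ cs.invSet w := by
  rintro ⟨-, hlt⟩
  omega

lemma invSet_simple (i : B) : cs.invSet (cs.simple i) = {cs.simple i} := by
  ext t
  simp only [invSet, Set.mem_setOf_eq, Set.mem_singleton_iff]
  constructor
  · rintro ⟨ht, hlt⟩
    rw [cs.length_simple] at hlt
    have h0 : cs.length (t * cs.simple i) = 0 := by omega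
    have h1 : t * cs.simple i = 1 := cs.length_eq_zero_iff.mp h0
    have h2 : t = (cs.simple i)⁻¹ := eq_inv_of_mul_eq_one_left h1
    rwa [cs.inv_simple] at h2
  · rintro rfl
    refine ⟨cs.isReflection_simple i, ?_⟩
    rw [cs.simple_mul_simple_self, cs.length_one, cs.length_simple]
    omega

lemma simple_mem_bdRoots_simple_mul {w : W} {i : B}
    (h : cs.length w < cs.length (cs.simple i * w)) :
    cs.simple i ∈ cs.bdRoots (cs.simple i * w) := by
  refine ⟨cs.isReflection_simple i, cs.simple i, ?_⟩
  rw [cs.invSet_simple]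
  ext v
  simp only [Set.mem_inter_iff, Set.mem_singleton_iff]
  constructor
  · rintro ⟨-, rfl⟩; rfl
  · rintro rfl
    exact ⟨cs.simple_mem_invSet_simple_mul h, rfl⟩

end CoxeterSystem

/-- Boundary roots of `T((sw)⁻¹)` in terms of those of `T(w⁻¹)`, when `ℓ(sw) > ℓ(w)`. -/
theorem bdRoots_simple_mul (cs : CoxeterSystem M W) (w : W) (i : B)
    (h : cs.length w < cs.length (cs.simple i * w)) :
    cs.bdRoots (cs.simple i * w) =
      insert (cs.simple i)
        ((fun t => cs.simple i * t * (cs.simple i)⁻¹) ''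
          {t : W | t ∈ cs.bdRoots w ∧
            ∃ x : W, cs.invSet w ∩ cs.invSet x = {t} ∧ cs.IsLeftDescent x i}) := by
  have key : ∀ (v : W), cs.length v < cs.length (cs.simple i * v) → ∀ t : W,
      (t ∈ cs.invSet (cs.simple i * v) ↔
        (t = cs.simple i ∨ cs.simple i * t * cs.simple i ∈ cs.invSet v)) :=
    fun v hv t => cs.mem_invSet_simple_mul_iff hv t
  ext u
  simp only [Set.mem_insert_iff, Set.mem_image, Set.mem_setOf_eq, cs.inv_simple]
  constructor
  · rintro ⟨hrefl, z, hz⟩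
    by_cases hus : u = cs.simple i
    · exact Or.inl hus
    · right
      have hu1 : u ∈ cs.invSet (cs.simple i * w) ∩ cs.invSet z := by
        rw [hz]; exact rfl
      have hsiw : cs.simple i ∈ cs.invSet (cs.simple i * w) :=
        cs.simple_mem_invSet_simple_mul h
      have hsz : cs.simple i ∉ cs.invSet z := by
        intro hs
        apply hus
        have hmem : cs.simple i ∈ cs.invSet (cs.simple i * w) ∩ cs.invSet z := ⟨hsiw, hs⟩
        rw [hz] at hmem
        exact (Set.mem_singleton_iff.mp hmem).symm
      have hz' : cs.length z < cs.length (cs.simple i * z) := by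
        have hne := (cs.isReflection_simple i).length_mul_right_ne z
        have hnlt : ¬ cs.length (cs.simple i * z) < cs.length z :=
          fun hlt => hsz ⟨cs.isReflection_simple i, hlt⟩
        omega
      have hconj : cs.IsReflection (cs.simple i * u * cs.simple i) := by
        have hc := hrefl.conj (cs.simple i)
        rwa [cs.inv_simple] at hc
      have W1 : cs.invSet w ∩ cs.invSet (cs.simple i * z)
          = {cs.simple i * u * cs.simple i} := by
        ext v
        simp only [Set.mem_inter_iff, Set.mem_singleton_iff]
        constructor
        · rintro ⟨hvw, hvz⟩
          have hvs : v ≠ cs.simple i := by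
            rintro rfl
            exact cs.simple_not_mem_invSet h hvw
          have h1 : cs.simple i * v * cs.simple i ∈ cs.invSet (cs.simple i * w) := by
            rw [key w h (cs.simple i * v * cs.simple i)]
            right
            rwa [cs.conj_conj_simple]
          have h3 : cs.simple i * v * cs.simple i ∈ cs.invSet z :=
            ((key z hz' v).mp hvz).resolve_left hvs
          have h4 : cs.simple i * v * cs.simple i
              ∈ cs.invSet (cs.simple i * w) ∩ cs.invSet z := ⟨h1, h3⟩
          rw [hz] at h4
          have h5 : cs.simple i * v * cs.simple i = u := Set.mem_singleton_iff.mp h4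
          calc v = cs.simple i * (cs.simple i * v * cs.simple i) * cs.simple i :=
                (cs.conj_conj_simple i v).symm
            _ = cs.simple i * u * cs.simple i := by rw [h5]
        · rintro rfl
          constructor
          · exact ((key w h u).mp hu1.1).resolve_left hus
          · rw [key z hz' (cs.simple i * u * cs.simple i)]
            right
            rw [cs.conj_conj_simple]
            exact hu1.2
      have W2 : cs.IsLeftDescent (cs.simple i * z) i := by
        show cs.length (cs.simple i * (cs.simple i * z)) < cs.length (cs.simple i * z)
        rw [cs.simple_mul_simple_cancel_left]
        exact hz'
      exact ⟨cs.simple i * u * cs.simple i,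
        ⟨⟨hconj, cs.simple i * z, W1⟩, cs.simple i * z, W1, W2⟩, cs.conj_conj_simple i u⟩
  · rintro (rfl | ⟨t, ⟨⟨htrefl, -⟩, x, hx, hdx⟩, rfl⟩)
    · exact cs.simple_mem_bdRoots_simple_mul h
    · by_cases hts : t = cs.simple i
      · subst hts
        have hsss : cs.simple i * cs.simple i * cs.simple i = cs.simple i := by
          rw [cs.simple_mul_simple_self, one_mul]
        rw [hsss]
        exact cs.simple_mem_bdRoots_simple_mul h
      · have ht_wx : t ∈ cs.invSet w ∩ cs.invSet x := by
          rw [hx]; exact rfl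
        have hx' : cs.length (cs.simple i * x)
            < cs.length (cs.simple i * (cs.simple i * x)) := by
          rw [cs.simple_mul_simple_cancel_left]
          exact hdx
        have keyx : ∀ v' : W, v' ∈ cs.invSet x ↔
            (v' = cs.simple i ∨
              cs.simple i * v' * cs.simple i ∈ cs.invSet (cs.simple i * x)) := by
          intro v'
          have hk := key (cs.simple i * x) hx' v'
          rwa [cs.simple_mul_simple_cancel_left] at hk
        have hconj : cs.IsReflection (cs.simple i * t * cs.simple i) := by
          have hc := htrefl.conj (cs.simple i)
          rwa [cs.inv_simple] at hc
        refine ⟨hconj, cs.simple i * x, ?_⟩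
        ext v
        simp only [Set.mem_inter_iff, Set.mem_singleton_iff]
        constructor
        · rintro ⟨hvw, hvx⟩
          have hvs : v ≠ cs.simple i := by
            rintro rfl
            exact cs.simple_not_mem_invSet hx' hvx
          have h1 : cs.simple i * v * cs.simple i ∈ cs.invSet w :=
            ((key w h v).mp hvw).resolve_left hvs
          have h2 : cs.simple i * v * cs.simple i ∈ cs.invSet x := by
            rw [keyx]
            right
            rwa [cs.conj_conj_simple]
          have h3 : cs.simple i * v * cs.simple i ∈ cs.invSet w ∩ cs.invSet x := ⟨h1, h2⟩
          rw [hx] at h3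
          have h5 : cs.simple i * v * cs.simple i = t := Set.mem_singleton_iff.mp h3
          calc v = cs.simple i * (cs.simple i * v * cs.simple i) * cs.simple i :=
                (cs.conj_conj_simple i v).symm
            _ = cs.simple i * t * cs.simple i := by rw [h5]
        · rintro rfl
          constructor
          · rw [key w h]
            right
            rw [cs.conj_conj_simple]
            exact ht_wx.1
          · exact ((keyx t).mp ht_wx.2).resolve_left hts
end

section
/- Let (W,S) be a finite Coxeter system with longest element w_o. Then Φ¹(w_o) = Δ, the set of simple roots; i.e., for every s ∈ S, ℓ(s w_o) = ℓ(w_o) − 1, and for every non-simple positive root β, ℓ(s_β w_o) < ℓ(w_o) − 1. -/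
open CoxeterSystem

variable {B W : Type*} [Group W] {M : CoxeterMatrix B}

namespace CoxAux

private lemma zmod2_cases (x : ZMod 2) : x = 0 ∨ x = 1 := by
  fin_cases x
  · exact Or.inl rfl
  · exact Or.inr rfl

attribute [local instance] Classical.propDecidable

variable (cs : CoxeterSystem M W)

local prefix:100 "s" => cs.simple
local prefix:100 "ℓ" => cs.length
local prefix:100 "π" => cs.wordProd

private lemma conj_eq_iff (a t x : W) : a * t * a⁻¹ = x ↔ t = a⁻¹ * x * a := by
  constructor
  · rintro rfl; group
  · rintro rfl; group

/-- The Tits cocycle action of a simple reflection on `W × ZMod 2`. -/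
noncomputable def sig (i : B) : W × ZMod 2 → W × ZMod 2 :=
  fun p => (s i * p.1 * s i, p.2 + if p.1 = s i then 1 else 0)

private lemma simple_conj_simple_eq_iff (i : B) (t : W) :
    s i * t * s i = s i ↔ t = s i := by
  constructor
  · intro h
    have h2 : (s i * s i) * t * (s i * s i) = s i * (s i * t * s i) * s i := by group
    rw [h, cs.simple_mul_simple_self] at h2
    simpa using h2
  · rintro rfl
    rw [cs.simple_mul_simple_self, one_mul]

private lemma sig_invol (i : B) : Function.Involutive (sig cs i) := by
  intro p
  simp only [sig]
  have h1 : s i * (s i * p.1 * s i) * s i = p.1 := by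
    have h := cs.simple_mul_simple_self i
    calc s i * (s i * p.1 * s i) * s i = (s i * s i) * p.1 * (s i * s i) := by group
    _ = p.1 := by rw [h]; group
  ext
  · exact h1
  · show p.2 + _ + _ = p.2
    simp only [simple_conj_simple_eq_iff cs i p.1]
    rcases Classical.em (p.1 = s i) with h | h <;>
      simp [h, add_assoc, CharTwo.add_self_eq_zero]

/-- The Tits cocycle action as a permutation. -/
noncomputable def sigPerm (i : B) : Equiv.Perm (W × ZMod 2) :=
  (sig_invol cs i).toPerm

private lemma sigPerm_apply (i : B) (p : W × ZMod 2) : sigPerm cs i p = sig cs i p := rfl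

open Finset in
private lemma sigPerm_pow (i i' : B) (m : ℕ) (t : W) (ε : ZMod 2) :
    ((sigPerm cs i * sigPerm cs i') ^ m) (t, ε) =
      ((s i * s i') ^ m * t * ((s i * s i') ^ m)⁻¹,
        ε + ∑ n ∈ range (2 * m),
          (if t = s i' * (s i * s i') ^ n then (1 : ZMod 2) else 0)) := by
  induction m generalizing t ε with
  | zero => simp
  | succ m ih =>
    rw [pow_succ, Equiv.Perm.mul_apply]
    have happ : (sigPerm cs i * sigPerm cs i') (t, ε) =
        ((s i * s i') * t * (s i * s i')⁻¹,
          ε + ((if t = s i' * (s i * s i') ^ 0 then (1 : ZMod 2) else 0)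
            + (if t = s i' * (s i * s i') ^ 1 then (1 : ZMod 2) else 0))) := by
      rw [Equiv.Perm.mul_apply, sigPerm_apply, sigPerm_apply]
      simp only [sig]
      ext
      · show s i * (s i' * t * s i') * s i = (s i * s i') * t * (s i * s i')⁻¹
        rw [mul_inv_rev, cs.inv_simple, cs.inv_simple]; group
      · show ε + _ + _ = ε + _
        have e1 : (t = s i') ↔ (t = s i' * (s i * s i') ^ 0) := by simp
        have e2 : (s i' * t * s i' = s i) ↔ (t = s i' * (s i * s i') ^ 1) := by
          rw [pow_one, ← mul_assoc]
          constructor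
          · intro h
            have h2 : (s i' * s i') * t * (s i' * s i') = s i' * (s i' * t * s i') * s i' := by
              group
            rw [h, cs.simple_mul_simple_self] at h2
            rw [one_mul, mul_one] at h2
            rw [h2]
          · rintro rfl
            calc s i' * (s i' * s i * s i') * s i'
                = (s i' * s i') * s i * (s i' * s i') := by group
            _ = s i := by rw [cs.simple_mul_simple_self]; group
        rw [if_congr e1 rfl rfl]
        simp only [e2, add_assoc]
    rw [happ, ih]
    have key : ∀ n : ℕ,
        (s i * s i')⁻¹ * (s i' * (s i * s i') ^ n) * (s i * s i')
          = s i' * (s i * s i') ^ (n + 2) := by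
      intro n
      have hinv : (s i * s i')⁻¹ = s i' * s i := by
        rw [mul_inv_rev, cs.inv_simple, cs.inv_simple]
      have hp : (s i * s i') ^ (n + 2)
          = (s i * s i') * ((s i * s i') ^ n * (s i * s i')) := by
        rw [show n + 2 = 1 + n + 1 by ring, pow_add, pow_add, pow_one]
        group
      rw [hinv, hp]
      generalize (s i * s i') ^ n = X
      group
    ext
    · show (s i * s i') ^ m * ((s i * s i') * t * (s i * s i')⁻¹) * ((s i * s i') ^ m)⁻¹
          = (s i * s i') ^ (m + 1) * t * ((s i * s i') ^ (m + 1))⁻¹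
      generalize s i * s i' = c
      rw [pow_succ]
      group
    · show ε + _ + _ = ε + _
      have hshift : ∀ n : ℕ,
          (if (s i * s i') * t * (s i * s i')⁻¹ = s i' * (s i * s i') ^ n
              then (1 : ZMod 2) else 0)
            = (if t = s i' * (s i * s i') ^ (n + 2) then (1 : ZMod 2) else 0) :=
        fun n => if_congr (by rw [conj_eq_iff, key n]) rfl rfl
      rw [sum_congr rfl (fun n _ => hshift n)]
      have hsum : ∑ n ∈ range (2 * (m + 1)),
          (if t = s i' * (s i * s i') ^ n then (1 : ZMod 2) else 0)
          = ((if t = s i' * (s i * s i') ^ 0 then (1 : ZMod 2) else 0)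
              + (if t = s i' * (s i * s i') ^ 1 then (1 : ZMod 2) else 0))
            + ∑ n ∈ range (2 * m),
              (if t = s i' * (s i * s i') ^ (n + 2) then (1 : ZMod 2) else 0) := by
        rw [show 2 * (m + 1) = (2 * m + 1) + 1 by ring, Finset.sum_range_succ',
          Finset.sum_range_succ']
        ring
      rw [hsum]
      ring

open Finset in
private lemma sig_liftable : M.IsLiftable (sigPerm cs) := by
  intro i i'
  apply Equiv.ext
  rintro ⟨t, ε⟩
  rw [sigPerm_pow]
  have h1 : (s i * s i') ^ M i i' = 1 := cs.simple_mul_simple_pow i i'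
  have h2 : ∑ n ∈ range (2 * M i i'),
      (if t = s i' * (s i * s i') ^ n then (1 : ZMod 2) else 0) = 0 := by
    rw [show 2 * M i i' = M i i' + M i i' by ring, Finset.sum_range_add]
    have h3 : ∀ n : ℕ, (if t = s i' * (s i * s i') ^ (M i i' + n) then (1 : ZMod 2) else 0)
        = (if t = s i' * (s i * s i') ^ n then (1 : ZMod 2) else 0) := by
      intro n
      congr 2
      rw [pow_add, h1, one_mul]
    rw [sum_congr rfl (fun n _ => h3 n)]
    exact CharTwo.add_self_eq_zero _
  rw [h1, h2]
  simp

/-- The cocycle homomorphism. -/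
noncomputable def rho : W →* Equiv.Perm (W × ZMod 2) :=
  cs.lift ⟨sigPerm cs, sig_liftable cs⟩

private lemma rho_simple (i : B) : rho cs (s i) = sigPerm cs i :=
  cs.lift_apply_simple (sig_liftable cs) i

/-- The parity of the number of times a reflection appears in an inversion sequence of `w`. -/
noncomputable def eta (w t : W) : ZMod 2 := (rho cs w (t, 0)).2

private lemma rho_apply (w t : W) (ε : ZMod 2) :
    rho cs w (t, ε) = (w * t * w⁻¹, ε + eta cs w t) := by
  induction w using cs.simple_induction_left generalizing t ε with
  | one => simp [eta]
  | mul_simple_left w i ih =>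
    have hm : rho cs (s i * w) = rho cs (s i) * rho cs w := map_mul _ _ _
    have h0 : eta cs (s i * w) t
        = eta cs w t + (if w * t * w⁻¹ = s i then 1 else 0) := by
      rw [eta, hm, Equiv.Perm.mul_apply, ih, rho_simple, sigPerm_apply]
      show 0 + eta cs w t + _ = _
      rw [zero_add]
    rw [hm, Equiv.Perm.mul_apply, ih, rho_simple, sigPerm_apply, h0]
    simp only [sig]
    ext
    · show s i * (w * t * w⁻¹) * s i = (s i * w) * t * (s i * w)⁻¹
      rw [mul_inv_rev, cs.inv_simple]; group
    · show (ε + eta cs w t) + _ = ε + (eta cs w t + _)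
      rw [add_assoc]

private lemma eta_mul (a b t : W) :
    eta cs (a * b) t = eta cs b t + eta cs a (b * t * b⁻¹) := by
  have h : rho cs (a * b) (t, 0) = rho cs a (rho cs b (t, 0)) := by
    rw [map_mul]; rfl
  rw [eta, h, rho_apply, rho_apply, zero_add]

private lemma eta_simple (i : B) (t : W) :
    eta cs (s i) t = if t = s i then 1 else 0 := by
  rw [eta, rho_simple, sigPerm_apply]
  show (0 : ZMod 2) + _ = _
  rw [zero_add]

private lemma eta_one (t : W) : eta cs 1 t = 0 := by
  rw [eta, map_one]; rfl

private lemma eta_inv (w t : W) : eta cs w⁻¹ t = eta cs w (w⁻¹ * t * w) := by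
  have h := eta_mul cs w⁻¹ w (w⁻¹ * t * w)
  rw [inv_mul_cancel, eta_one] at h
  have h2 : w * (w⁻¹ * t * w) * w⁻¹ = t := by group
  rw [h2] at h
  rcases zmod2_cases (eta cs w (w⁻¹ * t * w)) with h3 | h3 <;>
    rcases zmod2_cases (eta cs w⁻¹ t) with h4 | h4 <;>
    rw [h3, h4] at h ⊢ <;>
    first
      | rfl
      | simp_all

private lemma eta_count (ω : List B) (t : W) :
    eta cs (π ω) t = ((cs.rightInvSeq ω).count t : ZMod 2) := by
  induction ω with
  | nil =>
    simp only [wordProd_nil, rightInvSeq_nil, List.count_nil, Nat.cast_zero]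
    exact eta_one cs t
  | cons i ω ih =>
    rw [cs.wordProd_cons, eta_mul, ih, eta_simple]
    have hris : cs.rightInvSeq (i :: ω) = ((π ω)⁻¹ * s i * π ω) :: cs.rightInvSeq ω := rfl
    have hcount : ((((π ω)⁻¹ * s i * π ω) :: cs.rightInvSeq ω).count t : ℕ)
        = (cs.rightInvSeq ω).count t + (if (π ω)⁻¹ * s i * π ω = t then 1 else 0) := by
      simp [List.count_cons]
    rw [hris, hcount, Nat.cast_add]
    congr 1
    · rw [Nat.cast_ite, Nat.cast_one, Nat.cast_zero]
      refine if_congr ?_ rfl rfl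
      rw [conj_eq_iff]
      exact eq_comm

private lemma isRightInversion_of_eta_eq_one {w t : W} (h : eta cs w t = 1) :
    cs.IsRightInversion w t := by
  obtain ⟨ω, hred, rfl⟩ := cs.exists_reduced_word' w
  rw [eta_count] at h
  have hmem : t ∈ cs.rightInvSeq ω := by
    by_contra hc
    rw [List.count_eq_zero_of_not_mem hc] at h
    simp at h
  exact cs.isRightInversion_of_mem_rightInvSeq hred hmem

private lemma eta_eq_zero_of_not_isRightInversion {w t : W}
    (h : ¬ cs.IsRightInversion w t) : eta cs w t = 0 := by
  rcases zmod2_cases (eta cs w t) with h1 | h1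
  · exact h1
  · exact absurd (isRightInversion_of_eta_eq_one cs h1) h

private lemma eta_self {t : W} (ht : cs.IsReflection t) : eta cs t t = 1 := by
  obtain ⟨u, i, rfl⟩ := ht
  have h1 : eta cs (u * s i * u⁻¹) (u * s i * u⁻¹)
      = eta cs (s i * u⁻¹) (u * s i * u⁻¹)
        + eta cs u ((s i * u⁻¹) * (u * s i * u⁻¹) * (s i * u⁻¹)⁻¹) := by
    have h : u * s i * u⁻¹ = u * (s i * u⁻¹) := by group
    nth_rewrite 1 [h]
    exact eta_mul cs u (s i * u⁻¹) _
  have h2 : (s i * u⁻¹) * (u * s i * u⁻¹) * (s i * u⁻¹)⁻¹ = s i := by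
    rw [mul_inv_rev, inv_inv]
    calc s i * u⁻¹ * (u * s i * u⁻¹) * (u * (s i)⁻¹)
        = s i * (u⁻¹ * u) * s i * (u⁻¹ * u) * (s i)⁻¹ := by group
    _ = s i := by group
  have h3 : eta cs (s i * u⁻¹) (u * s i * u⁻¹)
      = eta cs u⁻¹ (u * s i * u⁻¹) + eta cs (s i) (u⁻¹ * (u * s i * u⁻¹) * u) := by
    have h := eta_mul cs (s i) u⁻¹ (u * s i * u⁻¹)
    rw [inv_inv] at h
    exact h
  have h4 : u⁻¹ * (u * s i * u⁻¹) * u = s i := by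
    calc u⁻¹ * (u * s i * u⁻¹) * u = (u⁻¹ * u) * s i * (u⁻¹ * u) := by group
    _ = s i := by group
  have h5 : eta cs (s i) (u⁻¹ * (u * s i * u⁻¹) * u) = 1 := by
    rw [h4, eta_simple, if_pos rfl]
  have h6 : eta cs u⁻¹ (u * s i * u⁻¹) = eta cs u (s i) := by
    rw [eta_inv, h4]
  rw [h1, h2, h3, h5, h6]
  rcases zmod2_cases (eta cs u (s i)) with h7 | h7 <;> rw [h7] <;>
    simp [CharTwo.add_self_eq_zero]

private lemma eta_eq_one_of_lt {w t : W} (ht : cs.IsReflection t)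
    (h : ℓ (w * t) < ℓ w) : eta cs w t = 1 := by
  have hw : w = (w * t) * t := by
    rw [mul_assoc, ht.mul_self, mul_one]
  have h1 : eta cs w t = eta cs t t + eta cs (w * t) (t * t * t⁻¹) := by
    nth_rewrite 1 [hw]
    exact eta_mul cs (w * t) t t
  have h2 : t * t * t⁻¹ = t := by group
  have h3 : eta cs (w * t) t = 0 := by
    apply eta_eq_zero_of_not_isRightInversion
    intro hinv
    have h4 : ℓ ((w * t) * t) < ℓ (w * t) := hinv.2
    rw [← hw] at h4
    omega
  rw [h1, h2, h3, eta_self cs ht, add_zero]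

/-- Every element `u` is a prefix of a maximal-length element `w₀`:
`ℓ(w₀⁻¹ u) + ℓ(u) = ℓ(w₀)`. -/
private lemma prefix_all (w₀ : W) (hw₀ : ∀ u : W, ℓ u ≤ ℓ w₀) (u : W) :
    ℓ (w₀⁻¹ * u) + ℓ u = ℓ w₀ := by
  have hrefl_inv : ∀ x : W, cs.IsReflection x → ℓ (w₀⁻¹ * x) < ℓ w₀⁻¹ := by
    intro x hx
    have hne : ℓ (w₀⁻¹ * x) ≠ ℓ w₀⁻¹ := hx.length_mul_left_ne w₀⁻¹
    have hle : ℓ (w₀⁻¹ * x) ≤ ℓ w₀ := hw₀ _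
    rw [cs.length_inv] at hne ⊢
    omega
  suffices H : ∀ n : ℕ, ∀ u : W, ℓ u = n → ℓ (w₀⁻¹ * u) + ℓ u = ℓ w₀ by
    exact H (ℓ u) u rfl
  intro n
  induction n using Nat.strong_induction_on with
  | _ n ih =>
    intro u hu
    rcases Nat.eq_zero_or_pos n with hn | hn
    · have h1 : u = 1 := cs.length_eq_zero_iff.mp (by omega)
      subst h1
      simp [cs.length_inv]
    · have hune : u ≠ 1 := by
        intro h
        rw [h, cs.length_one] at hu
        omega
      obtain ⟨i, hdesc⟩ := cs.exists_rightDescent_of_ne_one hune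
      have hd : ℓ (u * s i) < ℓ u := hdesc
      have hlen' : ℓ (u * s i) + 1 = ℓ u := by
        rcases cs.length_mul_simple u i with h | h
        · omega
        · exact h
      have hui : (u * s i) * s i = u := by
        rw [mul_assoc, cs.simple_mul_simple_self, mul_one]
      have hIH : ℓ (w₀⁻¹ * (u * s i)) + ℓ (u * s i) = ℓ w₀ :=
        ih (ℓ (u * s i)) (by omega) (u * s i) rfl
      have heta : eta cs (w₀⁻¹ * (u * s i)) (s i) = 1 := by
        rw [eta_mul]
        have hz : eta cs (u * s i) (s i) = 0 := by
          apply eta_eq_zero_of_not_isRightInversion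
          intro hinv
          have h4 := hinv.2
          rw [hui] at h4
          omega
        have hconj : cs.IsReflection ((u * s i) * s i * (u * s i)⁻¹) :=
          (cs.isReflection_simple i).conj (u * s i)
        have ho : eta cs w₀⁻¹ ((u * s i) * s i * (u * s i)⁻¹) = 1 :=
          eta_eq_one_of_lt cs hconj (hrefl_inv _ hconj)
        rw [hz, ho, zero_add]
      have hinv : cs.IsRightInversion (w₀⁻¹ * (u * s i)) (s i) :=
        isRightInversion_of_eta_eq_one cs heta
      have hlt : ℓ ((w₀⁻¹ * (u * s i)) * s i) < ℓ (w₀⁻¹ * (u * s i)) := hinv.2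
      have heq : (w₀⁻¹ * (u * s i)) * s i = w₀⁻¹ * u := by
        rw [mul_assoc, hui]
      rcases cs.length_mul_simple (w₀⁻¹ * (u * s i)) i with h | h
      · omega
      · rw [heq] at h
        omega

end CoxAux


/-- In a finite Coxeter group, the short inversions of the longest element are exactly
the simple roots. -/
theorem shortInv_longestElement (cs : CoxeterSystem M W) [Finite W] (w₀ : W)
    (hw₀ : ∀ u : W, cs.length u ≤ cs.length w₀) :
    cs.shortInv w₀ = Set.range cs.simple := by
  ext t
  constructor
  · rintro ⟨ht, hlen⟩
    have hkey := CoxAux.prefix_all cs w₀ hw₀ t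
    have h1 : cs.length (w₀⁻¹ * t) = cs.length (t * w₀) := by
      rw [← cs.length_inv (w₀⁻¹ * t), mul_inv_rev, inv_inv, ht.inv]
    rw [h1] at hkey
    have h2 : cs.length t = 1 := by omega
    obtain ⟨i, rfl⟩ := cs.length_eq_one_iff.mp h2
    exact ⟨i, rfl⟩
  · rintro ⟨i, rfl⟩
    refine ⟨cs.isReflection_simple i, ?_⟩
    have h1 : cs.length (cs.simple i * w₀) ≠ cs.length w₀ := cs.length_simple_mul_ne w₀ i
    have h2 : cs.length (cs.simple i * w₀) ≤ cs.length w₀ := hw₀ _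
    rcases cs.length_simple_mul w₀ i with h | h
    · omega
    · exact h
end

section
/- Let (W,S) be a Coxeter system, and X ⊆ W a bounded subset of the right weak order with join y = ⋁X. Then the cone type of y⁻¹ is the intersection of the cone types: T(y⁻¹) = ⋂_{x ∈ X} T(x⁻¹), where T(w) = {v ∈ W : ℓ(wv) = ℓ(w) + ℓ(v)}. -/
open CoxeterSystem

variable {B W : Type*} [Group W] {M : CoxeterMatrix B}

section CTJAux

open List

open scoped Classical

private lemma dih_comm {G : Type*} [Group G] {q b : G} (hqb : b * q = q⁻¹ * b) (k : ℕ) :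
    b * q ^ k = (q ^ k)⁻¹ * b := by
  induction k with
  | zero => simp
  | succ n ih =>
    calc b * q ^ (n + 1) = (b * q) * q ^ n := by rw [pow_succ']; group
      _ = q⁻¹ * (b * q ^ n) := by rw [hqb]; group
      _ = q⁻¹ * ((q ^ n)⁻¹ * b) := by rw [ih]
      _ = (q ^ (n + 1))⁻¹ * b := by rw [pow_succ]; group

private lemma dih_e1 {G : Type*} [Group G] {q b : G} (hqb : b * q = q⁻¹ * b) (n : ℕ) (t : G) :
    q ^ n * t * (q ^ n)⁻¹ = b ↔ t = (q ^ (2 * n))⁻¹ * b := by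
  have key : (q ^ n)⁻¹ * b * q ^ n = (q ^ (2 * n))⁻¹ * b := by
    calc (q ^ n)⁻¹ * b * q ^ n = (q ^ n)⁻¹ * (b * q ^ n) := by group
      _ = (q ^ n)⁻¹ * ((q ^ n)⁻¹ * b) := by rw [dih_comm hqb n]
      _ = (q ^ (2 * n))⁻¹ * b := by rw [two_mul, pow_add]; group
  constructor
  · intro h
    have h' := congrArg (fun x => (q ^ n)⁻¹ * x * q ^ n) h
    rw [show (q ^ n)⁻¹ * (q ^ n * t * (q ^ n)⁻¹) * q ^ n = t from by group] at h'
    rw [h', key]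
  · intro h
    rw [h, ← key]
    group

private lemma dih_e2 {G : Type*} [Group G] {q b : G} (hqb : b * q = q⁻¹ * b) (hb : b * b = 1)
    (n : ℕ) (t : G) :
    b * (q ^ n * t * (q ^ n)⁻¹) * b = q * b ↔ t = (q ^ (2 * n + 1))⁻¹ * b := by
  have hbab : b * (q * b) * b = q⁻¹ * b := by
    calc b * (q * b) * b = (b * q) * (b * b) := by group
      _ = (b * q) := by rw [hb]; group
      _ = q⁻¹ * b := hqb
  have key : (q ^ n)⁻¹ * (q⁻¹ * b) * q ^ n = (q ^ (2 * n + 1))⁻¹ * b := by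
    calc (q ^ n)⁻¹ * (q⁻¹ * b) * q ^ n = (q ^ n)⁻¹ * q⁻¹ * (b * q ^ n) := by group
      _ = (q ^ n)⁻¹ * q⁻¹ * ((q ^ n)⁻¹ * b) := by rw [dih_comm hqb n]
      _ = (q ^ (2 * n + 1))⁻¹ * b := by rw [two_mul, pow_add, pow_add, pow_one]; group
  constructor
  · intro h
    have h' : q ^ n * t * (q ^ n)⁻¹ = q⁻¹ * b := by
      rw [← hbab]
      calc q ^ n * t * (q ^ n)⁻¹
          = (b * b) * (q ^ n * t * (q ^ n)⁻¹) * (b * b) := by rw [hb]; group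
        _ = b * (b * (q ^ n * t * (q ^ n)⁻¹) * b) * b := by group
        _ = b * (q * b) * b := by rw [h]
    have h'' := congrArg (fun x => (q ^ n)⁻¹ * x * q ^ n) h'
    rw [show (q ^ n)⁻¹ * (q ^ n * t * (q ^ n)⁻¹) * q ^ n = t from by group] at h''
    rw [h'', key]
  · intro h
    have hq' : q * b = b * q⁻¹ := by
      have h2 := congrArg (fun x => q * x * q⁻¹) hqb
      rw [show q * (b * q) * q⁻¹ = q * b from by group,
        show q * (q⁻¹ * b) * q⁻¹ = b * q⁻¹ from by group] at h2
      exact h2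
    rw [h, ← key]
    calc b * (q ^ n * ((q ^ n)⁻¹ * (q⁻¹ * b) * q ^ n) * (q ^ n)⁻¹) * b
        = (b * q⁻¹) * (b * b) := by group
      _ = b * q⁻¹ := by rw [hb, mul_one]
      _ = q * b := hq'.symm

variable (cs : CoxeterSystem M W)

/-- The sign representation generator on reflections. -/
private noncomputable def ctjF (i : B) : Function.End (W × ZMod 2) :=
  fun p => (cs.simple i * p.1 * cs.simple i, p.2 + if p.1 = cs.simple i then 1 else 0)

private lemma ctjF_mul_apply (i i' : B) (u : W) (δ : ZMod 2) :
    (ctjF cs i * ctjF cs i') (u, δ)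
      = (cs.simple i * (cs.simple i' * u * cs.simple i') * cs.simple i,
        (δ + (if u = cs.simple i' then 1 else 0))
          + (if cs.simple i' * u * cs.simple i' = cs.simple i then 1 else 0)) := rfl

private lemma ctjF_pow_apply (i i' : B) (m : ℕ) (t : W) (ε : ZMod 2) :
    ((ctjF cs i * ctjF cs i') ^ m) (t, ε) =
      ((cs.simple i * cs.simple i') ^ m * t * ((cs.simple i * cs.simple i') ^ m)⁻¹,
        ε + ∑ k ∈ Finset.range (2 * m),
          (if t = ((cs.simple i * cs.simple i') ^ k)⁻¹ * cs.simple i'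
            then (1 : ZMod 2) else 0)) := by
  have hqb : cs.simple i' * (cs.simple i * cs.simple i')
      = (cs.simple i * cs.simple i')⁻¹ * cs.simple i' := by
    rw [mul_inv_rev, cs.inv_simple, cs.inv_simple]
    group
  have hb2 : cs.simple i' * cs.simple i' = 1 := cs.simple_mul_simple_self i'
  have hqba : (cs.simple i * cs.simple i') * cs.simple i' = cs.simple i := by
    rw [mul_assoc, hb2, mul_one]
  induction m with
  | zero => simp [Function.End.one_def]
  | succ n ih =>
    have h1 : ((ctjF cs i * ctjF cs i') ^ (n + 1)) (t, ε)
        = (ctjF cs i * ctjF cs i') (((ctjF cs i * ctjF cs i') ^ n) (t, ε)) := by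
      rw [pow_succ']; rfl
    rw [h1, ih, ctjF_mul_apply]
    rw [Prod.mk.injEq]
    constructor
    · calc cs.simple i * (cs.simple i' * ((cs.simple i * cs.simple i') ^ n * t
            * (((cs.simple i * cs.simple i') ^ n))⁻¹) * cs.simple i') * cs.simple i
          = (cs.simple i * cs.simple i') * ((cs.simple i * cs.simple i') ^ n * t
            * (((cs.simple i * cs.simple i') ^ n))⁻¹) * (cs.simple i' * cs.simple i) := by
            group
        _ = (cs.simple i * cs.simple i') * ((cs.simple i * cs.simple i') ^ n * t
            * (((cs.simple i * cs.simple i') ^ n))⁻¹) * (cs.simple i * cs.simple i')⁻¹ := by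
            rw [mul_inv_rev, cs.inv_simple, cs.inv_simple]
        _ = ((cs.simple i * cs.simple i') * (cs.simple i * cs.simple i') ^ n) * t
            * (((cs.simple i * cs.simple i') ^ n)⁻¹ * (cs.simple i * cs.simple i')⁻¹) := by
            group
        _ = (cs.simple i * cs.simple i') ^ (n + 1) * t
            * ((cs.simple i * cs.simple i') ^ (n + 1))⁻¹ := by
            rw [pow_succ']
            simp only [mul_inv_rev]
    · have hc1 : ((cs.simple i * cs.simple i') ^ n * t
            * (((cs.simple i * cs.simple i') ^ n))⁻¹ = cs.simple i')
          ↔ (t = ((cs.simple i * cs.simple i') ^ (2 * n))⁻¹ * cs.simple i') :=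
        dih_e1 hqb n t
      have hc2 : (cs.simple i' * ((cs.simple i * cs.simple i') ^ n * t
            * (((cs.simple i * cs.simple i') ^ n))⁻¹) * cs.simple i' = cs.simple i)
          ↔ (t = ((cs.simple i * cs.simple i') ^ (2 * n + 1))⁻¹ * cs.simple i') := by
        have hd := dih_e2 hqb hb2 n t
        rw [hqba] at hd
        exact hd
      have hsum : ∑ k ∈ Finset.range (2 * (n + 1)),
            (if t = ((cs.simple i * cs.simple i') ^ k)⁻¹ * cs.simple i'
              then (1 : ZMod 2) else 0)
          = (∑ k ∈ Finset.range (2 * n),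
              (if t = ((cs.simple i * cs.simple i') ^ k)⁻¹ * cs.simple i'
                then (1 : ZMod 2) else 0))
            + (if t = ((cs.simple i * cs.simple i') ^ (2 * n))⁻¹ * cs.simple i'
                then (1 : ZMod 2) else 0)
            + (if t = ((cs.simple i * cs.simple i') ^ (2 * n + 1))⁻¹ * cs.simple i'
                then (1 : ZMod 2) else 0) := by
        have h2n : 2 * (n + 1) = (2 * n) + 1 + 1 := by ring
        rw [h2n, Finset.sum_range_succ, Finset.sum_range_succ]
      rw [hsum]
      simp only [hc1, hc2]
      ring

private lemma ctjF_liftable : M.IsLiftable (fun i => ctjF cs i) := by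
  intro i i'
  funext p
  obtain ⟨t, ε⟩ := p
  show ((ctjF cs i * ctjF cs i') ^ M i i') (t, ε) = (1 : Function.End (W × ZMod 2)) (t, ε)
  rw [ctjF_pow_apply]
  have hq : (cs.simple i * cs.simple i') ^ M i i' = 1 := cs.simple_mul_simple_pow i i'
  have hsum : ∑ k ∈ Finset.range (2 * M i i'),
      (if t = ((cs.simple i * cs.simple i') ^ k)⁻¹ * cs.simple i' then (1 : ZMod 2) else 0)
      = 0 := by
    rw [two_mul, Finset.sum_range_add]
    have hp : ∀ k, ((cs.simple i * cs.simple i') ^ (M i i' + k))⁻¹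
        = ((cs.simple i * cs.simple i') ^ k)⁻¹ := by
      intro k
      rw [pow_add, hq, one_mul]
    simp only [hp]
    exact CharTwo.add_self_eq_zero _
  rw [hq, hsum]
  show _ = (t, ε)
  rw [Prod.mk.injEq]
  constructor
  · group
  · ring

/-- The sign representation `θ : W →* End (W × ZMod 2)`. -/
private noncomputable def ctjTheta : W →* Function.End (W × ZMod 2) :=
  cs.lift ⟨fun i => ctjF cs i, ctjF_liftable cs⟩

/-- The parity cocycle. -/
private noncomputable def ctjPhi (w t : W) : ZMod 2 := (ctjTheta cs w (t, 0)).2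

private lemma ctjTheta_simple (i : B) : ctjTheta cs (cs.simple i) = ctjF cs i :=
  cs.lift_apply_simple (ctjF_liftable cs) i

private lemma ctjTheta_apply (w : W) : ∀ t ε,
    ctjTheta cs w (t, ε) = (w * t * w⁻¹, ε + ctjPhi cs w t) := by
  induction w using cs.simple_induction_left with
  | one =>
    intro t ε
    have h0 : ctjPhi cs 1 t = 0 := by
      unfold ctjPhi
      rw [map_one]
      rfl
    rw [map_one, h0]
    show (t, ε) = (1 * t * 1⁻¹, ε + 0)
    rw [Prod.mk.injEq]
    constructor
    · group
    · ring
  | mul_simple_left w i ih =>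
    intro t ε
    have happ : ∀ p : W × ZMod 2, ctjTheta cs (cs.simple i * w) p
        = ctjF cs i (ctjTheta cs w p) := by
      intro p
      rw [map_mul, ctjTheta_simple]
      rfl
    have hphi : ctjPhi cs (cs.simple i * w) t
        = ctjPhi cs w t + (if w * t * w⁻¹ = cs.simple i then 1 else 0) := by
      unfold ctjPhi
      rw [happ, ih t 0]
      show (0 : ZMod 2) + ctjPhi cs w t + _ = _
      ring
    rw [happ, ih t ε]
    show (cs.simple i * (w * t * w⁻¹) * cs.simple i,
        (ε + ctjPhi cs w t) + (if w * t * w⁻¹ = cs.simple i then 1 else 0)) = _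
    rw [hphi, Prod.mk.injEq]
    constructor
    · rw [mul_inv_rev, cs.inv_simple]
      group
    · ring

private lemma ctjPhi_mul (u v t : W) :
    ctjPhi cs (u * v) t = ctjPhi cs v t + ctjPhi cs u (v * t * v⁻¹) := by
  have h1 : ctjTheta cs (u * v) (t, 0) = ctjTheta cs u (ctjTheta cs v (t, 0)) := by
    rw [map_mul]; rfl
  have h2 : ctjPhi cs (u * v) t = (ctjTheta cs (u * v) (t, 0)).2 := rfl
  rw [h2, h1, ctjTheta_apply cs v t 0, ctjTheta_apply cs u (v * t * v⁻¹) (0 + ctjPhi cs v t)]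
  show (0 : ZMod 2) + ctjPhi cs v t + ctjPhi cs u (v * t * v⁻¹) = _
  ring

private lemma ctjPhi_simple (i : B) (t : W) :
    ctjPhi cs (cs.simple i) t = if t = cs.simple i then 1 else 0 := by
  show (ctjTheta cs (cs.simple i) (t, 0)).2 = _
  rw [ctjTheta_simple]
  show (0 : ZMod 2) + _ = _
  rw [zero_add]

private lemma ctjPhi_one (t : W) : ctjPhi cs 1 t = 0 := by
  show (ctjTheta cs 1 (t, 0)).2 = 0
  rw [map_one]
  rfl

/-- `ctjPhi (π ω)⁻¹ t` is the mod-2 count of `t` in the left inversion sequence of `ω`. -/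
private lemma ctjPhi_eq_sum_lis (ω : List B) (t : W) :
    ctjPhi cs (cs.wordProd ω)⁻¹ t
      = ((cs.leftInvSeq ω).map (fun u => if t = u then (1 : ZMod 2) else 0)).sum := by
  induction ω generalizing t with
  | nil => simp [ctjPhi_one]
  | cons i ω ih =>
    rw [cs.wordProd_cons, mul_inv_rev, cs.inv_simple]
    rw [ctjPhi_mul cs (cs.wordProd ω)⁻¹ (cs.simple i) t]
    rw [ctjPhi_simple]
    have hlis : cs.leftInvSeq (i :: ω)
        = cs.simple i :: List.map (⇑(MulAut.conj (cs.simple i))) (cs.leftInvSeq ω) := rfl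
    rw [hlis, List.map_cons, List.sum_cons, List.map_map]
    rw [ih (cs.simple i * t * (cs.simple i)⁻¹)]
    have hss : cs.simple i * cs.simple i = 1 := cs.simple_mul_simple_self i
    have hfn : ((fun u => if t = u then (1 : ZMod 2) else 0) ∘ ⇑(MulAut.conj (cs.simple i)))
        = fun u => if cs.simple i * t * (cs.simple i)⁻¹ = u then (1 : ZMod 2) else 0 := by
      funext u
      simp only [Function.comp_apply, MulAut.conj_apply]
      have hiff : (t = cs.simple i * u * (cs.simple i)⁻¹)
          ↔ (cs.simple i * t * (cs.simple i)⁻¹ = u) := by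
        rw [cs.inv_simple]
        constructor
        · intro h
          rw [h]
          calc cs.simple i * (cs.simple i * u * cs.simple i) * cs.simple i
              = (cs.simple i * cs.simple i) * u * (cs.simple i * cs.simple i) := by group
            _ = u := by rw [hss]; group
        · intro h
          rw [← h]
          calc t = (cs.simple i * cs.simple i) * t * (cs.simple i * cs.simple i) := by
                rw [hss]; group
            _ = cs.simple i * (cs.simple i * t * cs.simple i) * cs.simple i := by group
      exact if_congr hiff rfl rfl
    rw [hfn]

private lemma ctjPhi_reflection_self {t : W} (ht : cs.IsReflection t) :
    ctjPhi cs t t = 1 := by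
  obtain ⟨u, i, rfl⟩ := ht
  set s := cs.simple i with hs
  have hss : s * s = 1 := cs.simple_mul_simple_self i
  have h1 : ctjPhi cs (u * (s * u⁻¹)) (u * s * u⁻¹)
      = ctjPhi cs (s * u⁻¹) (u * s * u⁻¹)
        + ctjPhi cs u ((s * u⁻¹) * (u * s * u⁻¹) * (s * u⁻¹)⁻¹) :=
    ctjPhi_mul cs u (s * u⁻¹) (u * s * u⁻¹)
  have e0 : u * (s * u⁻¹) = u * s * u⁻¹ := by group
  rw [e0] at h1
  have e1 : (s * u⁻¹) * (u * s * u⁻¹) * (s * u⁻¹)⁻¹ = s * (s * (s)⁻¹) := by group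
  have e1' : s * (s * (s)⁻¹) = s := by group
  rw [e1, e1'] at h1
  have h2 : ctjPhi cs (s * u⁻¹) (u * s * u⁻¹)
      = ctjPhi cs u⁻¹ (u * s * u⁻¹)
        + ctjPhi cs s (u⁻¹ * (u * s * u⁻¹) * (u⁻¹)⁻¹) :=
    ctjPhi_mul cs s u⁻¹ (u * s * u⁻¹)
  have e2 : u⁻¹ * (u * s * u⁻¹) * (u⁻¹)⁻¹ = s := by group
  rw [e2] at h2
  have h3 : ctjPhi cs (u * u⁻¹) (u * s * u⁻¹)
      = ctjPhi cs u⁻¹ (u * s * u⁻¹)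
        + ctjPhi cs u (u⁻¹ * (u * s * u⁻¹) * (u⁻¹)⁻¹) :=
    ctjPhi_mul cs u u⁻¹ (u * s * u⁻¹)
  rw [e2, mul_inv_cancel, ctjPhi_one] at h3
  rw [h1, h2, ctjPhi_simple, if_pos rfl]
  calc ctjPhi cs u⁻¹ (u * s * u⁻¹) + 1 + ctjPhi cs u s
      = (ctjPhi cs u⁻¹ (u * s * u⁻¹) + ctjPhi cs u s) + 1 := by ring
    _ = 0 + 1 := by rw [← h3]
    _ = 1 := by ring

private lemma ctj_zmod2_cases (x : ZMod 2) : x = 0 ∨ x = 1 := by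
  have h : ∀ y : ZMod 2, y = 0 ∨ y = 1 := by decide
  exact h x

/-- If `ctjPhi w⁻¹ t = 1`, then `t` is a left inversion of `w`. -/
private lemma ctj_isLeftInversion_of_phi {w t : W} (h1 : ctjPhi cs w⁻¹ t = 1)
    (ht : cs.IsReflection t) : cs.length (t * w) < cs.length w := by
  obtain ⟨ω, hred, rfl⟩ := cs.exists_reduced_word' w
  rw [ctjPhi_eq_sum_lis] at h1
  have hmem : t ∈ cs.leftInvSeq ω := by
    by_contra hmem
    have hz : ((cs.leftInvSeq ω).map (fun u => if t = u then (1 : ZMod 2) else 0)).sum = 0 := by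
      apply List.sum_eq_zero
      intro x hx
      rw [List.mem_map] at hx
      obtain ⟨u, hu, rfl⟩ := hx
      rw [if_neg]
      rintro rfl
      exact hmem hu
    rw [hz] at h1
    exact absurd h1 (by decide)
  exact (cs.isLeftInversion_of_mem_leftInvSeq hred hmem).2

/-- A left inversion has phi-value 1. -/
private lemma ctjPhi_of_isLeftInversion {w t : W} (h : cs.IsLeftInversion w t) :
    ctjPhi cs w⁻¹ t = 1 := by
  obtain ⟨ht, hlen⟩ := h
  have hw : w⁻¹ = (t * w)⁻¹ * t := by
    rw [mul_inv_rev, ht.inv, mul_assoc, ht.mul_self, mul_one]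
  rw [hw, ctjPhi_mul, ctjPhi_reflection_self cs ht]
  have htt : t * t * t⁻¹ = t := by
    rw [ht.mul_self, one_mul, ht.inv]
  rw [htt]
  rcases ctj_zmod2_cases (ctjPhi cs (t * w)⁻¹ t) with h0 | hone
  · rw [h0]; ring
  · exfalso
    have hlt := ctj_isLeftInversion_of_phi cs hone ht
    rw [← mul_assoc, ht.mul_self, one_mul] at hlt
    omega

/-- Strong exchange: membership in the left inversion sequence of a reduced word. -/
private lemma ctj_mem_leftInvSeq {ω : List B} (hred : cs.IsReduced ω) {t : W}
    (h : cs.IsLeftInversion (cs.wordProd ω) t) : t ∈ cs.leftInvSeq ω := by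
  have h1 := ctjPhi_of_isLeftInversion cs h
  rw [ctjPhi_eq_sum_lis] at h1
  by_contra hmem
  have hz : ((cs.leftInvSeq ω).map (fun u => if t = u then (1 : ZMod 2) else 0)).sum = 0 := by
    apply List.sum_eq_zero
    intro x hx
    rw [List.mem_map] at hx
    obtain ⟨u, hu, rfl⟩ := hx
    rw [if_neg]
    rintro rfl
    exact hmem hu
  rw [hz] at h1
  exact absurd h1 (by decide)

/-- The exchange property. -/
private lemma ctj_exchange {ω : List B} (hred : cs.IsReduced ω) {t : W}
    (h : cs.IsLeftInversion (cs.wordProd ω) t) :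
    ∃ j < ω.length, t * cs.wordProd ω = cs.wordProd (ω.eraseIdx j) := by
  have hmem := ctj_mem_leftInvSeq cs hred h
  rw [List.mem_iff_getElem] at hmem
  obtain ⟨j, hj, hget⟩ := hmem
  have hj' : j < ω.length := by
    rw [cs.length_leftInvSeq] at hj
    exact hj
  refine ⟨j, hj', ?_⟩
  have hgd : (cs.leftInvSeq ω).getD j 1 = t := by
    rw [List.getD_eq_getElem _ _ hj]
    exact hget
  rw [← hgd]
  exact cs.getD_leftInvSeq_mul_wordProd ω j

private lemma ctj_cancel (i : B) (x v : W) :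
    (cs.simple i * x)⁻¹ * (cs.simple i * v) = x⁻¹ * v := by
  rw [mul_inv_rev, cs.inv_simple]
  calc x⁻¹ * cs.simple i * (cs.simple i * v)
      = x⁻¹ * (cs.simple i * cs.simple i) * v := by group
    _ = x⁻¹ * v := by rw [cs.simple_mul_simple_self]; group

private lemma ctj_rle_trans {a b c : W} (hab : cs.rle a b) (hbc : cs.rle b c) :
    cs.rle a c := by
  unfold CoxeterSystem.rle at hab hbc ⊢
  have h1 : cs.length (a⁻¹ * c) ≤ cs.length (a⁻¹ * b) + cs.length (b⁻¹ * c) := by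
    have htri := cs.length_mul_le (a⁻¹ * b) (b⁻¹ * c)
    rwa [show a⁻¹ * b * (b⁻¹ * c) = a⁻¹ * c from by group] at htri
  have h2 : cs.length c ≤ cs.length a + cs.length (a⁻¹ * c) := by
    have htri := cs.length_mul_le a (a⁻¹ * c)
    rwa [show a * (a⁻¹ * c) = c from by group] at htri
  omega

/-- The lifting lemma for the right weak order. -/
private lemma ctj_lift {x y : W} (i : B) (hxy : cs.rle x y)
    (hy : cs.length (cs.simple i * y) < cs.length y)
    (hx : cs.length x < cs.length (cs.simple i * x)) :
    cs.rle x (cs.simple i * y) := by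
  obtain ⟨α, hαred, hαx⟩ := cs.exists_reduced_word' x
  obtain ⟨β, hβred, hβ⟩ := cs.exists_reduced_word' (x⁻¹ * y)
  have hlα : α.length = cs.length x := by rw [hαx]; exact hαred.symm
  have hlβ : β.length = cs.length (x⁻¹ * y) := by rw [hβ]; exact hβred.symm
  have hπ : cs.wordProd (α ++ β) = y := by
    rw [cs.wordProd_append, ← hαx, ← hβ]; group
  have hred : cs.IsReduced (α ++ β) := by
    unfold CoxeterSystem.IsReduced
    rw [hπ, List.length_append, hlα, hlβ]
    exact hxy
  have hinv : cs.IsLeftInversion (cs.wordProd (α ++ β)) (cs.simple i) :=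
    ⟨cs.isReflection_simple i, by rw [hπ]; exact hy⟩
  have hmem := ctj_mem_leftInvSeq cs hred hinv
  rw [List.mem_iff_getElem] at hmem
  obtain ⟨j, hj, hget⟩ := hmem
  have hjlen : j < (α ++ β).length := by
    rwa [cs.length_leftInvSeq] at hj
  by_cases hjα : j < α.length
  · exfalso
    have htake : cs.leftInvSeq ((α ++ β).take α.length)
        = (cs.leftInvSeq (α ++ β)).take α.length := cs.leftInvSeq_take (α ++ β) α.length
    have htl : (α ++ β).take α.length = α := List.take_left
    rw [htl] at htake
    have hjα' : j < (cs.leftInvSeq α).length := by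
      rw [cs.length_leftInvSeq]; exact hjα
    have hjα'' : j < ((cs.leftInvSeq (α ++ β)).take α.length).length := by
      rw [← htake]; exact hjα'
    have hgα : (cs.leftInvSeq α)[j]'hjα' = cs.simple i := by
      calc (cs.leftInvSeq α)[j]'hjα'
          = ((cs.leftInvSeq (α ++ β)).take α.length)[j]'hjα'' :=
            List.getElem_of_eq htake hjα'
        _ = (cs.leftInvSeq (α ++ β))[j]'hj := List.getElem_take
        _ = cs.simple i := hget
    have hmemα : cs.simple i ∈ cs.leftInvSeq α := by
      rw [← hgα]
      exact List.getElem_mem _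
    have hlt := (cs.isLeftInversion_of_mem_leftInvSeq hαred hmemα).2
    rw [← hαx] at hlt
    omega
  · have hjβ : j - α.length < β.length := by
      rw [List.length_append] at hjlen
      omega
    have herase : (α ++ β).eraseIdx j = α ++ β.eraseIdx (j - α.length) :=
      List.eraseIdx_append_of_length_le (le_of_not_gt hjα) β
    have hgd : (cs.leftInvSeq (α ++ β)).getD j 1 = cs.simple i := by
      rw [List.getD_eq_getElem _ _ hj]
      exact hget
    have hex := cs.getD_leftInvSeq_mul_wordProd (α ++ β) j
    rw [hgd, hπ, herase, cs.wordProd_append, ← hαx] at hex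
    have hxe : x⁻¹ * (cs.simple i * y) = cs.wordProd (β.eraseIdx (j - α.length)) := by
      rw [hex]; group
    have hc : cs.length (x⁻¹ * (cs.simple i * y)) ≤ (β.eraseIdx (j - α.length)).length := by
      rw [hxe]
      exact cs.length_wordProd_le _
    have hle : (β.eraseIdx (j - α.length)).length + 1 = β.length :=
      List.length_eraseIdx_add_one hjβ
    have htri : cs.length (cs.simple i * y)
        ≤ cs.length x + cs.length (x⁻¹ * (cs.simple i * y)) := by
      have h2 := cs.length_mul_le x (x⁻¹ * (cs.simple i * y))
      rwa [show x * (x⁻¹ * (cs.simple i * y)) = cs.simple i * y from by group] at h2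
    have hy1 : cs.length (cs.simple i * y) + 1 = cs.length y := by
      have := cs.length_simple_mul y i
      omega
    unfold CoxeterSystem.rle at hxy ⊢
    omega

private lemma ctj_simple_length_pos (i : B) (w : W) :
    0 < cs.length (w⁻¹ * (cs.simple i * w)) := by
  by_contra hz
  push_neg at hz
  have h0 : cs.length (w⁻¹ * (cs.simple i * w)) = 0 := by omega
  have he : w⁻¹ * (cs.simple i * w) = 1 := cs.length_eq_zero_iff.mp h0
  have h2 : cs.simple i * w = 1 * w := by
    have h3 : w * (w⁻¹ * (cs.simple i * w)) = w * 1 := by rw [he]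
    rw [mul_one] at h3
    rw [show w * (w⁻¹ * (cs.simple i * w)) = cs.simple i * w from by group] at h3
    rw [h3, one_mul]
  have h4 : cs.simple i = 1 := mul_right_cancel h2
  have h5 := cs.length_simple i
  rw [h4, cs.length_one] at h5
  omega

/-- Transport of joins along a simple reflection. -/
private lemma ctj_join_step {X : Set W} (hne : X.Nonempty) {y : W} (hj : cs.IsJoin X y) (i : B)
    (hX : ∀ x ∈ X, cs.length x < cs.length (cs.simple i * x)) :
    cs.length y < cs.length (cs.simple i * y) ∧
      cs.IsJoin ((fun x => cs.simple i * x) '' X) (cs.simple i * y) := by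
  have hylt : cs.length y < cs.length (cs.simple i * y) := by
    by_contra hcon
    have hlt : cs.length (cs.simple i * y) < cs.length y := by
      have := cs.length_simple_mul_ne y i
      omega
    have hub : ∀ x ∈ X, cs.rle x (cs.simple i * y) :=
      fun x hx => ctj_lift cs i (hj.1 x hx) hlt (hX x hx)
    have hyy := hj.2 _ hub
    unfold CoxeterSystem.rle at hyy
    have hpos := ctj_simple_length_pos cs i y
    omega
  refine ⟨hylt, ?_, ?_⟩
  · rintro x' ⟨x, hx, rfl⟩
    have hx1 : cs.length (cs.simple i * x) = cs.length x + 1 := by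
      have := cs.length_simple_mul x i
      have := hX x hx
      omega
    have hy1 : cs.length (cs.simple i * y) = cs.length y + 1 := by
      have := cs.length_simple_mul y i
      omega
    unfold CoxeterSystem.rle
    rw [ctj_cancel, hx1, hy1]
    have hr := hj.1 x hx
    unfold CoxeterSystem.rle at hr
    omega
  · intro u hu
    have hy1 : cs.length (cs.simple i * y) = cs.length y + 1 := by
      have := cs.length_simple_mul y i
      omega
    obtain ⟨x₀, hx₀⟩ := hne
    have hsx₀ : cs.rle (cs.simple i) (cs.simple i * x₀) := by
      unfold CoxeterSystem.rle
      rw [cs.length_simple]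
      rw [show (cs.simple i)⁻¹ * (cs.simple i * x₀) = x₀ from by
        rw [cs.inv_simple, ← mul_assoc, cs.simple_mul_simple_self, one_mul]]
      have := cs.length_simple_mul x₀ i
      have := hX x₀ hx₀
      omega
    have hsu : cs.rle (cs.simple i) u := ctj_rle_trans cs hsx₀ (hu _ ⟨x₀, hx₀, rfl⟩)
    have hsu' : cs.length u = 1 + cs.length (cs.simple i * u) := by
      unfold CoxeterSystem.rle at hsu
      rw [cs.length_simple, cs.inv_simple] at hsu
      exact hsu
    have hxu : ∀ x ∈ X, cs.rle x (cs.simple i * u) := by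
      intro x hx
      have h1 := hu _ ⟨x, hx, rfl⟩
      unfold CoxeterSystem.rle at h1 ⊢
      simp only at h1
      rw [show (cs.simple i * x)⁻¹ * u = x⁻¹ * ((cs.simple i)⁻¹ * u) from by group] at h1
      rw [cs.inv_simple] at h1
      have hx1 : cs.length (cs.simple i * x) = cs.length x + 1 := by
        have := cs.length_simple_mul x i
        have := hX x hx
        omega
      omega
    have hyu := hj.2 _ hxu
    unfold CoxeterSystem.rle at hyu ⊢
    rw [show (cs.simple i * y)⁻¹ * u = y⁻¹ * ((cs.simple i)⁻¹ * u) from by group]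
    rw [cs.inv_simple, hy1]
    omega

private lemma ctj_main : ∀ n : ℕ, ∀ X : Set W, X.Nonempty → ∀ y v : W, cs.IsJoin X y →
    cs.length v ≤ n → (∀ x ∈ X, cs.length (x⁻¹ * v) = cs.length x + cs.length v) →
    cs.length (y⁻¹ * v) = cs.length y + cs.length v := by
  intro n
  induction n with
  | zero =>
    intro X hne y v hj hv hX
    have hv1 : v = 1 := cs.length_eq_zero_iff.mp (Nat.le_zero.mp hv)
    rw [hv1, mul_one, cs.length_inv, cs.length_one]
    omega
  | succ n ih =>
    intro X hne y v hj hv hX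
    by_cases hv1 : v = 1
    · rw [hv1, mul_one, cs.length_inv, cs.length_one]
      omega
    · obtain ⟨i, hi⟩ := cs.exists_leftDescent_of_ne_one hv1
      have hi' : cs.length (cs.simple i * v) < cs.length v := hi
      have hlv : cs.length (cs.simple i * v) + 1 = cs.length v := by
        have := cs.length_simple_mul v i
        omega
      have hvv : v = cs.simple i * (cs.simple i * v) := by
        rw [← mul_assoc, cs.simple_mul_simple_self, one_mul]
      have hXlt : ∀ x ∈ X, cs.length x < cs.length (cs.simple i * x) := by
        intro x hx
        by_contra hcon
        have h1 : cs.length (cs.simple i * x) + 1 = cs.length x := by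
          have := cs.length_simple_mul x i
          omega
        have h2 : cs.length (x⁻¹ * v)
            ≤ cs.length (cs.simple i * x) + cs.length (cs.simple i * v) := by
          have htri := cs.length_mul_le ((cs.simple i * x)⁻¹) (cs.simple i * v)
          rw [ctj_cancel, cs.length_inv] at htri
          exact htri
        have := hX x hx
        omega
      obtain ⟨hylt, hjoin'⟩ := ctj_join_step cs hne hj i hXlt
      have hy1 : cs.length (cs.simple i * y) = cs.length y + 1 := by
        have := cs.length_simple_mul y i
        omega
      have hX' : ∀ x' ∈ (fun x => cs.simple i * x) '' X,
          cs.length (x'⁻¹ * (cs.simple i * v)) = cs.length x' + cs.length (cs.simple i * v) := by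
        rintro x' ⟨x, hx, rfl⟩
        rw [ctj_cancel]
        have hx1 : cs.length (cs.simple i * x) = cs.length x + 1 := by
          have := cs.length_simple_mul x i
          have := hXlt x hx
          omega
        rw [hx1, hX x hx]
        omega
      have hne' : ((fun x => cs.simple i * x) '' X).Nonempty := hne.image _
      have hv'n : cs.length (cs.simple i * v) ≤ n := by omega
      have hmain := ih _ hne' _ (cs.simple i * v) hjoin' hv'n hX'
      rw [ctj_cancel, hy1] at hmain
      omega

end CTJAux


/-- If `y` is the join of a bounded set `X` in the right weak order, then
`T(y⁻¹) = ⋂_{x ∈ X} T(x⁻¹)`. -/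
theorem coneType_join (cs : CoxeterSystem M W) (X : Set W) (y : W)
    (h : cs.IsJoin X y) :
    cs.coneType y⁻¹ = ⋂ x ∈ X, cs.coneType x⁻¹ := by
  ext v
  simp only [Set.mem_iInter, CoxeterSystem.coneType, Set.mem_setOf_eq]
  constructor
  · intro hv x hx
    rw [cs.length_inv] at hv ⊢
    have hr := h.1 x hx
    unfold CoxeterSystem.rle at hr
    have t1 : cs.length (y⁻¹ * v) ≤ cs.length (x⁻¹ * y) + cs.length (x⁻¹ * v) := by
      have htri := cs.length_mul_le ((x⁻¹ * y)⁻¹) (x⁻¹ * v)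
      rwa [show (x⁻¹ * y)⁻¹ * (x⁻¹ * v) = y⁻¹ * v from by group, cs.length_inv] at htri
    have t2 : cs.length (x⁻¹ * v) ≤ cs.length x + cs.length v := by
      have htri := cs.length_mul_le x⁻¹ v
      rwa [cs.length_inv] at htri
    omega
  · intro hv
    rcases X.eq_empty_or_nonempty with rfl | hne
    · have h1 : cs.rle y 1 := h.2 1 (by simp)
      unfold CoxeterSystem.rle at h1
      rw [cs.length_one] at h1
      have hy0 : cs.length y = 0 := by omega
      have hy1 : y = 1 := cs.length_eq_zero_iff.mp hy0
      rw [hy1]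
      simp [cs.length_one]
    · have hX' : ∀ x ∈ X, cs.length (x⁻¹ * v) = cs.length x + cs.length v := by
        intro x hx
        have := hv x hx
        rwa [cs.length_inv] at this
      have hm := ctj_main cs (cs.length v) X hne y v h le_rfl hX'
      rw [cs.length_inv]
      exact hm
end

section
/- Let (W,S) be a Coxeter system, s,t ∈ S distinct with m(s,t) < ∞, and suppose the subgroup W' = ⟨s,t⟩ is a proper standard parabolic subgroup of W. Let β ∈ Φ⁺_{W'} be a positive root of W' and let x ∈ W with β ∈ Φ¹(x). Write x = x_J · x^J with x_J ∈ W' and x^J having no left descents in {s,t}. Then β ∈ Φ¹(x_J). -/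
open CoxeterSystem

variable {B W : Type*} [Group W] {M : CoxeterMatrix B}

namespace SEAux

open List CoxeterSystem

open scoped Classical

variable {B W : Type*} [Group W] {M : CoxeterMatrix B} (cs : CoxeterSystem M W)

local prefix:100 "s" => cs.simple
local prefix:100 "π" => cs.wordProd
local prefix:100 "ℓ" => cs.length

/-- sign character of a list element -/
noncomputable def chi (t x : W) : ℤˣ := if x = t then -1 else 1

lemma chi_eq_neg_one {t x : W} (h : x = t) : chi t x = -1 := by simp [chi, h]

lemma chi_eq_one {t x : W} (h : x ≠ t) : chi t x = 1 := by simp [chi, h]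

lemma chi_congr {t x t' x' : W} (h : (x = t) ↔ (x' = t')) : chi t x = chi t' x' := by
  unfold chi
  by_cases h1 : x = t
  · rw [if_pos h1, if_pos (h.mp h1)]
  · rw [if_neg h1, if_neg (fun hc => h1 (h.mpr hc))]

/-- the product of signs over the right inversion sequence -/
noncomputable def nu (t : W) (ω : List B) : ℤˣ := ((cs.rightInvSeq ω).map (chi t)).prod

lemma ris_cons (i : B) (ω : List B) :
    cs.rightInvSeq (i :: ω) = ((π ω)⁻¹ * s i * π ω) :: cs.rightInvSeq ω := rfl

lemma nu_nil (t : W) : nu cs t [] = 1 := by simp [nu]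

lemma nu_cons (t : W) (i : B) (ω : List B) :
    nu cs t (i :: ω) = chi t ((π ω)⁻¹ * s i * π ω) * nu cs t ω := by
  simp [nu, ris_cons]

lemma ris_append (ω₁ ω₂ : List B) :
    cs.rightInvSeq (ω₁ ++ ω₂) =
      (cs.rightInvSeq ω₁).map (fun x => (π ω₂)⁻¹ * x * π ω₂) ++ cs.rightInvSeq ω₂ := by
  induction ω₁ with
  | nil => simp
  | cons a ω₁ ih =>
      rw [cons_append, ris_cons, ris_cons, ih, map_cons, cons_append]
      congr 1
      simp [wordProd_append, mul_assoc]

lemma nu_append (t : W) (ω₁ ω₂ : List B) :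
    nu cs t (ω₁ ++ ω₂) = nu cs (π ω₂ * t * (π ω₂)⁻¹) ω₁ * nu cs t ω₂ := by
  unfold nu
  rw [ris_append, map_append, prod_append, map_map]
  congr 2
  apply List.map_congr_left
  intro x _
  show chi t ((π ω₂)⁻¹ * x * π ω₂) = chi (π ω₂ * t * (π ω₂)⁻¹) x
  apply chi_congr
  constructor
  · intro h; rw [← h]; group
  · intro h; rw [h]; group

/-- the basic sign-flipping involution -/
noncomputable def fAux (i : B) : W × ℤˣ → W × ℤˣ :=
  fun p => (s i * p.1 * s i, if p.1 = s i then -p.2 else p.2)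

lemma fAux_invol (i : B) : Function.Involutive (fAux cs i) := by
  rintro ⟨t, ε⟩
  by_cases h : t = s i
  · subst h; simp [fAux]
  · have h2 : s i * t * s i ≠ s i := by
      intro hc
      apply h
      have := congrArg (fun z => s i * z * s i) hc
      simpa [mul_assoc] using this
    have h3 : ¬ t * s i = 1 := by
      intro hc
      apply h
      have := eq_inv_of_mul_eq_one_left hc
      rwa [cs.inv_simple] at this
    simp [fAux, h, h2, h3, mul_assoc]

noncomputable def fPerm (i : B) : Equiv.Perm (W × ℤˣ) := (fAux_invol cs i).toPerm

lemma fPerm_apply (i : B) (p : W × ℤˣ) : fPerm cs i p = fAux cs i p := rfl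

noncomputable def F (ω : List B) : Equiv.Perm (W × ℤˣ) := (ω.map (fPerm cs)).prod

lemma F_nil : F cs ([] : List B) = 1 := by simp [F]

lemma F_cons (i : B) (ω : List B) : F cs (i :: ω) = fPerm cs i * F cs ω := by
  simp [F]

lemma F_apply (ω : List B) (t : W) (ε : ℤˣ) :
    F cs ω (t, ε) = (π ω * t * (π ω)⁻¹, ε * nu cs t ω) := by
  induction ω generalizing ε with
  | nil => simp [F_nil, nu_nil]
  | cons i ω ih =>
      rw [F_cons, Equiv.Perm.mul_apply, ih, fPerm_apply, fAux, nu_cons]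
      have hiff : (π ω * t * (π ω)⁻¹ = s i) ↔ ((π ω)⁻¹ * s i * π ω = t) := by
        constructor
        · intro h; rw [← h]; group
        · intro h; rw [← h]; group
      by_cases hc : (π ω)⁻¹ * s i * π ω = t
      · rw [if_pos (hiff.mpr hc), chi_eq_neg_one hc, Prod.mk.injEq]
        refine ⟨?_, ?_⟩
        · simp [wordProd_cons, mul_assoc]
        · simp [mul_comm, mul_left_comm]
      · rw [if_neg (fun h => hc (hiff.mp h)), chi_eq_one hc, Prod.mk.injEq]
        refine ⟨?_, ?_⟩
        · simp [wordProd_cons, mul_assoc]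
        · simp

/-- `gSeq L` is the new element appearing in the right inversion sequence of the
alternating word of length `L+1`. -/
def gSeq (i i' : B) (L : ℕ) : W :=
  (π (alternatingWord i i' L))⁻¹ * s (if Even L then i' else i) * π (alternatingWord i i' L)

lemma gSeq_eq (i i' : B) (L : ℕ) :
    gSeq cs i i' L = (π (alternatingWord i i' L))⁻¹ * π (alternatingWord i i' (L + 1)) := by
  rw [gSeq, alternatingWord_succ', wordProd_cons, mul_assoc]

lemma ris_alt_succ (i i' : B) (L : ℕ) :
    cs.rightInvSeq (alternatingWord i i' (L + 1)) =
      gSeq cs i i' L :: cs.rightInvSeq (alternatingWord i i' L) := by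
  rw [alternatingWord_succ', ris_cons]
  rfl

lemma nu_alt (t : W) (i i' : B) (n : ℕ) :
    nu cs t (alternatingWord i i' n) =
      ((List.range n).map (fun L => chi t (gSeq cs i i' L))).prod := by
  induction n with
  | zero => simp [show alternatingWord i i' 0 = [] from rfl, nu_nil]
  | succ n ih =>
      have : nu cs t (alternatingWord i i' (n + 1)) =
          chi t (gSeq cs i i' n) * nu cs t (alternatingWord i i' n) := by
        unfold nu
        rw [ris_alt_succ, map_cons, prod_cons]
      rw [this, ih, List.range_succ, map_append, prod_append]
      simp [mul_comm]

/-- key dihedral identity -/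
lemma prod_alt_add (i i' : B) (L : ℕ) :
    π (alternatingWord i i' (L + M i i')) =
      π (alternatingWord i i' (M i i')) * π (alternatingWord i i' L) := by
  set m := M i i' with hm
  set P : W := s i * s i' with hPdef
  have hP : P ^ m = 1 := cs.simple_mul_simple_pow i i'
  have hbb : s i' * s i' = 1 := cs.simple_mul_simple_self i'
  have hmove : ∀ n : ℕ, s i' * P ^ n = (P ^ n)⁻¹ * s i' := by
    intro n
    have h1 : SemiconjBy (s i') P P⁻¹ := by
      show s i' * P = P⁻¹ * s i'
      rw [hPdef]
      simp [mul_assoc]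
    have := h1.pow_right n
    rw [inv_pow] at this
    exact this
  rcases Nat.even_or_odd m with ⟨e, he⟩ | ⟨e, he⟩ <;>
    rcases Nat.even_or_odd L with ⟨k, hk⟩ | ⟨k, hk⟩
  · -- m = e + e, L = k + k
    have h1 : (L + m) / 2 = k + e := by omega
    have h2 : m / 2 = e := by omega
    have h3 : L / 2 = k := by omega
    have hEv1 : Even (L + m) := ⟨k + e, by omega⟩
    have hEv2 : Even m := ⟨e, he⟩
    have hEv3 : Even L := ⟨k, hk⟩
    rw [prod_alternatingWord_eq_mul_pow, prod_alternatingWord_eq_mul_pow,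
      prod_alternatingWord_eq_mul_pow, ← hPdef, h1, h2, h3,
      if_pos hEv1, if_pos hEv2, if_pos hEv3]
    rw [one_mul, one_mul, one_mul, ← pow_add, Nat.add_comm e k]
  · -- m = e + e, L = 2k + 1
    have h1 : (L + m) / 2 = k + e := by omega
    have h2 : m / 2 = e := by omega
    have h3 : L / 2 = k := by omega
    have hEv1 : ¬ Even (L + m) := by rintro ⟨r, hr⟩; omega
    have hEv2 : Even m := ⟨e, he⟩
    have hEv3 : ¬ Even L := by rintro ⟨r, hr⟩; omega
    have hinv : (P ^ e)⁻¹ = P ^ e :=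
      inv_eq_of_mul_eq_one_right (by rw [← pow_add, show e + e = m by omega]; exact hP)
    rw [prod_alternatingWord_eq_mul_pow, prod_alternatingWord_eq_mul_pow,
      prod_alternatingWord_eq_mul_pow, ← hPdef, h1, h2, h3,
      if_neg hEv1, if_pos hEv2, if_neg hEv3]
    rw [one_mul]
    have h4 : P ^ e * (s i' * P ^ e) = s i' := by
      rw [hmove e, ← mul_assoc, mul_inv_cancel, one_mul]
    have h5 : P ^ e * s i' = s i' * (P ^ e)⁻¹ := by
      have := congrArg (fun z => z * (P ^ e)⁻¹) h4
      simpa only [mul_assoc, mul_inv_cancel, mul_one] using this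
    have hcomm : P ^ e * s i' = s i' * P ^ e := by rw [h5, hinv]
    rw [← mul_assoc, hcomm, mul_assoc, ← pow_add, Nat.add_comm e k]
  · -- m = 2e + 1, L = k + k
    have h1 : (L + m) / 2 = k + e := by omega
    have h2 : m / 2 = e := by omega
    have h3 : L / 2 = k := by omega
    have hEv1 : ¬ Even (L + m) := by rintro ⟨r, hr⟩; omega
    have hEv2 : ¬ Even m := by rintro ⟨r, hr⟩; omega
    have hEv3 : Even L := ⟨k, hk⟩
    rw [prod_alternatingWord_eq_mul_pow, prod_alternatingWord_eq_mul_pow,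
      prod_alternatingWord_eq_mul_pow, ← hPdef, h1, h2, h3,
      if_neg hEv1, if_neg hEv2, if_pos hEv3]
    rw [one_mul, mul_assoc, ← pow_add, Nat.add_comm e k]

  · -- m = 2e + 1, L = 2k + 1
    have h1 : (L + m) / 2 = k + e + 1 := by omega
    have h2 : m / 2 = e := by omega
    have h3 : L / 2 = k := by omega
    have hEv1 : Even (L + m) := ⟨k + e + 1, by omega⟩
    have hEv2 : ¬ Even m := by rintro ⟨r, hr⟩; omega
    have hEv3 : ¬ Even L := by rintro ⟨r, hr⟩; omega
    have hinv : (P ^ e)⁻¹ = P ^ (e + 1) :=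
      inv_eq_of_mul_eq_one_right (by rw [← pow_add, show e + (e + 1) = m by omega]; exact hP)
    rw [prod_alternatingWord_eq_mul_pow, prod_alternatingWord_eq_mul_pow,
      prod_alternatingWord_eq_mul_pow, ← hPdef, h1, h2, h3,
      if_pos hEv1, if_neg hEv2, if_neg hEv3]
    rw [one_mul]
    have h4 : P ^ e * (s i' * P ^ e) = s i' := by
      rw [hmove e, ← mul_assoc, mul_inv_cancel, one_mul]
    have h5 : P ^ e * s i' = s i' * (P ^ e)⁻¹ := by
      have := congrArg (fun z => z * (P ^ e)⁻¹) h4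
      simpa only [mul_assoc, mul_inv_cancel, mul_one] using this
    symm
    calc (s i' * P ^ e) * (s i' * P ^ k) = s i' * (P ^ e * s i') * P ^ k := by group
    _ = s i' * (s i' * (P ^ e)⁻¹) * P ^ k := by rw [h5]
    _ = (P ^ e)⁻¹ * P ^ k := by rw [← mul_assoc, hbb, one_mul]
    _ = P ^ (e + 1) * P ^ k := by rw [hinv]
    _ = P ^ (k + e + 1) := by rw [← pow_add]; congr 1; omega

lemma gSeq_add (i i' : B) (L : ℕ) : gSeq cs i i' (L + M i i') = gSeq cs i i' L := by
  rw [gSeq_eq, gSeq_eq, show L + M i i' + 1 = (L + 1) + M i i' by omega,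
    prod_alt_add, prod_alt_add, mul_inv_rev]
  group

lemma nu_alt_even (t : W) (i i' : B) :
    nu cs t (alternatingWord i i' (2 * M i i')) = 1 := by
  rw [nu_alt, two_mul, List.range_add, map_append, prod_append, map_map]
  have : (List.range (M i i')).map ((fun L => chi t (gSeq cs i i' L)) ∘ (fun x => M i i' + x)) =
      (List.range (M i i')).map (fun L => chi t (gSeq cs i i' L)) := by
    apply List.map_congr_left
    intro L _
    simp only [Function.comp_apply]
    rw [show M i i' + L = L + M i i' by omega, gSeq_add]
  rw [this]
  exact Int.units_mul_self _

lemma liftable : M.IsLiftable (fun i => fPerm cs i) := by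
  intro i i'
  have hFpow : ∀ n : ℕ, (fPerm cs i * fPerm cs i') ^ n = F cs (alternatingWord i i' (2 * n)) := by
    intro n
    induction n with
    | zero => simp [alternatingWord, F_nil]
    | succ n ih =>
        have hOdd : ¬ Even (2 * n + 1) := by rintro ⟨r, hr⟩; omega
        have hEv : Even (2 * n) := ⟨n, by omega⟩
        have halt : alternatingWord i i' (2 * (n + 1)) = i :: i' :: alternatingWord i i' (2 * n) := by
          rw [show 2 * (n + 1) = (2 * n + 1) + 1 by omega, alternatingWord_succ',
            alternatingWord_succ']
          rw [if_neg hOdd, if_pos hEv]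
        rw [halt, F_cons, F_cons, ← ih, pow_succ']
        rw [mul_assoc]
  rw [hFpow]
  apply Equiv.ext
  rintro ⟨t, ε⟩
  rw [F_apply]
  have hEv : Even (2 * M i i') := ⟨M i i', by omega⟩
  have hprod : π (alternatingWord i i' (2 * M i i')) = 1 := by
    rw [prod_alternatingWord_eq_mul_pow, if_pos hEv,
      one_mul, show 2 * M i i' / 2 = M i i' by omega]
    exact cs.simple_mul_simple_pow i i'
  rw [hprod, nu_alt_even]
  simp

lemma F_eq (ω : List B) :
    (cs.lift ⟨fun i => fPerm cs i, liftable cs⟩) (π ω) = F cs ω := by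
  induction ω with
  | nil => simp [F_nil]
  | cons a ω ih =>
      rw [wordProd_cons, map_mul, ih, F_cons, cs.lift_apply_simple]

lemma nu_eq_of_prod_eq {ω₁ ω₂ : List B} (h : π ω₁ = π ω₂) (t : W) :
    nu cs t ω₁ = nu cs t ω₂ := by
  have h1 : F cs ω₁ = F cs ω₂ := by
    rw [← F_eq, ← F_eq, h]
  have h2 := congrArg (fun (ψ : Equiv.Perm (W × ℤˣ)) => (ψ (t, 1)).2) h1
  simpa [F_apply] using h2

lemma pal_prod (φ : List B) (r : B) :
    π (φ ++ r :: φ.reverse) = π φ * s r * (π φ)⁻¹ := by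
  rw [wordProd_append, wordProd_cons, wordProd_reverse, ← mul_assoc]

lemma nu_palindrome (φ : List B) (r : B) :
    nu cs (π φ * s r * (π φ)⁻¹) (φ ++ r :: φ.reverse) = -1 := by
  induction φ with
  | nil => simp [nu_cons, nu_nil, chi_eq_neg_one]
  | cons a φ ih =>
      set t' : W := π φ * s r * (π φ)⁻¹ with ht'def
      have ht' : cs.IsReflection t' := ⟨π φ, r, rfl⟩
      set σ : List B := φ ++ r :: φ.reverse with hσdef
      have hσprod : π σ = t' := pal_prod cs φ r
      have hlist : (a :: φ) ++ r :: (a :: φ).reverse = a :: (σ ++ [a]) := by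
        simp [hσdef]
      have htt' : π (a :: φ) * s r * (π (a :: φ))⁻¹ = s a * t' * s a := by
        rw [wordProd_cons, mul_inv_rev, cs.inv_simple, ht'def]
        group
      rw [hlist, htt', nu_cons, nu_append]
      have h1 : π [a] * (s a * t' * s a) * (π [a])⁻¹ = t' := by
        rw [wordProd_singleton, cs.inv_simple]
        simp [mul_assoc]
      rw [h1, ih]
      have hπσa : π (σ ++ [a]) = t' * s a := by
        rw [wordProd_append, wordProd_singleton, hσprod]
      have hnua : nu cs (s a * t' * s a) [a] = chi (s a * t' * s a) (s a) := by
        simp [nu, chi]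
      rw [hπσa, hnua]
      have hq : (t' * s a)⁻¹ * s a * (t' * s a) = s a * (t' * (s a * (t' * s a))) := by
        rw [mul_inv_rev, cs.inv_simple, ht'.inv]
        group
      rw [hq]
      by_cases hta : t' = s a
      · rw [hta]
        have e1 : s a * (s a * (s a * (s a * s a))) = s a := by
          simp [← mul_assoc]
        have e2 : s a * s a * s a = s a := by
          simp
        rw [e1, e2, chi_eq_neg_one rfl]
        norm_num
      · have hne1 : s a * (t' * (s a * (t' * s a))) ≠ s a * t' * s a := by
          intro hc
          apply hta
          have h9 := hc
          simp only [← mul_assoc] at h9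
          -- h9 : s a * t' * s a * t' * s a = s a * t' * s a
          have h10 : (s a * t' * s a) * (t' * s a) = (s a * t' * s a) * 1 := by
            rw [mul_one, ← mul_assoc]
            exact h9
          have hc4 : t' * s a = 1 := mul_left_cancel h10
          have h11 : t' = (s a)⁻¹ := eq_inv_of_mul_eq_one_left hc4
          rwa [cs.inv_simple] at h11
        have hne2 : (s a : W) ≠ s a * t' * s a := by
          intro hc
          apply hta
          have h9 := congrArg (fun z => s a * z * s a) hc
          simp only [mul_assoc] at h9
          simp at h9
          exact h9.symm
        rw [chi_eq_one hne1, chi_eq_one hne2]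
        norm_num

lemma nu_eq_one_of_not_mem {t : W} {ω : List B} (h : t ∉ cs.rightInvSeq ω) :
    nu cs t ω = 1 := by
  apply List.prod_eq_one
  intro y hy
  obtain ⟨x, hx, rfl⟩ := List.mem_map.mp hy
  exact chi_eq_one (fun hc => h (hc ▸ hx))

/-- Strong exchange: a right inversion of `π ω` belongs to the right inversion
sequence of `ω`. -/
lemma mem_ris_of_isRightInversion {ω : List B} (hred : cs.IsReduced ω) {t : W}
    (h : cs.IsRightInversion (π ω) t) : t ∈ cs.rightInvSeq ω := by
  obtain ⟨htrefl, hlt⟩ := h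
  obtain ⟨p, r, rfl⟩ := htrefl
  set t : W := p * s r * p⁻¹ with htdef
  have htrefl : cs.IsReflection t := ⟨p, r, rfl⟩
  obtain ⟨φ, hφ⟩ := cs.wordProd_surjective p
  obtain ⟨ψ, hψred, hψ⟩ := cs.exists_reduced_word' (π ω * t)
  set τ : List B := φ ++ r :: φ.reverse with hτdef
  have hτprod : π τ = t := by rw [hτdef, pal_prod, hφ]
  have hωprod : π (ψ ++ τ) = π ω := by
    rw [wordProd_append, hτprod, ← hψ, mul_assoc, htrefl.mul_self, mul_one]
  have hnu : nu cs t ω = -1 := by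
    rw [← nu_eq_of_prod_eq cs hωprod, nu_append, hτprod]
    have harg : t * t * t⁻¹ = t := by
      rw [htrefl.mul_self, one_mul, htrefl.inv]
    rw [harg]
    have hnot : t ∉ cs.rightInvSeq ψ := by
      intro hmem
      have := cs.isRightInversion_of_mem_rightInvSeq hψred hmem
      rw [← hψ] at this
      have h2 := this.2
      rw [mul_assoc, htrefl.mul_self, mul_one] at h2
      omega
    rw [nu_eq_one_of_not_mem cs hnot, one_mul, hτdef]
    have : π φ * s r * (π φ)⁻¹ = t := by rw [hφ]
    rw [← this]
    exact nu_palindrome cs φ r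
  by_contra hmem
  rw [nu_eq_one_of_not_mem cs hmem] at hnu
  have h := congrArg (fun u : ℤˣ => (u : ℤ)) hnu
  norm_num at h

lemma exchange_right {ω : List B} (hred : cs.IsReduced ω) {t : W}
    (h : cs.IsRightInversion (π ω) t) :
    ∃ q < ω.length, π ω * t = π (ω.eraseIdx q) := by
  have hmem := mem_ris_of_isRightInversion cs hred h
  obtain ⟨q, hq, hget⟩ := List.getElem_of_mem hmem
  have hq' : q < ω.length := by
    rwa [cs.length_rightInvSeq] at hq
  refine ⟨q, hq', ?_⟩
  have hgetD : (cs.rightInvSeq ω).getD q 1 = t := by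
    rw [List.getD_eq_getElem _ 1 hq, hget]
  rw [← hgetD]
  exact cs.wordProd_mul_getD_rightInvSeq ω q

lemma exchange_left {ω : List B} (hred : cs.IsReduced ω) {t : W}
    (h : cs.IsLeftInversion (π ω) t) :
    ∃ q < ω.length, t * π ω = π (ω.eraseIdx q) := by
  have hrev : cs.IsReduced ω.reverse := (cs.isReduced_reverse_iff ω).mpr hred
  have hinv : cs.IsRightInversion (π ω.reverse) t := by
    rw [cs.wordProd_reverse]
    exact (cs.isRightInversion_inv_iff).mpr h
  have hmem := mem_ris_of_isRightInversion cs hrev hinv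
  rw [cs.rightInvSeq_reverse, List.mem_reverse] at hmem
  obtain ⟨q, hq, hget⟩ := List.getElem_of_mem hmem
  have hq' : q < ω.length := by
    rwa [cs.length_leftInvSeq] at hq
  refine ⟨q, hq', ?_⟩
  have hgetD : (cs.leftInvSeq ω).getD q 1 = t := by
    rw [List.getD_eq_getElem _ 1 hq, hget]
  rw [← hgetD]
  exact cs.getD_leftInvSeq_mul_wordProd ω q

/-- Deletion property. -/
lemma exists_shorter (ω : List B) (h : ¬ cs.IsReduced ω) :
    ∃ ω', ω'.Sublist ω ∧ ω'.length < ω.length ∧ π ω' = π ω := by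
  induction ω using List.reverseRecOn with
  | nil => exact absurd (by simp [CoxeterSystem.IsReduced]) h
  | append_singleton χ a ih =>
      have hπ : π (χ ++ [a]) = π χ * s a := by
        rw [wordProd_append, wordProd_singleton]
      by_cases hχ : cs.IsReduced χ
      · rcases cs.length_mul_simple (π χ) a with hup | hdown
        · exfalso
          apply h
          show ℓ (π (χ ++ [a])) = (χ ++ [a]).length
          rw [hπ, hup, show ℓ (π χ) = χ.length from hχ]
          simp
        · have hrinv : cs.IsRightInversion (π χ) (s a) :=
            ⟨cs.isReflection_simple a, by omega⟩
          obtain ⟨q, hq, heq⟩ := exchange_right cs hχ hrinv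
          refine ⟨χ.eraseIdx q, (List.eraseIdx_sublist χ q).trans (List.sublist_append_left χ [a]),
            ?_, ?_⟩
          · rw [List.length_eraseIdx, if_pos hq]
            simp
          · rw [hπ, ← heq]
      · obtain ⟨χ', hsub, hlen, hprod⟩ := ih hχ
        refine ⟨χ' ++ [a], hsub.append_right [a], ?_, ?_⟩
        · simp only [List.length_append, List.length_singleton]
          omega
        · rw [wordProd_append, wordProd_append, hprod]

lemma lettersClosure (i j : B) (ω : List B) (h : ∀ x ∈ ω, x = i ∨ x = j) :
    π ω ∈ Subgroup.closure {cs.simple i, cs.simple j} := by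
  induction ω with
  | nil => rw [wordProd_nil]; exact one_mem _
  | cons a ω ih =>
      rw [wordProd_cons]
      refine mul_mem ?_ (ih fun x hx => h x (List.mem_cons_of_mem _ hx))
      rcases h a (List.mem_cons_self (a := a) (l := ω)) with rfl | rfl
      · exact Subgroup.subset_closure (Set.mem_insert _ _)
      · exact Subgroup.subset_closure (Set.mem_insert_iff.mpr (Or.inr rfl))

lemma toWordJ (i j : B) (w : W) (hw : w ∈ Subgroup.closure {cs.simple i, cs.simple j}) :
    ∃ ω : List B, (∀ x ∈ ω, x = i ∨ x = j) ∧ π ω = w := by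
  induction hw using Subgroup.closure_induction with
  | mem x hx =>
      rcases Set.mem_insert_iff.mp hx with rfl | hx'
      · exact ⟨[i], by simp, by simp⟩
      · rw [Set.mem_singleton_iff.mp hx']
        exact ⟨[j], by simp, by simp⟩
  | one => exact ⟨[], by simp, by simp⟩
  | mul x y hx hy ihx ihy =>
      obtain ⟨ω₁, h₁, hp₁⟩ := ihx
      obtain ⟨ω₂, h₂, hp₂⟩ := ihy
      refine ⟨ω₁ ++ ω₂, ?_, ?_⟩
      · intro x hx
        rcases List.mem_append.mp hx with hx | hx
        · exact h₁ x hx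
        · exact h₂ x hx
      · rw [wordProd_append, hp₁, hp₂]
  | inv x hx ihx =>
      obtain ⟨ω, h₁, hp₁⟩ := ihx
      refine ⟨ω.reverse, ?_, ?_⟩
      · intro x hx
        exact h₁ x (List.mem_reverse.mp hx)
      · rw [wordProd_reverse, hp₁]

lemma reducedWordJ (i j : B) (w : W) (hw : w ∈ Subgroup.closure {cs.simple i, cs.simple j}) :
    ∃ ω : List B, cs.IsReduced ω ∧ (∀ x ∈ ω, x = i ∨ x = j) ∧ π ω = w := by
  obtain ⟨ω, hlet, hprod⟩ := toWordJ cs i j w hw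
  clear hw
  have : ∀ n (ω : List B), ω.length ≤ n → (∀ x ∈ ω, x = i ∨ x = j) →
      ∃ ω' : List B, cs.IsReduced ω' ∧ (∀ x ∈ ω', x = i ∨ x = j) ∧ π ω' = π ω := by
    intro n
    induction n with
    | zero =>
        intro ω hlen hlet
        rw [List.length_eq_zero_iff.mp (Nat.le_zero.mp hlen)]
        exact ⟨[], by simp [CoxeterSystem.IsReduced], by simp, rfl⟩
    | succ n ihn =>
        intro ω hlen hlet
        by_cases hred : cs.IsReduced ω
        · exact ⟨ω, hred, hlet, rfl⟩
        · obtain ⟨ω₁, hsub, hlen₁, hprod₁⟩ := exists_shorter cs ω hred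
          obtain ⟨ω', h1, h2, h3⟩ := ihn ω₁ (by omega)
            (fun x hx => hlet x (hsub.subset hx))
          exact ⟨ω', h1, h2, by rw [h3, hprod₁]⟩
  obtain ⟨ω', h1, h2, h3⟩ := this ω.length ω le_rfl hlet
  exact ⟨ω', h1, h2, by rw [h3, hprod]⟩

/-- Key lifting lemma: if `u` is of minimal length in its coset `W' u`, then lengths add. -/
lemma lenA (i j : B) (u : W)
    (hmin : ∀ c ∈ Subgroup.closure {cs.simple i, cs.simple j}, ℓ u ≤ ℓ (c * u)) :
    ∀ η : List B, cs.IsReduced η → (∀ x ∈ η, x = i ∨ x = j) →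
      ℓ (π η * u) = η.length + ℓ u := by
  intro η
  induction η with
  | nil => intro _ _; simp
  | cons k η' ih =>
      intro hred hlet
      have hη' : cs.IsReduced η' := by
        have := CoxeterSystem.IsReduced.drop hred 1
        simpa using this
      have ihη' := ih hη' (fun x hx => hlet x (List.mem_cons_of_mem _ hx))
      have hπ : π (k :: η') * u = s k * (π η' * u) := by
        rw [wordProd_cons, mul_assoc]
      rcases cs.length_simple_mul (π η' * u) k with hup | hdown
      · rw [hπ, hup, ihη']
        simp only [List.length_cons]
        omega
      · exfalso
        obtain ⟨ζ, hζred, hζ⟩ := cs.exists_reduced_word' u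
        have hω₀prod : π (η' ++ ζ) = π η' * u := by
          rw [wordProd_append, ← hζ]
        have hω₀red : cs.IsReduced (η' ++ ζ) := by
          show ℓ (π (η' ++ ζ)) = (η' ++ ζ).length
          rw [hω₀prod, ihη', List.length_append]
          congr 1
          rw [hζ]
          exact hζred
        have hinv : cs.IsLeftInversion (π (η' ++ ζ)) (s k) := by
          refine ⟨cs.isReflection_simple k, ?_⟩
          rw [hω₀prod]
          omega
        obtain ⟨q, hq, heq⟩ := exchange_left cs hω₀red hinv
        rcases lt_or_ge q η'.length with hqlt | hqge
        · rw [List.eraseIdx_append_of_lt_length hqlt ζ] at heq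
          rw [hω₀prod, wordProd_append] at heq
          have hkey : s k * π η' = π (η'.eraseIdx q) := by
            apply mul_right_cancel (b := u)
            rw [mul_assoc, heq, hζ]
          have hlen1 : ℓ (s k * π η') ≤ (η'.eraseIdx q).length := by
            rw [hkey]; exact cs.length_wordProd_le _
          rw [List.length_eraseIdx, if_pos hqlt] at hlen1
          have hlen2 : ℓ (π (k :: η')) = η'.length + 1 := by
            have h := hred
            simp only [CoxeterSystem.IsReduced, List.length_cons] at h
            exact h
          rw [wordProd_cons] at hlen2
          omega
        · rw [List.eraseIdx_append_of_length_le hqge ζ] at heq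
          set q' := q - η'.length with hq'def
          have hq' : q' < ζ.length := by
            rw [List.length_append] at hq
            omega
          rw [hω₀prod, wordProd_append, hζ] at heq
          have hc : (π η')⁻¹ * s k * π η' ∈ Subgroup.closure {cs.simple i, cs.simple j} := by
            refine mul_mem (mul_mem (inv_mem ?_) ?_) ?_
            · exact lettersClosure cs i j η' (fun x hx => hlet x (List.mem_cons_of_mem _ hx))
            · rcases hlet k (List.mem_cons_self (a := k) (l := η')) with rfl | rfl
              · exact Subgroup.subset_closure (Set.mem_insert _ _)
              · exact Subgroup.subset_closure (Set.mem_insert_iff.mpr (Or.inr rfl))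
            · exact lettersClosure cs i j η' (fun x hx => hlet x (List.mem_cons_of_mem _ hx))
          have hcu : ((π η')⁻¹ * s k * π η') * u = π (ζ.eraseIdx q') := by
            rw [hζ]
            calc ((π η')⁻¹ * s k * π η') * π ζ = (π η')⁻¹ * (s k * (π η' * π ζ)) := by group
            _ = (π η')⁻¹ * (π η' * π (ζ.eraseIdx q')) := by rw [heq]
            _ = π (ζ.eraseIdx q') := by rw [← mul_assoc, inv_mul_cancel, one_mul]
          have hminc := hmin _ hc
          rw [hcu] at hminc
          have h5 : ℓ (π (ζ.eraseIdx q')) ≤ (ζ.eraseIdx q').length := cs.length_wordProd_le _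
          rw [List.length_eraseIdx, if_pos hq'] at h5
          have h6 : ℓ u = ζ.length := by rw [hζ]; exact hζred
          omega

lemma lenAdd (i j : B) (b : W) (hb1 : ¬ cs.IsLeftDescent b i) (hb2 : ¬ cs.IsLeftDescent b j)
    (c : W) (hc : c ∈ Subgroup.closure {cs.simple i, cs.simple j}) :
    ℓ (c * b) = ℓ c + ℓ b := by
  set Scl := Subgroup.closure {cs.simple i, cs.simple j} with hScl
  set S : Set ℕ := {n | ∃ c ∈ Scl, ℓ (c * b) = n} with hSdef
  have hS : S.Nonempty := ⟨ℓ b, 1, one_mem _, by rw [one_mul]⟩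
  obtain ⟨c₀, hc₀mem, hc₀len⟩ := Nat.sInf_mem hS
  set u : W := c₀ * b with hudef
  have hminu : ∀ c' ∈ Scl, ℓ u ≤ ℓ (c' * u) := by
    intro c' hc'
    have : ℓ (c' * u) ∈ S := ⟨c' * c₀, mul_mem hc' hc₀mem, by rw [mul_assoc]⟩
    calc ℓ u = sInf S := hc₀len
    _ ≤ ℓ (c' * u) := Nat.sInf_le this
  have hbu : b = c₀⁻¹ * u := by rw [hudef, ← mul_assoc, inv_mul_cancel, one_mul]
  -- show b = u
  obtain ⟨η₀, hη₀red, hη₀let, hη₀prod⟩ := reducedWordJ cs i j c₀⁻¹ (inv_mem hc₀mem)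
  have hbeq : b = π η₀ * u := by rw [hη₀prod, ← hbu]
  have hη₀nil : η₀ = [] := by
    by_contra hne
    obtain ⟨k, η₀', rfl⟩ := List.exists_cons_of_ne_nil hne
    have hη₀' : cs.IsReduced η₀' := by
      have := CoxeterSystem.IsReduced.drop hη₀red 1
      simpa using this
    have h1 : ℓ b = (η₀'.length + 1) + ℓ u := by
      rw [hbeq, lenA cs i j u hminu _ hη₀red hη₀let]
      simp
    have h2 : ℓ (s k * b) = η₀'.length + ℓ u := by
      have : s k * b = π η₀' * u := by
        rw [hbeq, wordProd_cons]
        simp [mul_assoc]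
      rw [this, lenA cs i j u hminu _ hη₀' (fun x hx => hη₀let x (List.mem_cons_of_mem _ hx))]
    have hdesc : cs.IsLeftDescent b k := by
      show ℓ (s k * b) < ℓ b
      omega
    rcases hη₀let k (List.mem_cons_self (a := k) (l := η₀')) with rfl | rfl
    · exact hb1 hdesc
    · exact hb2 hdesc
  have hbu' : b = u := by
    rw [hbeq, hη₀nil, wordProd_nil, one_mul]
  obtain ⟨η, hηred, hηlet, hηprod⟩ := reducedWordJ cs i j c hc
  have : ℓ (c * b) = η.length + ℓ b := by
    rw [← hηprod, hbu']
    exact lenA cs i j u hminu η hηred hηlet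
  rw [this, ← hηprod]
  congr 1
  exact hηred.symm

end SEAux

/-- If `β` is a positive root of a proper standard parabolic finite dihedral subgroup
`W' = ⟨s,t⟩` and `β ∈ Φ¹(x)`, then `β ∈ Φ¹(x_J)` where `x = x_J · x^J` is the
canonical parabolic decomposition. -/
theorem shortInv_parabolic_component (cs : CoxeterSystem M W) (i j : B) (hij : i ≠ j)
    (hfin : M i j ≠ 0) (hproper : ∃ k : B, k ≠ i ∧ k ≠ j)
    (β : W) (hβrefl : cs.IsReflection β)
    (hβW' : β ∈ Subgroup.closure {cs.simple i, cs.simple j})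
    (x a b : W) (hx : x = a * b)
    (ha : a ∈ Subgroup.closure {cs.simple i, cs.simple j})
    (hb1 : ¬ cs.IsLeftDescent b i) (hb2 : ¬ cs.IsLeftDescent b j)
    (hlen : cs.length x = cs.length a + cs.length b)
    (hβx : β ∈ cs.shortInv x) :
    β ∈ cs.shortInv a := by
  refine ⟨hβrefl, ?_⟩
  have h1 := SEAux.lenAdd cs i j b hb1 hb2 (β * a) (mul_mem hβW' ha)
  have h2 := SEAux.lenAdd cs i j b hb1 hb2 a ha
  have h3 := hβx.2
  rw [hx, ← mul_assoc] at h3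
  rw [h1, h2] at h3
  omega
end
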